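/- arXiv:2511.17000 — 4 statements merged into one kernel-verified Lean document; each statement's English description precedes it below -/
import Mathlib

section
/- Let K₄³⁻ be the 3-graph on 4 vertices with 3 edges. For n ≥ 150, the maximum number of edges in an n-vertex 3-graph that is K₄³⁻-free and has matching number at most 2 equals 2⌊(n−2)²/4⌋+1 if n is odd, and 2⌊(n−2)²/4⌋ if n is even. -/
open Finset

/-- Degree of a vertex in a 3-graph. -/
def degH {n : ℕ} (H : Finset (Finset (Fin n))) (v : Fin n) : ℕ :=
  (H.filter (fun e => v ∈ e)).card

/-- `H` is a 3-uniform hypergraph. -/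
def Uniform3 {n : ℕ} (H : Finset (Finset (Fin n))) : Prop :=
  ∀ e ∈ H, e.card = 3

/-- The matching number of `H` is at most `s`. -/
def MatchingAtMost {n : ℕ} (H : Finset (Finset (Fin n))) (s : ℕ) : Prop :=
  ∀ M ⊆ H, (M : Set (Finset (Fin n))).Pairwise (fun e f => Disjoint e f) → M.card ≤ s

/-- `H` contains a copy of the hypergraph with edge set `F`. -/
def HasCopy {α : Type*} [DecidableEq α] {n : ℕ}
    (F : Set (Finset α)) (H : Finset (Finset (Fin n))) : Prop :=
  ∃ f : α → Fin n, Function.Injective f ∧ ∀ e ∈ F, e.image f ∈ H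

/-- Number of edges of the Turán graph `T(n, r)`. -/
def turanEdges (n r : ℕ) : ℕ := (SimpleGraph.turanGraph n r).edgeFinset.card

/-- Edge set of `K₄³⁻`: the 3-graph on 4 vertices with edges `123, 124, 134`. -/
def K43mEdges : Set (Finset (Fin 4)) :=
  {({0, 1, 2} : Finset (Fin 4)), {0, 1, 3}, {0, 2, 3}}

namespace K43

variable {n : ℕ}

/-- triangle-free family of pairs -/
def TriFree (E : Finset (Finset (Fin n))) : Prop :=
  ∀ u v w : Fin n, u ≠ v → u ≠ w → v ≠ w →
    ({u, v} : Finset (Fin n)) ∈ E → ({u, w} : Finset (Fin n)) ∈ E →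
    ({v, w} : Finset (Fin n)) ∈ E → False

lemma TriFree.mono {E E' : Finset (Finset (Fin n))} (h : E' ⊆ E) (ht : TriFree E) : TriFree E' :=
  fun u v w h1 h2 h3 m1 m2 m3 => ht u v w h1 h2 h3 (h m1) (h m2) (h m3)

/-- neighbors of `u` in a pair family -/
def Nb (E : Finset (Finset (Fin n))) (u : Fin n) : Finset (Fin n) :=
  univ.filter (fun w => w ≠ u ∧ ({u, w} : Finset (Fin n)) ∈ E)

lemma filter_mem_eq_image_nb (E : Finset (Finset (Fin n))) (u : Fin n)
    (hE : ∀ e ∈ E, e.card = 2) :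
    E.filter (fun e => u ∈ e) = (Nb E u).image (fun w => ({u, w} : Finset (Fin n))) := by
  ext e
  simp only [mem_filter, mem_image, Nb, mem_univ, true_and]
  constructor
  · rintro ⟨heE, hue⟩
    obtain ⟨a, b, hab, rfl⟩ := Finset.card_eq_two.1 (hE e heE)
    simp only [mem_insert, mem_singleton] at hue
    rcases hue with rfl | rfl
    · exact ⟨b, ⟨hab.symm, heE⟩, rfl⟩
    · exact ⟨a, ⟨hab, by rwa [Finset.pair_comm]⟩, by rw [Finset.pair_comm]⟩
  · rintro ⟨w, ⟨hwu, hwE⟩, rfl⟩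
    exact ⟨hwE, by simp⟩

lemma deg_eq_nb_card (E : Finset (Finset (Fin n))) (u : Fin n)
    (hE : ∀ e ∈ E, e.card = 2) :
    (E.filter (fun e => u ∈ e)).card = (Nb E u).card := by
  rw [filter_mem_eq_image_nb E u hE]
  apply Finset.card_image_of_injOn
  intro a ha b hb hab
  simp only [Nb, coe_filter, Set.mem_setOf_eq, mem_univ, true_and] at ha hb
  simp only at hab
  have : a ∈ ({u, b} : Finset (Fin n)) := by rw [← hab]; simp
  simp only [mem_insert, mem_singleton] at this
  rcases this with rfl | rfl
  · exact absurd rfl ha.1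
  · rfl

lemma nb_subset {W : Finset (Fin n)} {E : Finset (Finset (Fin n))}
    (hE : ∀ e ∈ E, e.card = 2 ∧ e ⊆ W) (u : Fin n) : Nb E u ⊆ W := by
  intro w hw
  simp only [Nb, mem_filter] at hw
  exact (hE _ hw.2.2).2 (by simp)

lemma mantel_aux : ∀ m : ℕ, ∀ W : Finset (Fin n), ∀ E : Finset (Finset (Fin n)),
    W.card ≤ m → (∀ e ∈ E, e.card = 2 ∧ e ⊆ W) → TriFree E → E.card ≤ W.card ^ 2 / 4 := by
  intro m
  induction m with
  | zero =>
    intro W E hWm hE _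
    have : E = ∅ := by
      rw [Finset.eq_empty_iff_forall_notMem]
      intro e he
      obtain ⟨hc, hs⟩ := hE e he
      have hW : W = ∅ := Finset.card_eq_zero.1 (Nat.le_zero.1 hWm)
      rw [hW, Finset.subset_empty] at hs
      rw [hs] at hc; simp at hc
    simp [this]
  | succ m ih =>
    intro W E hWm hE htf
    rcases E.eq_empty_or_nonempty with rfl | ⟨e0, he0⟩
    · simp
    obtain ⟨hc0, hs0⟩ := hE e0 he0
    obtain ⟨u, v, huv, rfl⟩ := Finset.card_eq_two.1 hc0
    have hu : u ∈ W := hs0 (by simp)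
    have hv : v ∈ W := hs0 (by simp)
    have hW2 : 2 ≤ W.card := by
      have h1 : ({u, v} : Finset (Fin n)) ⊆ W := hs0
      calc 2 = ({u, v} : Finset (Fin n)).card := hc0.symm
        _ ≤ W.card := Finset.card_le_card h1
    set W' := (W.erase u).erase v with hW'def
    have hvW' : v ∈ W.erase u := Finset.mem_erase.2 ⟨huv.symm, hv⟩
    have hW'card : W'.card = W.card - 2 := by
      rw [hW'def, Finset.card_erase_of_mem hvW', Finset.card_erase_of_mem hu]
      omega
    set B := E.filter (fun e => ¬(u ∈ e ∨ v ∈ e)) with hBdef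
    have hBcard : B.card ≤ (W.card - 2) ^ 2 / 4 := by
      rw [← hW'card]
      apply ih W' B (by omega)
      · intro e he
        simp only [hBdef, mem_filter] at he
        push_neg at he
        obtain ⟨heE, hue, hve⟩ := he
        refine ⟨(hE e heE).1, fun w hw => ?_⟩
        refine Finset.mem_erase.2 ⟨fun h => hve (h ▸ hw), Finset.mem_erase.2
          ⟨fun h => hue (h ▸ hw), (hE e heE).2 hw⟩⟩
      · exact htf.mono (Finset.filter_subset _ _)
    -- edges meeting {u, v}
    have hcard2 : ∀ e ∈ E, e.card = 2 := fun e he => (hE e he).1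
    have hnbdisj : Disjoint (Nb E u) (Nb E v) := by
      rw [Finset.disjoint_left]
      intro w hwu hwv
      simp only [Nb, mem_filter] at hwu hwv
      exact htf u v w huv (Ne.symm hwu.2.1) (Ne.symm hwv.2.1) he0 hwu.2.2 hwv.2.2
    have hnbsum : (Nb E u).card + (Nb E v).card ≤ W.card := by
      rw [← Finset.card_union_of_disjoint hnbdisj]
      exact Finset.card_le_card (Finset.union_subset (nb_subset hE u) (nb_subset hE v))
    set Eu := E.filter (fun e => u ∈ e) with hEu
    set Ev := E.filter (fun e => v ∈ e) with hEv
    have hmeet : (E.filter (fun e => u ∈ e ∨ v ∈ e)).card ≤ W.card - 1 := by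
      have h1 : E.filter (fun e => u ∈ e ∨ v ∈ e) = Eu ∪ Ev := Finset.filter_or _ _ _
      have h2 : (Eu ∪ Ev).card + (Eu ∩ Ev).card = Eu.card + Ev.card :=
        Finset.card_union_add_card_inter _ _
      have h3 : 1 ≤ (Eu ∩ Ev).card := by
        refine Finset.card_pos.2 ⟨{u, v}, ?_⟩
        simp only [Finset.mem_inter, hEu, hEv, mem_filter]
        exact ⟨⟨he0, by simp⟩, ⟨he0, by simp⟩⟩
      have h4 : Eu.card = (Nb E u).card := deg_eq_nb_card E u hcard2
      have h5 : Ev.card = (Nb E v).card := deg_eq_nb_card E v hcard2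
      rw [h1]
      omega
    have hsplit : (E.filter (fun e => u ∈ e ∨ v ∈ e)).card + B.card = E.card := by
      rw [hBdef]; exact Finset.card_filter_add_card_filter_not _
    obtain ⟨k, hk⟩ : ∃ k, W.card = k + 2 := ⟨W.card - 2, by omega⟩
    have hex1 : (k + 2) ^ 2 = k * k + 4 * k + 4 := by ring
    have hex2 : k ^ 2 = k * k := sq k
    rw [hk] at hmeet hBcard ⊢
    simp only [Nat.add_sub_cancel] at hBcard
    rw [hex1]
    rw [hex2] at hBcard
    omega

lemma mantel (W : Finset (Fin n)) (E : Finset (Finset (Fin n)))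
    (hE : ∀ e ∈ E, e.card = 2 ∧ e ⊆ W) (htf : TriFree E) :
    E.card ≤ W.card ^ 2 / 4 :=
  mantel_aux W.card W E le_rfl hE htf

end K43

namespace K43
variable {n : ℕ}

lemma mk_copy {H : Finset (Finset (Fin n))} (p q r s : Fin n)
    (hpq : p ≠ q) (hpr : p ≠ r) (hps : p ≠ s) (hqr : q ≠ r) (hqs : q ≠ s) (hrs : r ≠ s)
    (h1 : ({p, q, r} : Finset (Fin n)) ∈ H) (h2 : ({p, q, s} : Finset (Fin n)) ∈ H)
    (h3 : ({p, r, s} : Finset (Fin n)) ∈ H) :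
    HasCopy K43mEdges H := by
  refine ⟨![p, q, r, s], ?_, ?_⟩
  · intro i j hij
    fin_cases i <;> fin_cases j <;> simp_all
  · intro e he
    simp only [K43mEdges, Set.mem_insert_iff, Set.mem_singleton_iff] at he
    rcases he with rfl | rfl | rfl
    · have : ({0, 1, 2} : Finset (Fin 4)).image ![p, q, r, s] = {p, q, r} := by
        simp [Finset.image_insert]
      rwa [this]
    · have : ({0, 1, 3} : Finset (Fin 4)).image ![p, q, r, s] = {p, q, s} := by
        simp [Finset.image_insert]
      rwa [this]
    · have : ({0, 2, 3} : Finset (Fin 4)).image ![p, q, r, s] = {p, r, s} := by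
        simp [Finset.image_insert]
      rwa [this]

end K43

namespace K43
variable {n : ℕ}

lemma tri_eq1 (a b c : Fin n) : ({a, b, c} : Finset (Fin n)) = {b, a, c} := by
  ext t; simp; tauto

lemma tri_eq2 (a b c : Fin n) : ({a, b, c} : Finset (Fin n)) = {c, a, b} := by
  ext t; simp; tauto

section Side

variable (H : Finset (Finset (Fin n))) (x y : Fin n)

/-- the link of `x` avoiding `y` -/
def SideG : Finset (Finset (Fin n)) :=
  (H.filter (fun e => x ∈ e ∧ y ∉ e)).image (fun e => e.erase x)

variable {H x y}

lemma sideG_card (hu : Uniform3 H) :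
    (SideG H x y).card = (H.filter (fun e => x ∈ e ∧ y ∉ e)).card := by
  apply Finset.card_image_of_injOn
  intro a ha b hb hab
  simp only [coe_filter, Set.mem_setOf_eq] at ha hb
  have h1 : insert x (a.erase x) = a := Finset.insert_erase ha.2.1
  have h2 : insert x (b.erase x) = b := Finset.insert_erase hb.2.1
  simp only at hab
  rw [← h1, ← h2, hab]

lemma sideG_pairs (hu : Uniform3 H) (W : Finset (Fin n))
    (hW : ∀ v, v ∈ W ↔ v ≠ x ∧ v ≠ y) :
    ∀ p ∈ SideG H x y, p.card = 2 ∧ p ⊆ W := by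
  intro p hp
  simp only [SideG, mem_image, mem_filter] at hp
  obtain ⟨e, ⟨heH, hxe, hye⟩, rfl⟩ := hp
  constructor
  · rw [Finset.card_erase_of_mem hxe, hu e heH]
  · intro w hw
    have hw1 := Finset.mem_erase.1 hw
    exact (hW w).2 ⟨hw1.1, fun h => hye (h ▸ hw1.2)⟩

lemma sideG_insert_mem : ∀ p ∈ SideG H x y, insert x p ∈ H := by
  intro p hp
  simp only [SideG, mem_image, mem_filter] at hp
  obtain ⟨e, ⟨heH, hxe, _⟩, rfl⟩ := hp
  rwa [Finset.insert_erase hxe]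

end Side

/-- The main count when all edges meet {x, y}. -/
lemma cover_bound {H : Finset (Finset (Fin n))} (x y : Fin n) (hxy : x ≠ y)
    (hu : Uniform3 H) (hnc : ¬ HasCopy K43mEdges H)
    (hcov : ∀ e ∈ H, x ∈ e ∨ y ∈ e) :
    H.card ≤ 2 * ((n - 2) ^ 2 / 4) + (if Odd n then 1 else 0) := by
  classical
  set W : Finset (Fin n) := univ.filter (fun v => v ≠ x ∧ v ≠ y) with hWdef
  have hWmem : ∀ v, v ∈ W ↔ v ≠ x ∧ v ≠ y := by
    intro v; simp [hWdef]
  have hWmem' : ∀ v, v ∈ W ↔ v ≠ y ∧ v ≠ x := by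
    intro v; rw [hWmem]; tauto
  have hWcard : W.card = n - 2 := by
    have : W = (univ.erase x).erase y := by
      ext v
      simp only [hWdef, mem_filter, mem_univ, true_and, Finset.mem_erase]
      tauto
    rw [this, Finset.card_erase_of_mem, Finset.card_erase_of_mem (mem_univ x)]
    · rw [Finset.card_univ, Fintype.card_fin]; omega
    · exact Finset.mem_erase.2 ⟨hxy.symm, mem_univ y⟩
  set Gx := SideG H x y with hGxdef
  set Gy := SideG H y x with hGydef
  set P : Finset (Fin n) := W.filter (fun z => ({x, y, z} : Finset (Fin n)) ∈ H) with hPdef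
  -- edge partition
  have hsplit : H.card = (H.filter (fun e => x ∈ e ∧ y ∉ e)).card
      + (H.filter (fun e => y ∈ e ∧ x ∉ e)).card
      + (H.filter (fun e => x ∈ e ∧ y ∈ e)).card := by
    have h1 := Finset.card_filter_add_card_filter_not (s := H) (p := fun e => x ∈ e)
    have h2 := Finset.card_filter_add_card_filter_not
      (s := H.filter (fun e => x ∈ e)) (p := fun e => y ∈ e)
    rw [Finset.filter_filter, Finset.filter_filter] at h2
    have h3 : H.filter (fun e => ¬ x ∈ e) = H.filter (fun e => y ∈ e ∧ x ∉ e) := by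
      ext e
      simp only [mem_filter]
      constructor
      · rintro ⟨he, hx⟩; exact ⟨he, (hcov e he).resolve_left hx, hx⟩
      · rintro ⟨he, _, hx⟩; exact ⟨he, hx⟩
    rw [h3] at h1
    have h4 : H.filter (fun e => x ∈ e ∧ y ∈ e) = H.filter (fun e => x ∈ e ∧ ¬ y ∉ e) := by
      simp
    have h5 : H.filter (fun e => x ∈ e ∧ y ∉ e) = H.filter (fun e => x ∈ e ∧ ¬ y ∈ e) := by
      simp
    omega
  -- P and the x,y edges
  have hPsub : ∀ z ∈ P, z ≠ x ∧ z ≠ y := by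
    intro z hz
    exact (hWmem z).1 (Finset.mem_filter.1 hz).1
  have hPmem : ∀ z ∈ P, ({x, y, z} : Finset (Fin n)) ∈ H := by
    intro z hz; exact (Finset.mem_filter.1 hz).2
  have hExyP : (H.filter (fun e => x ∈ e ∧ y ∈ e)).card = P.card := by
    have himg : H.filter (fun e => x ∈ e ∧ y ∈ e)
        = P.image (fun z => ({x, y, z} : Finset (Fin n))) := by
      ext e
      simp only [mem_filter, mem_image]
      constructor
      · rintro ⟨heH, hxe, hye⟩
        have hyex : y ∈ e.erase x := Finset.mem_erase.2 ⟨hxy.symm, hye⟩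
        have hc : ((e.erase x).erase y).card = 1 := by
          rw [Finset.card_erase_of_mem hyex, Finset.card_erase_of_mem hxe, hu e heH]
        obtain ⟨z, hzq⟩ := Finset.card_eq_one.1 hc
        have hze : z ∈ (e.erase x).erase y := by rw [hzq]; simp
        have hzy : z ≠ y := (Finset.mem_erase.1 hze).1
        have hzx : z ≠ x := (Finset.mem_erase.1 (Finset.mem_erase.1 hze).2).1
        have he : e = {x, y, z} := by
          rw [← Finset.insert_erase hxe, ← Finset.insert_erase hyex, hzq]
        refine ⟨z, Finset.mem_filter.2 ⟨(hWmem z).2 ⟨hzx, hzy⟩, ?_⟩, he.symm⟩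
        rw [← he]; exact heH
      · rintro ⟨z, hz, rfl⟩
        have := hPsub z hz
        exact ⟨hPmem z hz, by simp, by simp⟩
    rw [himg]
    apply Finset.card_image_of_injOn
    intro a ha b hb hab
    simp only [Finset.mem_coe] at ha hb
    simp only at hab
    have hax := hPsub a ha
    have ha2 : a ∈ ({x, y, b} : Finset (Fin n)) := by rw [← hab]; simp
    simp only [mem_insert, mem_singleton] at ha2
    rcases ha2 with h | h | h
    · exact absurd h hax.1
    · exact absurd h hax.2
    · exact h
  -- pair families facts
  have hGxpairs := sideG_pairs (x := x) (y := y) hu W hWmem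
  have hGypairs := sideG_pairs (x := y) (y := x) hu W hWmem'
  have hGxpair_mem : ∀ u v : Fin n, ({u, v} : Finset (Fin n)) ∈ Gx →
      ({x, u, v} : Finset (Fin n)) ∈ H ∧ u ≠ v ∧ u ∈ W ∧ v ∈ W := by
    intro u v huv
    have h1 := sideG_insert_mem _ huv
    have h2 := hGxpairs _ huv
    have hu2 : u ∈ W := h2.2 (by simp)
    have hv2 : v ∈ W := h2.2 (by simp)
    refine ⟨h1, ?_, hu2, hv2⟩
    intro h; rw [h] at h2; simp at h2
  have hGypair_mem : ∀ u v : Fin n, ({u, v} : Finset (Fin n)) ∈ Gy →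
      ({y, u, v} : Finset (Fin n)) ∈ H ∧ u ≠ v ∧ u ∈ W ∧ v ∈ W := by
    intro u v huv
    have h1 := sideG_insert_mem _ huv
    have h2 := hGypairs _ huv
    have hu2 : u ∈ W := h2.2 (by simp)
    have hv2 : v ∈ W := h2.2 (by simp)
    refine ⟨h1, ?_, hu2, hv2⟩
    intro h; rw [h] at h2; simp at h2
  have hWx : ∀ v ∈ W, v ≠ x := fun v hv => ((hWmem v).1 hv).1
  have hWy : ∀ v ∈ W, v ≠ y := fun v hv => ((hWmem v).1 hv).2
  -- triangle-freeness
  have htfGx : TriFree Gx := by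
    intro u v w huv huw hvw h1 h2 h3
    obtain ⟨e1, _, huW, hvW⟩ := hGxpair_mem u v h1
    obtain ⟨e2, _, _, hwW⟩ := hGxpair_mem u w h2
    obtain ⟨e3, _, _, _⟩ := hGxpair_mem v w h3
    exact hnc (mk_copy x u v w (Ne.symm (hWx u huW)) (Ne.symm (hWx v hvW))
      (Ne.symm (hWx w hwW)) huv huw hvw e1 e2 e3)
  have htfGy : TriFree Gy := by
    intro u v w huv huw hvw h1 h2 h3
    obtain ⟨e1, _, huW, hvW⟩ := hGypair_mem u v h1
    obtain ⟨e2, _, _, hwW⟩ := hGypair_mem u w h2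
    obtain ⟨e3, _, _, _⟩ := hGypair_mem v w h3
    exact hnc (mk_copy y u v w (Ne.symm (hWy u huW)) (Ne.symm (hWy v hvW))
      (Ne.symm (hWy w hwW)) huv huw hvw e1 e2 e3)
  -- conditions forbidding P interactions
  have hcond2x : ∀ u v : Fin n, u ∈ P → v ∈ P → ({u, v} : Finset (Fin n)) ∈ Gx → False := by
    intro u v hup hvp huv
    obtain ⟨he3, huvne, huW, hvW⟩ := hGxpair_mem u v huv
    exact hnc (mk_copy x y u v hxy (Ne.symm (hWx u huW)) (Ne.symm (hWx v hvW))
      (Ne.symm (hWy u huW)) (Ne.symm (hWy v hvW)) huvne (hPmem u hup) (hPmem v hvp) he3)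
  have hcond2y : ∀ u v : Fin n, u ∈ P → v ∈ P → ({u, v} : Finset (Fin n)) ∈ Gy → False := by
    intro u v hup hvp huv
    obtain ⟨he3, huvne, huW, hvW⟩ := hGypair_mem u v huv
    have h1 : ({y, x, u} : Finset (Fin n)) ∈ H := by rw [tri_eq1]; exact hPmem u hup
    have h2 : ({y, x, v} : Finset (Fin n)) ∈ H := by rw [tri_eq1]; exact hPmem v hvp
    exact hnc (mk_copy y x u v hxy.symm (Ne.symm (hWy u huW)) (Ne.symm (hWy v hvW))
      (Ne.symm (hWx u huW)) (Ne.symm (hWx v hvW)) huvne h1 h2 he3)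
  have hcond3 : ∀ z u : Fin n, z ∈ P → ({z, u} : Finset (Fin n)) ∈ Gx →
      ({z, u} : Finset (Fin n)) ∈ Gy → False := by
    intro z u hzp hx1 hy1
    obtain ⟨hex, hzu, hzW, huW⟩ := hGxpair_mem z u hx1
    obtain ⟨hey, _, _, _⟩ := hGypair_mem z u hy1
    -- edges {x,y,z}, {x,z,u}, {y,z,u}; use p = z, q = x, r = y, s = u
    have h1 : ({z, x, y} : Finset (Fin n)) ∈ H := by
      have := hPmem z hzp; rwa [tri_eq2] at this
    have h2 : ({z, x, u} : Finset (Fin n)) ∈ H := by rwa [tri_eq1] at hex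
    have h3 : ({z, y, u} : Finset (Fin n)) ∈ H := by rwa [tri_eq1] at hey
    exact hnc (mk_copy z x y u (hWx z hzW) (hWy z hzW) hzu
      hxy (Ne.symm (hWx u huW)) (Ne.symm (hWy u huW)) h1 h2 h3)
  -- now the counting
  rw [hsplit, ← sideG_card (x := x) (y := y) hu, ← sideG_card (x := y) (y := x) hu, hExyP,
    ← hGxdef, ← hGydef]
  rcases P.eq_empty_or_nonempty with hP | ⟨z, hzP⟩
  · have b1 := mantel W Gx hGxpairs htfGx
    have b2 := mantel W Gy hGypairs htfGy
    rw [hP, hWcard] at *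
    simp only [Finset.card_empty]
    have : Gx.card + Gy.card ≤ 2 * ((n-2)^2/4) := by omega
    split
    · omega
    · omega
  · -- P nonempty
    have hzW : z ∈ W := (Finset.mem_filter.1 hzP).1
    set W' := W.erase z with hW'def
    have hW'card : W'.card = W.card - 1 := Finset.card_erase_of_mem hzW
    have hsplitx : Gx.card = (Gx.filter (fun p => z ∈ p)).card
        + (Gx.filter (fun p => z ∉ p)).card :=
      (Finset.card_filter_add_card_filter_not (p := fun p => z ∈ p)).symm
    have hsplity : Gy.card = (Gy.filter (fun p => z ∈ p)).card
        + (Gy.filter (fun p => z ∉ p)).card :=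
      (Finset.card_filter_add_card_filter_not (p := fun p => z ∈ p)).symm
    have hbx : (Gx.filter (fun p => z ∉ p)).card ≤ (W.card - 1)^2/4 := by
      rw [← hW'card]
      apply mantel W' _ _ (htfGx.mono (Finset.filter_subset _ _))
      intro p hp
      have h1 := Finset.mem_filter.1 hp
      obtain ⟨hc, hs⟩ := hGxpairs p h1.1
      exact ⟨hc, fun w hw => Finset.mem_erase.2 ⟨fun h => h1.2 (h ▸ hw), hs hw⟩⟩
    have hby : (Gy.filter (fun p => z ∉ p)).card ≤ (W.card - 1)^2/4 := by
      rw [← hW'card]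
      apply mantel W' _ _ (htfGy.mono (Finset.filter_subset _ _))
      intro p hp
      have h1 := Finset.mem_filter.1 hp
      obtain ⟨hc, hs⟩ := hGypairs p h1.1
      exact ⟨hc, fun w hw => Finset.mem_erase.2 ⟨fun h => h1.2 (h ▸ hw), hs hw⟩⟩
    -- degrees at z
    have hdx : (Gx.filter (fun p => z ∈ p)).card = (Nb Gx z).card :=
      deg_eq_nb_card Gx z (fun e he => (hGxpairs e he).1)
    have hdy : (Gy.filter (fun p => z ∈ p)).card = (Nb Gy z).card :=
      deg_eq_nb_card Gy z (fun e he => (hGypairs e he).1)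
    have hnbx_mem : ∀ w ∈ Nb Gx z, ({z, w} : Finset (Fin n)) ∈ Gx := by
      intro w hw; exact ((Finset.mem_filter.1 hw).2).2
    have hnby_mem : ∀ w ∈ Nb Gy z, ({z, w} : Finset (Fin n)) ∈ Gy := by
      intro w hw; exact ((Finset.mem_filter.1 hw).2).2
    have hdisj1 : Disjoint (Nb Gx z) (Nb Gy z) := by
      rw [Finset.disjoint_left]
      intro w h1 h2
      exact hcond3 z w hzP (hnbx_mem w h1) (hnby_mem w h2)
    have hdisj2 : Disjoint (Nb Gx z) P := by
      rw [Finset.disjoint_left]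
      intro w h1 h2
      exact hcond2x z w hzP h2 (hnbx_mem w h1)
    have hdisj3 : Disjoint (Nb Gy z) P := by
      rw [Finset.disjoint_left]
      intro w h1 h2
      exact hcond2y z w hzP h2 (hnby_mem w h1)
    have hdisj4 : Disjoint (Nb Gx z ∪ Nb Gy z) P := Finset.disjoint_union_left.2 ⟨hdisj2, hdisj3⟩
    have hsubW : Nb Gx z ∪ Nb Gy z ∪ P ⊆ W := by
      intro w hw
      rcases Finset.mem_union.1 hw with hw | hw
      · rcases Finset.mem_union.1 hw with hw | hw
        · exact nb_subset hGxpairs z hw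
        · exact nb_subset hGypairs z hw
      · exact (Finset.mem_filter.1 hw).1
    have hsum : (Nb Gx z).card + (Nb Gy z).card + P.card ≤ W.card := by
      rw [← Finset.card_union_of_disjoint hdisj1, ← Finset.card_union_of_disjoint hdisj4]
      exact Finset.card_le_card hsubW
    -- final arithmetic
    have hN1 : 1 ≤ W.card := Finset.card_pos.2 ⟨z, hzW⟩
    have harith : 2 * ((W.card - 1)^2/4) + W.card
        ≤ 2 * ((n - 2)^2/4) + (if Odd n then 1 else 0) := by
      rw [hWcard] at *
      have hn2 : 2 ≤ n := by
        by_contra h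
        push_neg at h
        interval_cases n
        · exact x.elim0
        · exact hxy (Subsingleton.elim x y)
      obtain ⟨N, hNn⟩ : ∃ N, n = N + 2 := ⟨n - 2, by omega⟩
      subst hNn
      simp only [Nat.add_sub_cancel] at *
      rcases Nat.even_or_odd N with ⟨t, ht⟩ | ⟨t, ht⟩
      · -- N even, so n even
        have hno : ¬ Odd (N + 2) := by
          rw [Nat.odd_iff]; omega
        rw [if_neg hno]
        obtain ⟨s, hs⟩ : ∃ s, t = s + 1 := ⟨t - 1, by omega⟩
        have h1 : N - 1 = 2*s + 1 := by omega
        have h2 : N = 2*s + 2 := by omega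
        rw [h1, h2]
        have e1 : (2*s+1)^2 = 4*(s*s) + 4*s + 1 := by ring
        have e2 : (2*s+2)^2 = 4*(s*s) + 8*s + 4 := by ring
        rw [e1, e2]
        omega
      · -- N odd, so n odd
        have hodd : Odd (N + 2) := by rw [Nat.odd_iff]; omega
        rw [if_pos hodd]
        have h1 : N - 1 = 2*t := by omega
        rw [h1, ht]
        have e1 : (2*t)^2 = 4*(t*t) := by ring
        have e2 : (2*t+1)^2 = 4*(t*t) + 4*t + 1 := by ring
        rw [e1, e2]
        omega
    omega


lemma exists_maximal_matching (F : Finset (Finset (Fin n))) (h0 : ∀ e ∈ F, e ≠ ∅) :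
    ∃ M ⊆ F, (↑M : Set (Finset (Fin n))).Pairwise (fun e f => Disjoint e f) ∧
      ∀ e ∈ F, ¬ Disjoint e (M.sup id) := by
  classical
  set Fam := F.powerset.filter (fun M => ∀ e ∈ M, ∀ f ∈ M, e ≠ f → Disjoint e f) with hFam
  have hne : Fam.Nonempty := ⟨∅, by simp [hFam]⟩
  obtain ⟨M, hM, hmax⟩ := Finset.exists_max_image Fam Finset.card hne
  simp only [hFam, mem_filter, Finset.mem_powerset] at hM
  refine ⟨M, hM.1, ?_, ?_⟩
  · intro a ha b hb hab
    exact hM.2 a (Finset.mem_coe.1 ha) b (Finset.mem_coe.1 hb) hab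
  · intro e heF hdisj
    have heM : e ∉ M := by
      intro h
      have h1 : e ≤ M.sup id := Finset.le_sup (f := id) h
      have h2 : Disjoint e e := hdisj.mono_right h1
      exact h0 e heF (by simpa using disjoint_self.1 h2)
    have hins : insert e M ∈ Fam := by
      simp only [hFam, mem_filter, Finset.mem_powerset]
      refine ⟨Finset.insert_subset heF hM.1, ?_⟩
      intro a ha b hb hab
      rcases Finset.mem_insert.1 ha with rfl | ha'
      · rcases Finset.mem_insert.1 hb with rfl | hb'
        · exact absurd rfl hab
        · exact hdisj.mono_right (Finset.le_sup (f := id) hb')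
      · rcases Finset.mem_insert.1 hb with rfl | hb'
        · exact (hdisj.mono_right (Finset.le_sup (f := id) ha')).symm
        · exact hM.2 a ha' b hb' hab
    have := hmax _ hins
    rw [Finset.card_insert_of_notMem heM] at this
    omega

section Link

variable (H : Finset (Finset (Fin n))) (x : Fin n)

/-- the link of `x` -/
def LinkG : Finset (Finset (Fin n)) :=
  (H.filter (fun e => x ∈ e)).image (fun e => e.erase x)

variable {H x}

lemma linkG_card : (LinkG H x).card = degH H x := by
  apply Finset.card_image_of_injOn
  intro a ha b hb hab
  simp only [coe_filter, Set.mem_setOf_eq] at ha hb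
  simp only at hab
  have h1 : insert x (a.erase x) = a := Finset.insert_erase ha.2
  have h2 : insert x (b.erase x) = b := Finset.insert_erase hb.2
  rw [← h1, ← h2, hab]

lemma linkG_pairs (hu : Uniform3 H) :
    ∀ p ∈ LinkG H x, p.card = 2 ∧ p ⊆ univ.erase x := by
  intro p hp
  simp only [LinkG, mem_image, mem_filter] at hp
  obtain ⟨e, ⟨heH, hxe⟩, rfl⟩ := hp
  refine ⟨by rw [Finset.card_erase_of_mem hxe, hu e heH], fun w hw => ?_⟩
  exact Finset.mem_erase.2 ⟨(Finset.mem_erase.1 hw).1, mem_univ w⟩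

lemma linkG_insert_mem : ∀ p ∈ LinkG H x, insert x p ∈ H := by
  intro p hp
  simp only [LinkG, mem_image, mem_filter] at hp
  obtain ⟨e, ⟨heH, hxe⟩, rfl⟩ := hp
  rwa [Finset.insert_erase hxe]

lemma linkG_pair_mem (hu : Uniform3 H) : ∀ u v : Fin n, ({u, v} : Finset (Fin n)) ∈ LinkG H x →
    ({x, u, v} : Finset (Fin n)) ∈ H ∧ u ≠ v ∧ u ≠ x ∧ v ≠ x := by
  intro u v huv
  have h1 := linkG_insert_mem _ huv
  have h2 := linkG_pairs hu _ huv
  have hu2 : u ∈ univ.erase x := h2.2 (by simp)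
  have hv2 : v ∈ univ.erase x := h2.2 (by simp)
  refine ⟨h1, ?_, (Finset.mem_erase.1 hu2).1, (Finset.mem_erase.1 hv2).1⟩
  intro h; rw [h] at h2; simp at h2

lemma linkG_trifree (hu : Uniform3 H) (hnc : ¬ HasCopy K43mEdges H) : TriFree (LinkG H x) := by
  intro u v w huv huw hvw h1 h2 h3
  obtain ⟨e1, _, hux, hvx⟩ := linkG_pair_mem hu u v h1
  obtain ⟨e2, _, _, hwx⟩ := linkG_pair_mem hu u w h2
  obtain ⟨e3, _, _, _⟩ := linkG_pair_mem hu v w h3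
  exact hnc (mk_copy x u v w (Ne.symm hux) (Ne.symm hvx) (Ne.symm hwx) huv huw hvw e1 e2 e3)

end Link

end K43

namespace K43
variable {n : ℕ}

lemma upper_bound (hn : 150 ≤ n) (H : Finset (Finset (Fin n))) (hu : Uniform3 H)
    (hnc : ¬ HasCopy K43mEdges H) (hmat : MatchingAtMost H 2) :
    H.card ≤ 2 * ((n - 2) ^ 2 / 4) + (if Odd n then 1 else 0) := by
  classical
  by_contra hbig
  push_neg at hbig
  obtain ⟨m, hm⟩ : ∃ m, n = m + 2 := ⟨n - 2, by omega⟩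
  have hm148 : 148 ≤ m := by omega
  have hmsq : 148 * m ≤ m * m := Nat.mul_le_mul_right m hm148
  have hsq : (n - 2) ^ 2 = m * m := by rw [hm]; simp [sq]
  have hHlb : 2 * ((m * m) / 4) + 1 ≤ H.card := by
    rw [hsq] at hbig
    split at hbig <;> omega
  -- maximal matching and its span S
  have h0 : ∀ e ∈ H, e ≠ ∅ := by
    intro e he h
    have := hu e he
    rw [h] at this
    simp at this
  obtain ⟨M, hMH, hMpw, hMcov⟩ := exists_maximal_matching H h0
  have hM2 : M.card ≤ 2 := hmat M hMH hMpw
  set S := M.sup id with hSdef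
  have hScard : S.card ≤ 6 := by
    have h2 : (M.biUnion id).card ≤ ∑ e ∈ M, (id e).card := Finset.card_biUnion_le
    have h3 : ∑ e ∈ M, (id e).card ≤ M.card * 3 := by
      have := Finset.sum_le_card_nsmul M (fun e => (id e).card) 3
        (fun e he => by simp [hu e (hMH he)])
      simpa using this
    have h1 : S.card = (M.biUnion id).card := by rw [hSdef, Finset.sup_eq_biUnion]
    omega
  have hHsub : H ⊆ S.biUnion (fun v => H.filter (fun e => v ∈ e)) := by
    intro e he
    obtain ⟨v, hv1, hv2⟩ := Finset.not_disjoint_iff.1 (hMcov e he)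
    exact Finset.mem_biUnion.2 ⟨v, hv2, Finset.mem_filter.2 ⟨he, hv1⟩⟩
  have hSne : S.Nonempty := by
    have hHne : H.Nonempty := Finset.card_pos.1 (by omega)
    obtain ⟨e, he⟩ := hHne
    obtain ⟨v, _, hv2⟩ := Finset.not_disjoint_iff.1 (hMcov e he)
    exact ⟨v, hv2⟩
  obtain ⟨x, hxS, hxmax⟩ := Finset.exists_max_image S (fun v => degH H v) hSne
  have hxH : H.card ≤ 6 * degH H x := by
    have h1 : H.card ≤ ∑ v ∈ S, (H.filter (fun e => v ∈ e)).card :=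
      le_trans (Finset.card_le_card hHsub) Finset.card_biUnion_le
    have h2 : ∑ v ∈ S, (H.filter (fun e => v ∈ e)).card ≤ S.card * degH H x := by
      have := Finset.sum_le_card_nsmul S (fun v => (H.filter (fun e => v ∈ e)).card)
        (degH H x) (fun v hv => hxmax v hv)
      simpa using this
    calc H.card ≤ S.card * degH H x := le_trans h1 h2
      _ ≤ 6 * degH H x := Nat.mul_le_mul_right _ hScard
  -- the link of x
  set L := LinkG H x with hLdef
  have hLcard : L.card = degH H x := linkG_card
  have hLpairs := linkG_pairs (H := H) (x := x) hu
  have hLtf : TriFree L := linkG_trifree hu hnc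
  have hEc : (univ.erase x).card = n - 1 := by
    rw [Finset.card_erase_of_mem (mem_univ x), Finset.card_univ, Fintype.card_fin]
  have hdegmax : degH H x ≤ (n - 1) ^ 2 / 4 := by
    rw [← hLcard]
    have := mantel (univ.erase x) L hLpairs hLtf
    rwa [hEc] at this
  -- a large matching inside L
  have h0L : ∀ p ∈ L, p ≠ ∅ := by
    intro p hp h
    have := (hLpairs p hp).1
    rw [h] at this
    simp at this
  obtain ⟨M2, hM2L, hM2pw, hM2cov⟩ := exists_maximal_matching L h0L
  have hL2 : ∀ e ∈ L, e.card = 2 := fun e he => (hLpairs e he).1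
  have hM2big : 7 ≤ M2.card := by
    by_contra hlt
    push_neg at hlt
    set S2 := M2.sup id with hS2def
    have hS2card : S2.card ≤ 12 := by
      have h2 : (M2.biUnion id).card ≤ ∑ e ∈ M2, (id e).card := Finset.card_biUnion_le
      have h3 : ∑ e ∈ M2, (id e).card ≤ M2.card * 2 := by
        have := Finset.sum_le_card_nsmul M2 (fun e => (id e).card) 2
          (fun e he => by simp [hL2 e (hM2L he)])
        simpa using this
      have h1 : S2.card = (M2.biUnion id).card := by rw [hS2def, Finset.sup_eq_biUnion]
      omega
    have hLv : ∀ v : Fin n, (L.filter (fun p => v ∈ p)).card ≤ n - 1 := by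
      intro v
      rw [deg_eq_nb_card L v hL2]
      have hsub : Nb L v ⊆ univ.erase v := by
        intro w hw
        exact Finset.mem_erase.2 ⟨(Finset.mem_filter.1 hw).2.1, mem_univ w⟩
      calc (Nb L v).card ≤ (univ.erase v).card := Finset.card_le_card hsub
        _ = n - 1 := by rw [Finset.card_erase_of_mem (mem_univ v), Finset.card_univ,
            Fintype.card_fin]
    have hLsub : L ⊆ S2.biUnion (fun v => L.filter (fun p => v ∈ p)) := by
      intro p hp
      obtain ⟨v, hv1, hv2⟩ := Finset.not_disjoint_iff.1 (hM2cov p hp)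
      exact Finset.mem_biUnion.2 ⟨v, hv2, Finset.mem_filter.2 ⟨hp, hv1⟩⟩
    have hLle : L.card ≤ 12 * (n - 1) := by
      have h1 : L.card ≤ ∑ v ∈ S2, (L.filter (fun p => v ∈ p)).card :=
        le_trans (Finset.card_le_card hLsub) Finset.card_biUnion_le
      have h2 : ∑ v ∈ S2, (L.filter (fun p => v ∈ p)).card ≤ S2.card * (n - 1) := by
        have := Finset.sum_le_card_nsmul S2 (fun v => (L.filter (fun p => v ∈ p)).card)
          (n - 1) (fun v _ => hLv v)
        simpa using this
      calc L.card ≤ S2.card * (n - 1) := le_trans h1 h2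
        _ ≤ 12 * (n - 1) := Nat.mul_le_mul_right _ hS2card
    rw [hLcard] at hLle
    omega
  -- edges avoiding x pairwise intersect
  set F := H.filter (fun e => x ∉ e) with hFdef
  have hint : ∀ f ∈ F, ∀ g ∈ F, Disjoint f g → False := by
    intro f hf g hg hdisj
    obtain ⟨hfH, hxf⟩ := Finset.mem_filter.1 hf
    obtain ⟨hgH, hxg⟩ := Finset.mem_filter.1 hg
    set X := f ∪ g with hXdef
    have hXcard : X.card ≤ 6 := by
      rw [hXdef]
      have := Finset.card_union_le f g
      rw [hu f hfH, hu g hgH] at this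
      omega
    set T := M2.filter (fun p => ¬ Disjoint p X) with hTdef
    have hTsub : T ⊆ M2 := Finset.filter_subset _ _
    have hTcard : T.card ≤ 6 := by
      have hinj : Set.InjOn (fun p => p ∩ X) ↑T := by
        intro a ha b hb hab
        by_contra hne
        have hd : Disjoint a b := hM2pw (Finset.mem_coe.2 (hTsub (Finset.mem_coe.1 ha)))
          (Finset.mem_coe.2 (hTsub (Finset.mem_coe.1 hb))) hne
        have hane : (a ∩ X).Nonempty :=
          Finset.not_disjoint_iff_nonempty_inter.1 (Finset.mem_filter.1 (Finset.mem_coe.1 ha)).2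
        have hdd : Disjoint (a ∩ X) (b ∩ X) :=
          hd.mono Finset.inter_subset_left Finset.inter_subset_left
        simp only at hab
        rw [hab] at hane hdd
        have hbe : b ∩ X = ∅ := by simpa using disjoint_self.1 hdd
        rw [hbe] at hane
        exact Finset.not_nonempty_empty hane
      have h1 : T.card = (T.image (fun p => p ∩ X)).card :=
        (Finset.card_image_of_injOn hinj).symm
      set I := T.image (fun p => p ∩ X) with hIdef
      have hIne : ∀ t ∈ I, t.Nonempty := by
        intro t ht
        obtain ⟨p, hp, rfl⟩ := Finset.mem_image.1 ht
        exact Finset.not_disjoint_iff_nonempty_inter.1 (Finset.mem_filter.1 hp).2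
      have hIdisj : ∀ s ∈ I, ∀ t ∈ I, s ≠ t → Disjoint (id s) (id t) := by
        intro s hs t ht hst
        obtain ⟨p, hp, rfl⟩ := Finset.mem_image.1 hs
        obtain ⟨q, hq, rfl⟩ := Finset.mem_image.1 ht
        have hpq : p ≠ q := by rintro rfl; exact hst rfl
        have hd : Disjoint p q := hM2pw (Finset.mem_coe.2 (hTsub hp))
          (Finset.mem_coe.2 (hTsub hq)) hpq
        exact hd.mono Finset.inter_subset_left Finset.inter_subset_left
      have h2 : I.card ≤ ∑ t ∈ I, (id t).card := by
        rw [Finset.card_eq_sum_ones]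
        apply Finset.sum_le_sum
        intro t ht
        simpa using Finset.card_pos.2 (hIne t ht)
      have h3 : ∑ t ∈ I, (id t).card = (I.biUnion id).card := (Finset.card_biUnion hIdisj).symm
      have h4 : I.biUnion id ⊆ X := by
        intro w hw
        obtain ⟨t, ht, hwt⟩ := Finset.mem_biUnion.1 hw
        obtain ⟨p, _, rfl⟩ := Finset.mem_image.1 ht
        exact Finset.inter_subset_right hwt
      have h5 : (I.biUnion id).card ≤ 6 := le_trans (Finset.card_le_card h4) hXcard
      omega
    obtain ⟨p, hpM2, hpX⟩ : ∃ p ∈ M2, Disjoint p X := by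
      by_contra h
      push_neg at h
      have : M2 ⊆ T := by
        intro p hp
        exact Finset.mem_filter.2 ⟨hp, h p hp⟩
      have := Finset.card_le_card this
      omega
    set e := insert x p with hedef
    have heH : e ∈ H := linkG_insert_mem p (hM2L hpM2)
    have hpx : x ∉ p := by
      intro hxp
      have := (hLpairs p (hM2L hpM2)).2 hxp
      exact (Finset.mem_erase.1 this).1 rfl
    have hef : Disjoint e f := by
      rw [hedef, Finset.disjoint_insert_left]
      exact ⟨hxf, hpX.mono_right Finset.subset_union_left⟩
    have heg : Disjoint e g := by
      rw [hedef, Finset.disjoint_insert_left]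
      exact ⟨hxg, hpX.mono_right Finset.subset_union_right⟩
    have hfg_ne : f ≠ g := by
      rintro rfl
      have : f = ∅ := by simpa using disjoint_self.1 hdisj
      exact h0 f hfH this
    have hef_ne : e ≠ f := fun h => hxf (h ▸ Finset.mem_insert_self x p)
    have heg_ne : e ≠ g := fun h => hxg (h ▸ Finset.mem_insert_self x p)
    have hM3sub : ({e, f, g} : Finset (Finset (Fin n))) ⊆ H := by
      intro a ha
      simp only [Finset.mem_insert, Finset.mem_singleton] at ha
      rcases ha with rfl | rfl | rfl
      exacts [heH, hfH, hgH]
    have hM3pw : (↑({e, f, g} : Finset (Finset (Fin n))) : Set (Finset (Fin n))).Pairwise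
        (fun e f => Disjoint e f) := by
      intro a ha b hb hab
      simp only [Finset.coe_insert, Set.mem_insert_iff, Finset.coe_singleton,
        Set.mem_singleton_iff] at ha hb
      rcases ha with rfl | rfl | rfl <;> rcases hb with rfl | rfl | rfl <;>
        first
          | exact absurd rfl hab
          | exact hef | exact heg | exact hdisj
          | exact hef.symm | exact heg.symm | exact hdisj.symm
    have hc3 : ({e, f, g} : Finset (Finset (Fin n))).card = 3 := by
      rw [Finset.card_insert_of_notMem (by simp [hef_ne, heg_ne]),
        Finset.card_insert_of_notMem (by simp [hfg_ne]), Finset.card_singleton]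
    have := hmat _ hM3sub hM3pw
    omega
  -- star or non-star
  by_cases hstar : ∃ y, ∀ g ∈ F, y ∈ g
  · obtain ⟨y, hy⟩ := hstar
    rcases F.eq_empty_or_nonempty with hF | ⟨g0, hg0⟩
    · have hnontriv : ∃ y' : Fin n, y' ≠ x := by
        by_cases h : x = ⟨0, by omega⟩
        · refine ⟨⟨1, by omega⟩, ?_⟩
          rw [h]
          intro hc
          have := congrArg Fin.val hc
          simp at this
        · exact ⟨⟨0, by omega⟩, fun hc => h hc.symm⟩
      obtain ⟨y', hy'⟩ := hnontriv
      have hcov : ∀ e ∈ H, x ∈ e ∨ y' ∈ e := by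
        intro e he
        left
        by_contra hxe
        have : e ∈ F := Finset.mem_filter.2 ⟨he, hxe⟩
        rw [hF] at this
        simp at this
      have := cover_bound x y' (Ne.symm hy') hu hnc hcov
      omega
    · have hyx : y ≠ x := by
        have h1 := hy g0 hg0
        have h2 : x ∉ g0 := (Finset.mem_filter.1 hg0).2
        rintro rfl
        exact h2 h1
      have hcov : ∀ e ∈ H, x ∈ e ∨ y ∈ e := by
        intro e he
        by_cases hxe : x ∈ e
        · exact Or.inl hxe
        · exact Or.inr (hy e (Finset.mem_filter.2 ⟨he, hxe⟩))
      have := cover_bound x y (Ne.symm hyx) hu hnc hcov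
      omega
  · push_neg at hstar
    obtain ⟨f0, hf0F, _⟩ := hstar x
    have hf0H : f0 ∈ H := (Finset.mem_filter.1 hf0F).1
    have hf0c : f0.card = 3 := hu f0 hf0H
    have hpair_bound : ∀ w u : Fin n, w ≠ u →
        (F.filter (fun g => w ∈ g ∧ u ∈ g)).card ≤ n := by
      intro w u hwu
      have hinj : Set.InjOn (fun g => (g.erase w).erase u)
          ((F.filter (fun g => w ∈ g ∧ u ∈ g) : Finset (Finset (Fin n))) : Set (Finset (Fin n))) := by
        intro a ha b hb hab
        simp only [Finset.mem_coe, Finset.mem_filter] at ha hb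
        simp only at hab
        have hua : u ∈ a.erase w := Finset.mem_erase.2 ⟨Ne.symm hwu, ha.2.2⟩
        have hub : u ∈ b.erase w := Finset.mem_erase.2 ⟨Ne.symm hwu, hb.2.2⟩
        have h1 : insert u ((a.erase w).erase u) = a.erase w := Finset.insert_erase hua
        have h2 : insert u ((b.erase w).erase u) = b.erase w := Finset.insert_erase hub
        have h3 : insert w (a.erase w) = a := Finset.insert_erase ha.2.1
        have h4 : insert w (b.erase w) = b := Finset.insert_erase hb.2.1
        rw [← h3, ← h4, ← h1, ← h2, hab]
      have h1 := Finset.card_image_of_injOn hinj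
      have hsub : (F.filter (fun g => w ∈ g ∧ u ∈ g)).image (fun g => (g.erase w).erase u)
          ⊆ univ.image (fun v : Fin n => ({v} : Finset (Fin n))) := by
        intro t ht
        obtain ⟨g, hg, rfl⟩ := Finset.mem_image.1 ht
        simp only [Finset.mem_filter] at hg
        have hgH2 : g ∈ H := (Finset.mem_filter.1 hg.1).1
        have hc1 : ((g.erase w).erase u).card = 1 := by
          rw [Finset.card_erase_of_mem (Finset.mem_erase.2 ⟨Ne.symm hwu, hg.2.2⟩),
            Finset.card_erase_of_mem hg.2.1, hu g hgH2]
        obtain ⟨v, hv⟩ := Finset.card_eq_one.1 hc1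
        rw [hv]
        exact Finset.mem_image.2 ⟨v, mem_univ v, rfl⟩
      calc (F.filter (fun g => w ∈ g ∧ u ∈ g)).card
          = ((F.filter (fun g => w ∈ g ∧ u ∈ g)).image (fun g => (g.erase w).erase u)).card :=
            h1.symm
        _ ≤ (univ.image (fun v : Fin n => ({v} : Finset (Fin n)))).card :=
            Finset.card_le_card hsub
        _ ≤ n := by
            calc _ ≤ (univ : Finset (Fin n)).card := Finset.card_image_le
              _ = n := by rw [Finset.card_univ, Fintype.card_fin]
    have hdegF : ∀ w ∈ f0, (F.filter (fun g => w ∈ g)).card ≤ 3 * n := by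
      intro w hw
      obtain ⟨gw, hgwF, hgww⟩ := hstar w
      have hgwH : gw ∈ H := (Finset.mem_filter.1 hgwF).1
      have hgwc : gw.card = 3 := hu gw hgwH
      have hsub2 : F.filter (fun g => w ∈ g) ⊆
          gw.biUnion (fun u => F.filter (fun g => w ∈ g ∧ u ∈ g)) := by
        intro g hg
        obtain ⟨hgF, hwg⟩ := Finset.mem_filter.1 hg
        obtain ⟨u, hu1, hu2⟩ := Finset.not_disjoint_iff.1 (fun hd => hint g hgF gw hgwF hd)
        exact Finset.mem_biUnion.2 ⟨u, hu2, Finset.mem_filter.2 ⟨hgF, hwg, hu1⟩⟩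
      have h1 : (F.filter (fun g => w ∈ g)).card
          ≤ ∑ u ∈ gw, (F.filter (fun g => w ∈ g ∧ u ∈ g)).card :=
        le_trans (Finset.card_le_card hsub2) Finset.card_biUnion_le
      have h2 : ∑ u ∈ gw, (F.filter (fun g => w ∈ g ∧ u ∈ g)).card ≤ gw.card * n := by
        have := Finset.sum_le_card_nsmul gw (fun u => (F.filter (fun g => w ∈ g ∧ u ∈ g)).card)
          n (fun u hu' => hpair_bound w u (fun h => hgww (h ▸ hu')))
        simpa using this
      rw [hgwc] at h2
      omega
    have hFsub : F ⊆ f0.biUnion (fun w => F.filter (fun g => w ∈ g)) := by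
      intro g hg
      obtain ⟨w, hw1, hw2⟩ := Finset.not_disjoint_iff.1 (fun hd => hint g hg f0 hf0F hd)
      exact Finset.mem_biUnion.2 ⟨w, hw2, Finset.mem_filter.2 ⟨hg, hw1⟩⟩
    have hFle : F.card ≤ 9 * n := by
      have h1 : F.card ≤ ∑ w ∈ f0, (F.filter (fun g => w ∈ g)).card :=
        le_trans (Finset.card_le_card hFsub) Finset.card_biUnion_le
      have h2 : ∑ w ∈ f0, (F.filter (fun g => w ∈ g)).card ≤ f0.card * (3 * n) := by
        have := Finset.sum_le_card_nsmul f0 (fun w => (F.filter (fun g => w ∈ g)).card)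
          (3 * n) hdegF
        simpa using this
      rw [hf0c] at h2
      omega
    have hsplitH : degH H x + F.card = H.card := by
      have := Finset.card_filter_add_card_filter_not (s := H) (p := fun e => x ∈ e)
      simpa [degH, hFdef] using this
    have hn1 : (n - 1) ^ 2 = m * m + 2 * m + 1 := by
      have h1 : n - 1 = m + 1 := by omega
      rw [h1]; ring
    rw [hn1] at hdegmax
    omega

end K43

namespace K43
variable {n : ℕ}

lemma tri_eq3 (a b c : Fin n) : ({a, b, c} : Finset (Fin n)) = {a, c, b} := by
  ext t; simp; tauto

lemma tri_eq4 (a b c : Fin n) : ({a, b, c} : Finset (Fin n)) = {c, b, a} := by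
  ext t; simp; tauto

lemma tri_extract {x u v a b : Fin n} (hux : u ≠ x) (hvx : v ≠ x) (huv : u ≠ v)
    (heq : ({x, u, v} : Finset (Fin n)) = {x, a, b}) :
    (u = a ∧ v = b) ∨ (u = b ∧ v = a) := by
  have hu' : u ∈ ({x, a, b} : Finset (Fin n)) := by rw [← heq]; simp
  have hv' : v ∈ ({x, a, b} : Finset (Fin n)) := by rw [← heq]; simp
  simp only [mem_insert, mem_singleton] at hu' hv'
  rcases hu' with h | h | h
  · exact absurd h hux
  · rcases hv' with h' | h' | h'
    · exact absurd h' hvx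
    · exact absurd (h.trans h'.symm) huv
    · exact Or.inl ⟨h, h'⟩
  · rcases hv' with h' | h' | h'
    · exact absurd h' hvx
    · exact Or.inr ⟨h, h'⟩
    · exact absurd (h.trans h'.symm) huv

lemma matching_of_cover (H : Finset (Finset (Fin n))) (x y : Fin n)
    (hallxy : ∀ e ∈ H, x ∈ e ∨ y ∈ e) : MatchingAtMost H 2 := by
  classical
  intro M hM hpw
  have hone : ∀ w : Fin n, (M.filter (fun e => w ∈ e)).card ≤ 1 := by
    intro w
    apply Finset.card_le_one.2
    intro a ha b hb
    obtain ⟨haM, hwa⟩ := Finset.mem_filter.1 ha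
    obtain ⟨hbM, hwb⟩ := Finset.mem_filter.1 hb
    by_contra hne
    have hd : Disjoint a b := hpw (Finset.mem_coe.2 haM) (Finset.mem_coe.2 hbM) hne
    exact Finset.disjoint_left.1 hd hwa hwb
  have hsub : M ⊆ (M.filter (fun e => x ∈ e)) ∪ (M.filter (fun e => y ∈ e)) := by
    intro e he
    rcases hallxy e (hM he) with h | h
    · exact Finset.mem_union_left _ (Finset.mem_filter.2 ⟨he, h⟩)
    · exact Finset.mem_union_right _ (Finset.mem_filter.2 ⟨he, h⟩)
  calc M.card ≤ ((M.filter (fun e => x ∈ e)) ∪ (M.filter (fun e => y ∈ e))).card :=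
      Finset.card_le_card hsub
    _ ≤ (M.filter (fun e => x ∈ e)).card + (M.filter (fun e => y ∈ e)).card :=
      Finset.card_union_le _ _
    _ ≤ 2 := by have := hone x; have := hone y; omega

/-- central case of the no-copy lemma: the common vertex of the copy is x -/
lemma key_center (H : Finset (Finset (Fin n))) (x y : Fin n)
    (RelX : Fin n → Fin n → Prop) (P : Finset (Fin n))
    (hD2x : ∀ u v, u ≠ x → u ≠ y → v ≠ x → v ≠ y → u ≠ v →
      ({x, u, v} : Finset (Fin n)) ∈ H → RelX u v)
    (hD3 : ∀ w, w ≠ x → w ≠ y → ({x, y, w} : Finset (Fin n)) ∈ H → w ∈ P)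
    (c1x : ∀ u v w, RelX u v → RelX u w → RelX v w → False)
    (c2x : ∀ p ∈ P, ∀ q ∈ P, RelX p q → False) :
    ∀ b c d : Fin n, b ≠ x → c ≠ x → d ≠ x → b ≠ c → b ≠ d → c ≠ d →
    ({x, b, c} : Finset (Fin n)) ∈ H → ({x, b, d} : Finset (Fin n)) ∈ H →
    ({x, c, d} : Finset (Fin n)) ∈ H → False := by
  intro b c d hbx hcx hdx hbc hbd hcd h1 h2 h3
  by_cases hby : b = y
  · subst hby
    have hcP : c ∈ P := hD3 c hcx (Ne.symm hbc) h1
    have hdP : d ∈ P := hD3 d hdx (Ne.symm hbd) h2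
    exact c2x c hcP d hdP (hD2x c d hcx (Ne.symm hbc) hdx (Ne.symm hbd) hcd h3)
  by_cases hcy : c = y
  · subst hcy
    rw [tri_eq3] at h1
    have hbP : b ∈ P := hD3 b hbx hby h1
    have hdP : d ∈ P := hD3 d hdx (Ne.symm hcd) h3
    exact c2x b hbP d hdP (hD2x b d hbx hby hdx (Ne.symm hcd) hbd h2)
  by_cases hdy : d = y
  · subst hdy
    rw [tri_eq3] at h2 h3
    have hbP : b ∈ P := hD3 b hbx hby h2
    have hcP : c ∈ P := hD3 c hcx hcy h3
    exact c2x b hbP c hcP (hD2x b c hbx hby hcx hcy hbc h1)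
  · exact c1x b c d (hD2x b c hbx hby hcx hcy hbc h1) (hD2x b d hbx hby hdx hdy hbd h2)
      (hD2x c d hcx hcy hdx hdy hcd h3)

set_option maxHeartbeats 1000000 in
lemma nocopy (H : Finset (Finset (Fin n))) (x y : Fin n) (hxy : x ≠ y)
    (RelX RelY : Fin n → Fin n → Prop) (P : Finset (Fin n))
    (hallxy : ∀ e ∈ H, x ∈ e ∨ y ∈ e)
    (hD2x : ∀ u v, u ≠ x → u ≠ y → v ≠ x → v ≠ y → u ≠ v →
      ({x, u, v} : Finset (Fin n)) ∈ H → RelX u v)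
    (hD2y : ∀ u v, u ≠ x → u ≠ y → v ≠ x → v ≠ y → u ≠ v →
      ({y, u, v} : Finset (Fin n)) ∈ H → RelY u v)
    (hD3 : ∀ w, w ≠ x → w ≠ y → ({x, y, w} : Finset (Fin n)) ∈ H → w ∈ P)
    (c1x : ∀ u v w, RelX u v → RelX u w → RelX v w → False)
    (c1y : ∀ u v w, RelY u v → RelY u w → RelY v w → False)
    (c2x : ∀ p ∈ P, ∀ q ∈ P, RelX p q → False)
    (c2y : ∀ p ∈ P, ∀ q ∈ P, RelY p q → False)
    (c3 : ∀ p ∈ P, ∀ u, RelX p u → RelY p u → False) :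
    ¬ HasCopy K43mEdges H := by
  rintro ⟨f, hfinj, hfmem⟩
  have hmem1 : ({f 0, f 1, f 2} : Finset (Fin n)) ∈ H := by
    have h := hfmem ({0, 1, 2} : Finset (Fin 4)) (by simp [K43mEdges])
    have he : ({0, 1, 2} : Finset (Fin 4)).image f = {f 0, f 1, f 2} := by
      simp [Finset.image_insert]
    rwa [he] at h
  have hmem2 : ({f 0, f 1, f 3} : Finset (Fin n)) ∈ H := by
    have h := hfmem ({0, 1, 3} : Finset (Fin 4)) (by simp [K43mEdges])
    have he : ({0, 1, 3} : Finset (Fin 4)).image f = {f 0, f 1, f 3} := by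
      simp [Finset.image_insert]
    rwa [he] at h
  have hmem3 : ({f 0, f 2, f 3} : Finset (Fin n)) ∈ H := by
    have h := hfmem ({0, 2, 3} : Finset (Fin 4)) (by simp [K43mEdges])
    have he : ({0, 2, 3} : Finset (Fin 4)).image f = {f 0, f 2, f 3} := by
      simp [Finset.image_insert]
    rwa [he] at h
  have key : ∀ a b c d : Fin n, a ≠ b → a ≠ c → a ≠ d → b ≠ c → b ≠ d → c ≠ d →
      ({a, b, c} : Finset (Fin n)) ∈ H → ({a, b, d} : Finset (Fin n)) ∈ H →
      ({a, c, d} : Finset (Fin n)) ∈ H → False := by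
    intro a b c d hab hac had hbc hbd hcd h1 h2 h3
    by_cases hax : a = x
    · subst hax
      exact key_center H a y RelX P hD2x hD3 c1x c2x b c d (Ne.symm hab) (Ne.symm hac)
        (Ne.symm had) hbc hbd hcd h1 h2 h3
    by_cases hay : a = y
    · subst hay
      refine key_center H a x RelY P ?_ ?_ c1y c2y b c d (Ne.symm hab) (Ne.symm hac)
        (Ne.symm had) hbc hbd hcd h1 h2 h3
      · intro u v h1' h2' h3' h4' h5' hm
        exact hD2y u v h2' h1' h4' h3' h5' hm
      · intro w h1' h2' hm
        rw [tri_eq1] at hm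
        exact hD3 w h2' h1' hm
    -- a is neither x nor y
    have H1 := hallxy _ h1
    have H2 := hallxy _ h2
    have H3 := hallxy _ h3
    simp only [mem_insert, mem_singleton] at H1 H2 H3
    have hxa : ¬ (x = a) := fun h => hax h.symm
    have hya : ¬ (y = a) := fun h => hay h.symm
    have H1' : x = b ∨ x = c ∨ y = b ∨ y = c := by
      rcases H1 with (h | h | h) | (h | h | h)
      · exact absurd h hxa
      · exact Or.inl h
      · exact Or.inr (Or.inl h)
      · exact absurd h hya
      · exact Or.inr (Or.inr (Or.inl h))
      · exact Or.inr (Or.inr (Or.inr h))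
    have H2' : x = b ∨ x = d ∨ y = b ∨ y = d := by
      rcases H2 with (h | h | h) | (h | h | h)
      · exact absurd h hxa
      · exact Or.inl h
      · exact Or.inr (Or.inl h)
      · exact absurd h hya
      · exact Or.inr (Or.inr (Or.inl h))
      · exact Or.inr (Or.inr (Or.inr h))
    have H3' : x = c ∨ x = d ∨ y = c ∨ y = d := by
      rcases H3 with (h | h | h) | (h | h | h)
      · exact absurd h hxa
      · exact Or.inl h
      · exact Or.inr (Or.inl h)
      · exact absurd h hya
      · exact Or.inr (Or.inr (Or.inl h))
      · exact Or.inr (Or.inr (Or.inr h))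
    -- case analysis on positions of x and y among b, c, d
    rcases H1' with hxb | hxc | hyb | hyc
    · -- x = b
      rcases H3' with hxc | hxd | hyc | hyd
      · exact absurd (hxb.symm.trans hxc) hbc
      · exact absurd (hxb.symm.trans hxd) hbd
      · -- y = c : edges {a,x,y}, {a,x,d}, {a,y,d}
        rw [← hxb] at h1 h2 hbd
        rw [← hyc] at h1 h3 hcd
        have e1 : ({a, x, y} : Finset (Fin n)) = {x, y, a} := (tri_eq2 x y a).symm
        rw [e1] at h1
        have haP : a ∈ P := hD3 a hax hay h1
        have e2 : ({a, x, d} : Finset (Fin n)) = {x, a, d} := tri_eq1 a x d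
        rw [e2] at h2
        have hRx : RelX a d := hD2x a d hax hay (Ne.symm hbd) (Ne.symm hcd) had h2
        have e3 : ({a, y, d} : Finset (Fin n)) = {y, a, d} := tri_eq1 a y d
        rw [e3] at h3
        have hRy : RelY a d := hD2y a d hax hay (Ne.symm hbd) (Ne.symm hcd) had h3
        exact c3 a haP d hRx hRy
      · -- y = d : edges {a,x,c}, {a,x,y}, {a,c,y}
        rw [← hxb] at h1 h2 hbc
        rw [← hyd] at h2 h3 hcd
        have e2 : ({a, x, y} : Finset (Fin n)) = {x, y, a} := (tri_eq2 x y a).symm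
        rw [e2] at h2
        have haP : a ∈ P := hD3 a hax hay h2
        have e1 : ({a, x, c} : Finset (Fin n)) = {x, a, c} := tri_eq1 a x c
        rw [e1] at h1
        have hRx : RelX a c := hD2x a c hax hay (Ne.symm hbc) hcd hac h1
        have e3 : ({a, c, y} : Finset (Fin n)) = {y, a, c} := tri_eq2 a c y
        rw [e3] at h3
        have hRy : RelY a c := hD2y a c hax hay (Ne.symm hbc) hcd hac h3
        exact c3 a haP c hRx hRy
    · -- x = c
      rcases H2' with hxb | hxd | hyb | hyd
      · exact absurd (hxb.symm.trans hxc) hbc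
      · exact absurd (hxc.symm.trans hxd) hcd
      · -- y = b : edges {a,y,x}, {a,y,d}, {a,x,d}
        rw [← hyb] at h1 h2 hbd
        rw [← hxc] at h1 h3 hcd
        have e1 : ({a, y, x} : Finset (Fin n)) = {x, y, a} := tri_eq4 a y x
        rw [e1] at h1
        have haP : a ∈ P := hD3 a hax hay h1
        have e3 : ({a, x, d} : Finset (Fin n)) = {x, a, d} := tri_eq1 a x d
        rw [e3] at h3
        have hRx : RelX a d := hD2x a d hax hay (Ne.symm hcd) (Ne.symm hbd) had h3
        have e2 : ({a, y, d} : Finset (Fin n)) = {y, a, d} := tri_eq1 a y d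
        rw [e2] at h2
        have hRy : RelY a d := hD2y a d hax hay (Ne.symm hcd) (Ne.symm hbd) had h2
        exact c3 a haP d hRx hRy
      · -- y = d : edges {a,b,x}, {a,b,y}, {a,x,y}
        rw [← hxc] at h1 h3 hbc
        rw [← hyd] at h2 h3 hbd
        have e3 : ({a, x, y} : Finset (Fin n)) = {x, y, a} := (tri_eq2 x y a).symm
        rw [e3] at h3
        have haP : a ∈ P := hD3 a hax hay h3
        have e1 : ({a, b, x} : Finset (Fin n)) = {x, a, b} := tri_eq2 a b x
        rw [e1] at h1
        have hRx : RelX a b := hD2x a b hax hay hbc hbd hab h1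
        have e2 : ({a, b, y} : Finset (Fin n)) = {y, a, b} := tri_eq2 a b y
        rw [e2] at h2
        have hRy : RelY a b := hD2y a b hax hay hbc hbd hab h2
        exact c3 a haP b hRx hRy
    · -- y = b
      rcases H3' with hxc | hxd | hyc | hyd
      · -- x = c : edges {a,y,x}, {a,y,d}, {a,x,d}
        rw [← hyb] at h1 h2 hbd
        rw [← hxc] at h1 h3 hcd
        have e1 : ({a, y, x} : Finset (Fin n)) = {x, y, a} := tri_eq4 a y x
        rw [e1] at h1
        have haP : a ∈ P := hD3 a hax hay h1
        have e3 : ({a, x, d} : Finset (Fin n)) = {x, a, d} := tri_eq1 a x d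
        rw [e3] at h3
        have hRx : RelX a d := hD2x a d hax hay (Ne.symm hcd) (Ne.symm hbd) had h3
        have e2 : ({a, y, d} : Finset (Fin n)) = {y, a, d} := tri_eq1 a y d
        rw [e2] at h2
        have hRy : RelY a d := hD2y a d hax hay (Ne.symm hcd) (Ne.symm hbd) had h2
        exact c3 a haP d hRx hRy
      · -- x = d : edges {a,y,c}, {a,y,x}, {a,c,x}
        rw [← hyb] at h1 h2 hbc
        rw [← hxd] at h2 h3 hcd
        have e2 : ({a, y, x} : Finset (Fin n)) = {x, y, a} := tri_eq4 a y x
        rw [e2] at h2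
        have haP : a ∈ P := hD3 a hax hay h2
        have e3 : ({a, c, x} : Finset (Fin n)) = {x, a, c} := tri_eq2 a c x
        rw [e3] at h3
        have hRx : RelX a c := hD2x a c hax hay hcd (Ne.symm hbc) hac h3
        have e1 : ({a, y, c} : Finset (Fin n)) = {y, a, c} := tri_eq1 a y c
        rw [e1] at h1
        have hRy : RelY a c := hD2y a c hax hay hcd (Ne.symm hbc) hac h1
        exact c3 a haP c hRx hRy
      · exact absurd (hyb.symm.trans hyc) hbc
      · exact absurd (hyb.symm.trans hyd) hbd
    · -- y = c
      rcases H2' with hxb | hxd | hyb | hyd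
      · -- x = b : edges {a,x,y}, {a,x,d}, {a,y,d}
        rw [← hxb] at h1 h2 hbd
        rw [← hyc] at h1 h3 hcd
        have e1 : ({a, x, y} : Finset (Fin n)) = {x, y, a} := (tri_eq2 x y a).symm
        rw [e1] at h1
        have haP : a ∈ P := hD3 a hax hay h1
        have e2 : ({a, x, d} : Finset (Fin n)) = {x, a, d} := tri_eq1 a x d
        rw [e2] at h2
        have hRx : RelX a d := hD2x a d hax hay (Ne.symm hbd) (Ne.symm hcd) had h2
        have e3 : ({a, y, d} : Finset (Fin n)) = {y, a, d} := tri_eq1 a y d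
        rw [e3] at h3
        have hRy : RelY a d := hD2y a d hax hay (Ne.symm hbd) (Ne.symm hcd) had h3
        exact c3 a haP d hRx hRy
      · -- x = d : edges {a,b,y}, {a,b,x}, {a,y,x}
        rw [← hyc] at h1 h3 hbc
        rw [← hxd] at h2 h3 hbd
        have e3 : ({a, y, x} : Finset (Fin n)) = {x, y, a} := tri_eq4 a y x
        rw [e3] at h3
        have haP : a ∈ P := hD3 a hax hay h3
        have e2 : ({a, b, x} : Finset (Fin n)) = {x, a, b} := tri_eq2 a b x
        rw [e2] at h2
        have hRx : RelX a b := hD2x a b hax hay hbd hbc hab h2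
        have e1 : ({a, b, y} : Finset (Fin n)) = {y, a, b} := tri_eq2 a b y
        rw [e1] at h1
        have hRy : RelY a b := hD2y a b hax hay hbd hbc hab h1
        exact c3 a haP b hRx hRy
      · exact absurd (hyb.symm.trans hyc) hbc
      · exact absurd (hyc.symm.trans hyd) hcd
  have h01 : f 0 ≠ f 1 := fun h => absurd (hfinj h) (by decide)
  have h02 : f 0 ≠ f 2 := fun h => absurd (hfinj h) (by decide)
  have h03 : f 0 ≠ f 3 := fun h => absurd (hfinj h) (by decide)
  have h12 : f 1 ≠ f 2 := fun h => absurd (hfinj h) (by decide)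
  have h13 : f 1 ≠ f 3 := fun h => absurd (hfinj h) (by decide)
  have h23 : f 2 ≠ f 3 := fun h => absurd (hfinj h) (by decide)
  exact key (f 0) (f 1) (f 2) (f 3) h01 h02 h03 h12 h13 h23 hmem1 hmem2 hmem3

end K43

namespace K43
variable {n : ℕ}

lemma tricard {u v w : Fin n} (h1 : u ≠ v) (h2 : u ≠ w) (h3 : v ≠ w) :
    ({u, v, w} : Finset (Fin n)).card = 3 := by
  rw [Finset.card_insert_of_notMem (by simp [h1, h2]),
    Finset.card_insert_of_notMem (by simp [h3]), Finset.card_singleton]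

lemma bip_trifree {A B : Finset (Fin n)} (hAB : Disjoint A B) :
    ∀ u v w : Fin n, ((u ∈ A ∧ v ∈ B) ∨ (v ∈ A ∧ u ∈ B)) →
      ((u ∈ A ∧ w ∈ B) ∨ (w ∈ A ∧ u ∈ B)) →
      ((v ∈ A ∧ w ∈ B) ∨ (w ∈ A ∧ v ∈ B)) → False := by
  intro u v w h1 h2 h3
  have hd : ∀ t, t ∈ A → t ∈ B → False := fun t ha hb => Finset.disjoint_left.1 hAB ha hb
  tauto

lemma build (x y : Fin n) (hxy : x ≠ y) (A B A' B' P : Finset (Fin n))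
    (hgA : ∀ v ∈ A, v ≠ x ∧ v ≠ y) (hgB : ∀ v ∈ B, v ≠ x ∧ v ≠ y)
    (hgA' : ∀ v ∈ A', v ≠ x ∧ v ≠ y) (hgB' : ∀ v ∈ B', v ≠ x ∧ v ≠ y)
    (hgP : ∀ v ∈ P, v ≠ x ∧ v ≠ y)
    (hAB : Disjoint A B) (hA'B' : Disjoint A' B')
    (hP2x : ∀ p ∈ P, ∀ q ∈ P, ¬((p ∈ A ∧ q ∈ B) ∨ (q ∈ A ∧ p ∈ B)))
    (hP2y : ∀ p ∈ P, ∀ q ∈ P, ¬((p ∈ A' ∧ q ∈ B') ∨ (q ∈ A' ∧ p ∈ B')))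
    (hP3 : ∀ p ∈ P, ∀ u, ((p ∈ A ∧ u ∈ B) ∨ (u ∈ A ∧ p ∈ B)) →
      ((p ∈ A' ∧ u ∈ B') ∨ (u ∈ A' ∧ p ∈ B')) → False) :
    ∃ H : Finset (Finset (Fin n)), Uniform3 H ∧ ¬ HasCopy K43mEdges H ∧
      MatchingAtMost H 2 ∧ H.card = A.card * B.card + A'.card * B'.card + P.card := by
  classical
  set Hx := (A ×ˢ B).image (fun p => ({x, p.1, p.2} : Finset (Fin n))) with hHx
  set Hy := (A' ×ˢ B').image (fun p => ({y, p.1, p.2} : Finset (Fin n))) with hHy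
  set Hp := P.image (fun w => ({x, y, w} : Finset (Fin n))) with hHp
  have memHx : ∀ e, e ∈ Hx ↔ ∃ a b1, a ∈ A ∧ b1 ∈ B ∧ e = {x, a, b1} := by
    intro e
    simp only [hHx, Finset.mem_image, Finset.mem_product]
    constructor
    · rintro ⟨p, ⟨h1, h2⟩, rfl⟩
      exact ⟨p.1, p.2, h1, h2, rfl⟩
    · rintro ⟨a, b1, h1, h2, rfl⟩
      exact ⟨(a, b1), ⟨h1, h2⟩, rfl⟩
  have memHy : ∀ e, e ∈ Hy ↔ ∃ a b1, a ∈ A' ∧ b1 ∈ B' ∧ e = {y, a, b1} := by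
    intro e
    simp only [hHy, Finset.mem_image, Finset.mem_product]
    constructor
    · rintro ⟨p, ⟨h1, h2⟩, rfl⟩
      exact ⟨p.1, p.2, h1, h2, rfl⟩
    · rintro ⟨a, b1, h1, h2, rfl⟩
      exact ⟨(a, b1), ⟨h1, h2⟩, rfl⟩
  have memHp : ∀ e, e ∈ Hp ↔ ∃ w ∈ P, e = {x, y, w} := by
    intro e
    simp only [hHp, Finset.mem_image]
    constructor
    · rintro ⟨w, hw, rfl⟩
      exact ⟨w, hw, rfl⟩
    · rintro ⟨w, hw, rfl⟩
      exact ⟨w, hw, rfl⟩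
  set H := Hx ∪ Hy ∪ Hp with hH
  have memH : ∀ e, e ∈ H ↔ e ∈ Hx ∨ e ∈ Hy ∨ e ∈ Hp := by
    intro e
    simp [hH, Finset.mem_union, or_assoc]
  -- uniformity
  have huni : Uniform3 H := by
    intro e he
    rcases (memH e).1 he with h | h | h
    · obtain ⟨a, b1, ha, hb, rfl⟩ := (memHx e).1 h
      exact tricard (Ne.symm (hgA a ha).1) (Ne.symm (hgB b1 hb).1)
        (fun hab => Finset.disjoint_left.1 hAB ha (hab ▸ hb))
    · obtain ⟨a, b1, ha, hb, rfl⟩ := (memHy e).1 h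
      exact tricard (Ne.symm (hgA' a ha).2) (Ne.symm (hgB' b1 hb).2)
        (fun hab => Finset.disjoint_left.1 hA'B' ha (hab ▸ hb))
    · obtain ⟨w, hw, rfl⟩ := (memHp e).1 h
      exact tricard hxy (Ne.symm (hgP w hw).1) (Ne.symm (hgP w hw).2)
  -- cover
  have hcov : ∀ e ∈ H, x ∈ e ∨ y ∈ e := by
    intro e he
    rcases (memH e).1 he with h | h | h
    · obtain ⟨a, b1, _, _, rfl⟩ := (memHx e).1 h
      exact Or.inl (by simp)
    · obtain ⟨a, b1, _, _, rfl⟩ := (memHy e).1 h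
      exact Or.inr (by simp)
    · obtain ⟨w, _, rfl⟩ := (memHp e).1 h
      exact Or.inl (by simp)
  -- no copy
  have hnc : ¬ HasCopy K43mEdges H := by
    apply nocopy H x y hxy
      (fun u v => (u ∈ A ∧ v ∈ B) ∨ (v ∈ A ∧ u ∈ B))
      (fun u v => (u ∈ A' ∧ v ∈ B') ∨ (v ∈ A' ∧ u ∈ B')) P hcov
    · -- hD2x
      intro u v hux huy hvx hvy huv hmem
      rcases (memH _).1 hmem with h | h | h
      · obtain ⟨a, b1, ha, hb, heq⟩ := (memHx _).1 h
        rcases tri_extract hux hvx huv heq with ⟨rfl, rfl⟩ | ⟨rfl, rfl⟩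
        · exact Or.inl ⟨ha, hb⟩
        · exact Or.inr ⟨ha, hb⟩
      · obtain ⟨a, b1, ha, hb, heq⟩ := (memHy _).1 h
        have hy' : y ∈ ({x, u, v} : Finset (Fin n)) := by rw [heq]; simp
        simp only [Finset.mem_insert, Finset.mem_singleton] at hy'
        rcases hy' with h' | h' | h'
        · exact absurd h'.symm hxy
        · exact absurd h'.symm huy
        · exact absurd h'.symm hvy
      · obtain ⟨w, hw, heq⟩ := (memHp _).1 h
        have hy' : y ∈ ({x, u, v} : Finset (Fin n)) := by rw [heq]; simp
        simp only [Finset.mem_insert, Finset.mem_singleton] at hy'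
        rcases hy' with h' | h' | h'
        · exact absurd h'.symm hxy
        · exact absurd h'.symm huy
        · exact absurd h'.symm hvy
    · -- hD2y
      intro u v hux huy hvx hvy huv hmem
      rcases (memH _).1 hmem with h | h | h
      · obtain ⟨a, b1, ha, hb, heq⟩ := (memHx _).1 h
        have hx' : x ∈ ({y, u, v} : Finset (Fin n)) := by rw [heq]; simp
        simp only [Finset.mem_insert, Finset.mem_singleton] at hx'
        rcases hx' with h' | h' | h'
        · exact absurd h' hxy
        · exact absurd h'.symm hux
        · exact absurd h'.symm hvx
      · obtain ⟨a, b1, ha, hb, heq⟩ := (memHy _).1 h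
        rcases tri_extract huy hvy huv heq with ⟨rfl, rfl⟩ | ⟨rfl, rfl⟩
        · exact Or.inl ⟨ha, hb⟩
        · exact Or.inr ⟨ha, hb⟩
      · obtain ⟨w, hw, heq⟩ := (memHp _).1 h
        have hx' : x ∈ ({y, u, v} : Finset (Fin n)) := by rw [heq]; simp
        simp only [Finset.mem_insert, Finset.mem_singleton] at hx'
        rcases hx' with h' | h' | h'
        · exact absurd h' hxy
        · exact absurd h'.symm hux
        · exact absurd h'.symm hvx
    · -- hD3
      intro w hwx hwy hmem
      rcases (memH _).1 hmem with h | h | h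
      · obtain ⟨a, b1, ha, hb, heq⟩ := (memHx _).1 h
        have hy' : y ∈ ({x, a, b1} : Finset (Fin n)) := by rw [← heq]; simp
        simp only [Finset.mem_insert, Finset.mem_singleton] at hy'
        rcases hy' with h' | h' | h'
        · exact absurd h'.symm hxy
        · exact absurd h' (Ne.symm (hgA a ha).2)
        · exact absurd h' (Ne.symm (hgB b1 hb).2)
      · obtain ⟨a, b1, ha, hb, heq⟩ := (memHy _).1 h
        have hx' : x ∈ ({y, a, b1} : Finset (Fin n)) := by rw [← heq]; simp
        simp only [Finset.mem_insert, Finset.mem_singleton] at hx'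
        rcases hx' with h' | h' | h'
        · exact absurd h' hxy
        · exact absurd h' (Ne.symm (hgA' a ha).1)
        · exact absurd h' (Ne.symm (hgB' b1 hb).1)
      · obtain ⟨p, hp, heq⟩ := (memHp _).1 h
        have hw' : w ∈ ({x, y, p} : Finset (Fin n)) := by rw [← heq]; simp
        simp only [Finset.mem_insert, Finset.mem_singleton] at hw'
        rcases hw' with h' | h' | h'
        · exact absurd h' hwx
        · exact absurd h' hwy
        · exact h' ▸ hp
    · exact bip_trifree hAB
    · exact bip_trifree hA'B'
    · exact fun p hp q hq hr => hP2x p hp q hq hr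
    · exact fun p hp q hq hr => hP2y p hp q hq hr
    · exact hP3
  -- cardinality
  have hcHx : Hx.card = A.card * B.card := by
    rw [hHx, Finset.card_image_of_injOn, Finset.card_product]
    intro p hp q hq h
    simp only [Finset.mem_coe, Finset.mem_product] at hp hq
    simp only at h
    have hne12 : p.1 ≠ p.2 := fun hab =>
      Finset.disjoint_left.1 hAB hp.1 (by rw [hab]; exact hp.2)
    have h1 := tri_extract (hgA p.1 hp.1).1 (hgB p.2 hp.2).1 hne12 h
    rcases h1 with ⟨h1, h2⟩ | ⟨h1, h2⟩
    · exact Prod.ext h1 h2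
    · exact absurd (h1 ▸ hp.1) (fun hc => Finset.disjoint_left.1 hAB hc hq.2)
  have hcHy : Hy.card = A'.card * B'.card := by
    rw [hHy, Finset.card_image_of_injOn, Finset.card_product]
    intro p hp q hq h
    simp only [Finset.mem_coe, Finset.mem_product] at hp hq
    simp only at h
    have hne12 : p.1 ≠ p.2 := fun hab =>
      Finset.disjoint_left.1 hA'B' hp.1 (by rw [hab]; exact hp.2)
    have h1 := tri_extract (hgA' p.1 hp.1).2 (hgB' p.2 hp.2).2 hne12 h
    rcases h1 with ⟨h1, h2⟩ | ⟨h1, h2⟩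
    · exact Prod.ext h1 h2
    · exact absurd (h1 ▸ hp.1) (fun hc => Finset.disjoint_left.1 hA'B' hc hq.2)
  have hcHp : Hp.card = P.card := by
    rw [hHp]
    apply Finset.card_image_of_injOn
    intro p hp q hq h
    simp only [Finset.mem_coe] at hp hq
    simp only at h
    have hp' : p ∈ ({x, y, q} : Finset (Fin n)) := by rw [← h]; simp
    simp only [Finset.mem_insert, Finset.mem_singleton] at hp'
    rcases hp' with h' | h' | h'
    · exact absurd h' (hgP p hp).1
    · exact absurd h' (hgP p hp).2
    · exact h'
  have hymem : ∀ e ∈ Hx, y ∉ e := by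
    intro e he
    obtain ⟨a, b1, ha, hb, rfl⟩ := (memHx e).1 he
    simp only [Finset.mem_insert, Finset.mem_singleton]
    push_neg
    exact ⟨hxy.symm, Ne.symm (hgA a ha).2, Ne.symm (hgB b1 hb).2⟩
  have hxmem : ∀ e ∈ Hy, x ∉ e := by
    intro e he
    obtain ⟨a, b1, ha, hb, rfl⟩ := (memHy e).1 he
    simp only [Finset.mem_insert, Finset.mem_singleton]
    push_neg
    exact ⟨hxy, Ne.symm (hgA' a ha).1, Ne.symm (hgB' b1 hb).1⟩
  have hdisjxy : Disjoint Hx Hy := by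
    rw [Finset.disjoint_left]
    intro e he1 he2
    obtain ⟨a, b1, ha, hb, heq⟩ := (memHy e).1 he2
    exact hymem e he1 (by rw [heq]; simp)
  have hdisjp : Disjoint (Hx ∪ Hy) Hp := by
    rw [Finset.disjoint_left]
    intro e he1 he2
    obtain ⟨w, hw, heq⟩ := (memHp e).1 he2
    rcases Finset.mem_union.1 he1 with h | h
    · exact hymem e h (by rw [heq]; simp)
    · exact hxmem e h (by rw [heq]; simp)
  have hcard : H.card = A.card * B.card + A'.card * B'.card + P.card := by
    rw [hH, Finset.card_union_of_disjoint hdisjp, Finset.card_union_of_disjoint hdisjxy,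
      hcHx, hcHy, hcHp]
  exact ⟨H, huni, hnc, matching_of_cover H x y hcov, hcard⟩

lemma range_even_card (N : ℕ) : ((range N).filter (fun i => i % 2 = 0)).card = (N + 1) / 2 := by
  induction N with
  | zero => simp
  | succ k ih =>
    rw [Finset.range_add_one, Finset.filter_insert]
    by_cases h : k % 2 = 0
    · rw [if_pos h, Finset.card_insert_of_notMem (by simp)]
      omega
    · rw [if_neg h]
      omega

lemma range_odd_card (N : ℕ) : ((range N).filter (fun i => i % 2 = 1)).card = N / 2 := by
  induction N with
  | zero => simp
  | succ k ih =>
    rw [Finset.range_add_one, Finset.filter_insert]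
    by_cases h : k % 2 = 1
    · rw [if_pos h, Finset.card_insert_of_notMem (by simp)]
      omega
    · rw [if_neg h]
      omega

lemma card_fin_filter (p : ℕ → Prop) [DecidablePred p] :
    ((univ : Finset (Fin n)).filter (fun v => p v.val)).card = ((range n).filter p).card := by
  rw [← Finset.card_image_of_injective ((univ : Finset (Fin n)).filter (fun v => p v.val))
    Fin.val_injective]
  congr 1
  ext i
  simp only [Finset.mem_image, Finset.mem_filter, Finset.mem_univ, true_and, Finset.mem_range]
  constructor
  · rintro ⟨v, hv, rfl⟩
    exact ⟨v.isLt, hv⟩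
  · rintro ⟨h1, h2⟩
    exact ⟨⟨i, h1⟩, h2, rfl⟩

lemma cardA (hn : 2 ≤ n) :
    ((univ : Finset (Fin n)).filter (fun v => 2 ≤ v.val ∧ v.val % 2 = 0)).card
      = (n + 1) / 2 - 1 := by
  rw [card_fin_filter (fun i => 2 ≤ i ∧ i % 2 = 0)]
  have h1 : (range n).filter (fun i => 2 ≤ i ∧ i % 2 = 0)
      = ((range n).filter (fun i => i % 2 = 0)).erase 0 := by
    ext i
    simp only [Finset.mem_filter, Finset.mem_range, Finset.mem_erase]
    omega
  rw [h1, Finset.card_erase_of_mem (by simp [Finset.mem_filter, Finset.mem_range]; omega),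
    range_even_card]

lemma cardB (hn : 2 ≤ n) :
    ((univ : Finset (Fin n)).filter (fun v => 2 ≤ v.val ∧ v.val % 2 = 1)).card
      = n / 2 - 1 := by
  rw [card_fin_filter (fun i => 2 ≤ i ∧ i % 2 = 1)]
  have h1 : (range n).filter (fun i => 2 ≤ i ∧ i % 2 = 1)
      = ((range n).filter (fun i => i % 2 = 1)).erase 1 := by
    ext i
    simp only [Finset.mem_filter, Finset.mem_range, Finset.mem_erase]
    omega
  rw [h1, Finset.card_erase_of_mem (by simp [Finset.mem_filter, Finset.mem_range]; omega),
    range_odd_card]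

end K43

open K43

set_option maxHeartbeats 1000000 in
theorem stmt_11 (n : ℕ) (hn : 150 ≤ n) :
    IsGreatest {m | ∃ H : Finset (Finset (Fin n)), Uniform3 H ∧
      ¬ HasCopy K43mEdges H ∧ MatchingAtMost H 2 ∧ H.card = m}
      (if Odd n then 2 * ((n - 2) ^ 2 / 4) + 1 else 2 * ((n - 2) ^ 2 / 4)) := by
  classical
  constructor
  · -- membership : the extremal construction
    have h2n : 2 ≤ n := by omega
    set x : Fin n := ⟨0, by omega⟩ with hxdef
    set y : Fin n := ⟨1, by omega⟩ with hydef
    set z : Fin n := ⟨2, by omega⟩ with hzdef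
    have hxval : x.val = 0 := rfl
    have hyval : y.val = 1 := rfl
    have hzval : z.val = 2 := rfl
    have hxy : x ≠ y := by
      intro h
      have := congrArg Fin.val h
      rw [hxval, hyval] at this
      omega
    have hzx : z ≠ x := by
      intro h
      have := congrArg Fin.val h
      rw [hxval, hzval] at this
      omega
    have hzy : z ≠ y := by
      intro h
      have := congrArg Fin.val h
      rw [hyval, hzval] at this
      omega
    set A := (univ : Finset (Fin n)).filter (fun v => 2 ≤ v.val ∧ v.val % 2 = 0) with hA
    set B := (univ : Finset (Fin n)).filter (fun v => 2 ≤ v.val ∧ v.val % 2 = 1) with hB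
    have hmemA : ∀ v : Fin n, v ∈ A ↔ 2 ≤ v.val ∧ v.val % 2 = 0 := by
      intro v; simp [hA]
    have hmemB : ∀ v : Fin n, v ∈ B ↔ 2 ≤ v.val ∧ v.val % 2 = 1 := by
      intro v; simp [hB]
    have hgA : ∀ v ∈ A, v ≠ x ∧ v ≠ y := by
      intro v hv
      rw [hmemA] at hv
      constructor <;> intro h <;> rw [h] at hv
      · rw [hxval] at hv; omega
      · rw [hyval] at hv; omega
    have hgB : ∀ v ∈ B, v ≠ x ∧ v ≠ y := by
      intro v hv
      rw [hmemB] at hv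
      constructor <;> intro h <;> rw [h] at hv
      · rw [hxval] at hv; omega
      · rw [hyval] at hv; omega
    have hAB : Disjoint A B := by
      rw [Finset.disjoint_left]
      intro v h1 h2
      rw [hmemA] at h1
      rw [hmemB] at h2
      omega
    have hcA : A.card = (n + 1) / 2 - 1 := by rw [hA]; exact cardA h2n
    have hcB : B.card = n / 2 - 1 := by rw [hB]; exact cardB h2n
    by_cases ho : Odd n
    · -- odd case
      obtain ⟨t, ht⟩ := id ho
      have hzA : z ∈ A := (hmemA z).2 (by rw [hzval]; norm_num)
      have hzB : z ∉ B := by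
        rw [hmemB, hzval]
        norm_num
      have hgA' : ∀ v ∈ A.erase z, v ≠ x ∧ v ≠ y :=
        fun v hv => hgA v (Finset.mem_of_mem_erase hv)
      have hgB' : ∀ v ∈ insert z B, v ≠ x ∧ v ≠ y := by
        intro v hv
        rcases Finset.mem_insert.1 hv with rfl | hv
        · exact ⟨hzx, hzy⟩
        · exact hgB v hv
      have hgP : ∀ v ∈ ({z} : Finset (Fin n)), v ≠ x ∧ v ≠ y := by
        intro v hv
        rw [Finset.mem_singleton] at hv
        subst hv
        exact ⟨hzx, hzy⟩
      have hA'B' : Disjoint (A.erase z) (insert z B) := by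
        rw [Finset.disjoint_left]
        intro v h1 h2
        obtain ⟨hvz, hvA⟩ := Finset.mem_erase.1 h1
        rcases Finset.mem_insert.1 h2 with rfl | hvB
        · exact hvz rfl
        · exact Finset.disjoint_left.1 hAB hvA hvB
      have hP2x : ∀ p ∈ ({z} : Finset (Fin n)), ∀ q ∈ ({z} : Finset (Fin n)),
          ¬((p ∈ A ∧ q ∈ B) ∨ (q ∈ A ∧ p ∈ B)) := by
        intro p hp q hq
        rw [Finset.mem_singleton] at hp hq
        subst hp; subst hq
        rintro (⟨_, h⟩ | ⟨_, h⟩) <;> exact hzB h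
      have hP2y : ∀ p ∈ ({z} : Finset (Fin n)), ∀ q ∈ ({z} : Finset (Fin n)),
          ¬((p ∈ A.erase z ∧ q ∈ insert z B) ∨ (q ∈ A.erase z ∧ p ∈ insert z B)) := by
        intro p hp q hq
        rw [Finset.mem_singleton] at hp hq
        subst hp; subst hq
        rintro (⟨h, _⟩ | ⟨h, _⟩) <;> exact (Finset.mem_erase.1 h).1 rfl
      have hP3 : ∀ p ∈ ({z} : Finset (Fin n)), ∀ u,
          ((p ∈ A ∧ u ∈ B) ∨ (u ∈ A ∧ p ∈ B)) →
          ((p ∈ A.erase z ∧ u ∈ insert z B) ∨ (u ∈ A.erase z ∧ p ∈ insert z B)) → False := by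
        intro p hp u hRx hRy
        rw [Finset.mem_singleton] at hp
        subst hp
        have huB : u ∈ B := by
          rcases hRx with ⟨_, h⟩ | ⟨_, h⟩
          · exact h
          · exact absurd h hzB
        have huA : u ∈ A := by
          rcases hRy with ⟨h, _⟩ | ⟨h, _⟩
          · exact absurd ((Finset.mem_erase.1 h).1 rfl) not_false
          · exact Finset.mem_of_mem_erase h
        exact Finset.disjoint_left.1 hAB huA huB
      obtain ⟨H, h1, h2, h3, h4⟩ := build x y hxy A B (A.erase z) (insert z B) {z}
        hgA hgB hgA' hgB' hgP hAB hA'B' hP2x hP2y hP3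
      refine ⟨H, h1, h2, h3, ?_⟩
      rw [h4, if_pos ho]
      have hA'c : (A.erase z).card = A.card - 1 := Finset.card_erase_of_mem hzA
      have hB'c : (insert z B).card = B.card + 1 := Finset.card_insert_of_notMem hzB
      obtain ⟨s, hs⟩ : ∃ s, t = s + 1 := ⟨t - 1, by omega⟩
      have hAc2 : A.card = s + 1 := by omega
      have hBc2 : B.card = s := by omega
      have hprod1 : A.card * B.card = s * s + s := by rw [hAc2, hBc2]; ring
      have hprod2 : (A.erase z).card * (insert z B).card = s * s + s := by
        rw [hA'c, hB'c, hAc2, hBc2]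
        have hh : s + 1 - 1 = s := by omega
        rw [hh]
        ring
      have hn2 : n - 2 = 2 * s + 1 := by omega
      have e3 : (2 * s + 1) ^ 2 = 4 * (s * s) + 4 * s + 1 := by ring
      rw [hprod1, hprod2, Finset.card_singleton, hn2, e3]
      omega
    · -- even case
      have hev : n % 2 = 0 := by
        rcases Nat.even_or_odd n with h | h
        · exact Nat.even_iff.1 h
        · exact absurd h ho
      obtain ⟨s, hs⟩ : ∃ s, n = 2 * s + 4 := ⟨(n - 4) / 2, by omega⟩
      have hempty : ∀ p ∈ (∅ : Finset (Fin n)), ∀ q ∈ (∅ : Finset (Fin n)),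
          ¬((p ∈ A ∧ q ∈ B) ∨ (q ∈ A ∧ p ∈ B)) := by
        intro p hp
        exact absurd hp (Finset.notMem_empty p)
      have hempty3 : ∀ p ∈ (∅ : Finset (Fin n)), ∀ u,
          ((p ∈ A ∧ u ∈ B) ∨ (u ∈ A ∧ p ∈ B)) →
          ((p ∈ A ∧ u ∈ B) ∨ (u ∈ A ∧ p ∈ B)) → False := by
        intro p hp
        exact absurd hp (Finset.notMem_empty p)
      have hgP : ∀ v ∈ (∅ : Finset (Fin n)), v ≠ x ∧ v ≠ y := by
        intro v hv
        exact absurd hv (Finset.notMem_empty v)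
      obtain ⟨H, h1, h2, h3, h4⟩ := build x y hxy A B A B ∅
        hgA hgB hgA hgB hgP hAB hAB hempty hempty hempty3
      refine ⟨H, h1, h2, h3, ?_⟩
      rw [h4, if_neg ho]
      have hAc2 : A.card = s + 1 := by omega
      have hBc2 : B.card = s + 1 := by omega
      have hprod1 : A.card * B.card = s * s + 2 * s + 1 := by rw [hAc2, hBc2]; ring
      have hn2 : n - 2 = 2 * s + 2 := by omega
      have e3 : (2 * s + 2) ^ 2 = 4 * (s * s) + 8 * s + 4 := by ring
      rw [hprod1, Finset.card_empty, hn2, e3]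
      omega
  · -- upper bound
    intro m hm
    obtain ⟨H, hu, hnc, hmat, rfl⟩ := hm
    have hub := upper_bound hn H hu hnc hmat
    have heq : (if Odd n then 2 * ((n - 2) ^ 2 / 4) + 1 else 2 * ((n - 2) ^ 2 / 4))
        = 2 * ((n - 2) ^ 2 / 4) + (if Odd n then 1 else 0) := by
      by_cases h : Odd n <;> simp [h]
    rw [heq]
    exact hub
end

section
/- For s ≥ 2, let G₁, …, Gₛ be graphs on [n] such that the family is 2-star edge-colored K₃-free. Then the sum of the numbers of edges of the Gᵢ is at most s·⌊n²/4⌋. -/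
open Finset

/-- The family `G` of graphs (colors) contains no `k`-star edge-colored `K_r`:
no `r` distinct vertices together with a symmetric coloring of the pairs such that
each pair is an edge in its color, exactly `k` colors are used, and each color
class forms a star. -/
def StarColoredCliqueFree (k r : ℕ) {n s : ℕ} (G : Fin s → SimpleGraph (Fin n)) : Prop :=
  ¬ ∃ (f : Fin r → Fin n) (c : Fin r → Fin r → Fin s),
      Function.Injective f ∧
      (∀ i j, c i j = c j i) ∧
      (∀ i j, i ≠ j → (G (c i j)).Adj (f i) (f j)) ∧
      ((Finset.univ.filter (fun p : Fin r × Fin r => p.1 ≠ p.2)).image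
        (fun p => c p.1 p.2)).card = k ∧
      (∀ a : Fin s, ∃ v : Fin r, ∀ i j, i ≠ j → c i j = a → i = v ∨ j = v)

/-!
For two colours `i ≠ j`, a 2-star edge-coloured triangle is a cherry `u v w` of one colour closed
by an edge `u w` of the other. Put `U = Gᵢ ⊔ Gⱼ` and `D = Gᵢ ⊓ Gⱼ`, so `|Gᵢ| + |Gⱼ| = |U| + |D|`;
the hypothesis says exactly that no edge of `D` lies in a triangle of `U`. For a `D`-edge `uv` the
`U`-neighbourhoods of `u` and `v` are then disjoint, so deleting `u` and `v` destroys at most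
`n - 1` edges of `U` and of `D`, which is `⌊n²/4⌋ - ⌊(n-2)²/4⌋`; when `D` is empty,
`|U| ≤ C(n, 2) ≤ 2⌊n²/4⌋`. Hence `|Gᵢ| + |Gⱼ| ≤ 2⌊n²/4⌋` for every pair of colours, and averaging
over the pairs gives the bound.
-/

lemma Nat.choose_two_le_two_mul_sq_div_four (n : ℕ) : n.choose 2 ≤ 2 * (n ^ 2 / 4) := by
  rw [Nat.choose_two_right]
  apply Nat.div_le_of_le_mul
  rcases le_or_gt n 2 with hn | hn
  · interval_cases n <;> norm_num
  · have : n * (n - 1) = n ^ 2 - n := by rw [Nat.mul_sub_one, sq]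
    omega

lemma Nat.add_two_sq_div_four (m : ℕ) : (m + 2) ^ 2 / 4 = m ^ 2 / 4 + (m + 1) := by
  rw [show (m + 2) ^ 2 = m ^ 2 + (m + 1) * 4 by ring, Nat.add_mul_div_right _ _ (by norm_num)]

theorem Fintype.sum_le_card_mul_of_pairwise_add_le {ι : Type*} [Fintype ι]
    (hι : 2 ≤ Fintype.card ι) (e : ι → ℕ) (B : ℕ) (h : Pairwise fun i j => e i + e j ≤ 2 * B) :
    ∑ i, e i ≤ Fintype.card ι * B := by
  classical
  obtain ⟨t, ht⟩ : ∃ t, Fintype.card ι = t + 2 := ⟨_, (Nat.sub_add_cancel hι).symm⟩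
  have hrow : ∀ i, ∑ j, (e i + e j) ≤ 2 * e i + (t + 1) * (2 * B) := fun i => by
    have hoff := sum_le_card_nsmul (univ.erase i) (fun j => e i + e j) (2 * B)
      fun j hj => h (ne_of_mem_erase hj).symm
    rw [card_erase_of_mem (mem_univ i), card_univ, ht, show t + 2 - 1 = t + 1 by omega,
      smul_eq_mul] at hoff
    rw [← add_sum_erase _ _ (mem_univ i)]
    omega
  have htot := sum_le_sum fun i (_ : i ∈ univ) => hrow i
  simp only [sum_add_distrib, sum_const, card_univ, ht, smul_eq_mul, ← mul_sum] at htot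
  rw [ht]
  refine Nat.le_of_mul_le_mul_left (?_ : (t + 1) * _ ≤ (t + 1) * _) (Nat.succ_pos t)
  nlinarith

namespace SimpleGraph

variable {V : Type*}

lemma deleteIncidenceSet_mono {G H : SimpleGraph V} (h : G ≤ H) (x : V) :
    G.deleteIncidenceSet x ≤ H.deleteIncidenceSet x := fun a b hab => by
  rw [deleteIncidenceSet_adj] at hab ⊢
  exact ⟨h hab.1, hab.2⟩

variable [DecidableEq V]

lemma support_deleteIncidenceSet_deleteIncidenceSet_subset (G : SimpleGraph V) {s : Finset V}
    (hs : G.support ⊆ s) (u v : V) :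
    ((G.deleteIncidenceSet u).deleteIncidenceSet v).support ⊆ ↑(s \ {u, v}) := fun x hx => by
  obtain ⟨hx', hxv⟩ := support_deleteIncidenceSet_subset _ v hx
  obtain ⟨hx'', hxu⟩ := support_deleteIncidenceSet_subset G u hx'
  exact mem_sdiff.mpr ⟨hs hx'', by simp_all⟩

variable [Fintype V]

lemma card_edgeFinset_deleteIncidenceSet_deleteIncidenceSet_add (G : SimpleGraph V)
    [DecidableRel G.Adj] {u v : V} (huv : G.Adj u v) :
    #((G.deleteIncidenceSet u).deleteIncidenceSet v).edgeFinset + (G.degree u + G.degree v) =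
      #G.edgeFinset + 1 := by
  have hinter : G.incidenceFinset u ∩ G.incidenceFinset v = {s(u, v)} := by
    rw [← coe_inj]
    push_cast
    exact G.incidenceSet_inter_incidenceSet_of_adj huv
  have hdel : ((G.deleteIncidenceSet u).deleteIncidenceSet v).edgeFinset =
      G.edgeFinset \ (G.incidenceFinset u ∪ G.incidenceFinset v) := by
    rw [edgeFinset_deleteIncidenceSet_eq_filter, edgeFinset_deleteIncidenceSet_eq_filter,
      filter_filter, incidenceFinset_eq_filter, incidenceFinset_eq_filter, ← filter_or,
      sdiff_eq_filter]
    exact filter_congr fun e he => by simp [he]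
  have hsub := union_subset (G.incidenceFinset_subset u) (G.incidenceFinset_subset v)
  rw [hdel, card_sdiff_of_subset hsub, ← card_incidenceFinset_eq_degree,
    ← card_incidenceFinset_eq_degree, ← card_union_add_card_inter, hinter, card_singleton]
  have := card_le_card hsub
  omega

lemma degree_add_degree_le (G : SimpleGraph V) [DecidableRel G.Adj] {s : Finset V}
    (hs : G.support ⊆ s) {u v : V} (h : ∀ w, G.Adj u w → ¬ G.Adj v w) :
    G.degree u + G.degree v ≤ #s := by
  have hsub : ∀ x, G.neighborFinset x ⊆ s := fun x w hw =>
    hs ⟨x, ((G.mem_neighborFinset x w).mp hw).symm⟩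
  rw [← card_neighborFinset_eq_degree, ← card_neighborFinset_eq_degree,
    ← card_union_of_disjoint]
  · exact card_le_card (union_subset (hsub u) (hsub v))
  · rw [Finset.disjoint_left]
    intro w hu hv
    exact h w ((G.mem_neighborFinset u w).mp hu) ((G.mem_neighborFinset v w).mp hv)

lemma card_edgeFinset_le_choose_two_of_support_subset (G : SimpleGraph V) [DecidableRel G.Adj]
    {s : Finset V} (hs : G.support ⊆ s) : #G.edgeFinset ≤ (#s).choose 2 := by
  rw [← card_edgeFinset_induce_of_support_subset hs]
  convert card_edgeFinset_le_card_choose_two (G := G.induce (s : Set V)) using 2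
  · simp
  · exact (Fintype.card_coe s).symm

theorem card_edgeFinset_add_card_edgeFinset_le_of_support_subset (U D : SimpleGraph V)
    [DecidableRel U.Adj] [DecidableRel D.Adj] (hDU : D ≤ U)
    (hD : ∀ u v w, D.Adj u v → U.Adj u w → ¬ U.Adj v w) (s : Finset V) (hs : U.support ⊆ s) :
    #U.edgeFinset + #D.edgeFinset ≤ 2 * (#s ^ 2 / 4) := by
  induction s using Finset.strongInduction generalizing U D with
  | H s ih =>
  by_cases hD₀ : D = ⊥
  · rw [edgeFinset_eq_empty.mpr hD₀, card_empty, add_zero]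
    exact (U.card_edgeFinset_le_choose_two_of_support_subset hs).trans
      (Nat.choose_two_le_two_mul_sq_div_four _)
  obtain ⟨u, v, huv⟩ : ∃ u v, D.Adj u v := by
    by_contra! h
    exact hD₀ (eq_bot_iff.mpr fun u v huv => h u v huv)
  have hsD : D.support ⊆ s := (support_mono hDU).trans hs
  have huvs : {u, v} ⊆ s :=
    insert_subset_iff.mpr ⟨hsD ⟨v, huv⟩, by simpa using hsD ⟨u, huv.symm⟩⟩
  have hcard : #s = #(s \ {u, v}) + 2 := by
    rw [card_sdiff_of_subset huvs, ← card_pair (D.ne_of_adj huv)]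
    have := card_le_card huvs
    omega
  have hUdeg : U.degree u + U.degree v ≤ #s :=
    U.degree_add_degree_le hs fun w huw hvw => hD u v w huv huw hvw
  have hDdeg : D.degree u + D.degree v ≤ #s :=
    D.degree_add_degree_le hsD fun w huw hvw => hD u v w huv (hDU huw) (hDU hvw)
  set U' := (U.deleteIncidenceSet u).deleteIncidenceSet v
  set D' := (D.deleteIncidenceSet u).deleteIncidenceSet v
  have hU'U : U' ≤ U := (deleteIncidenceSet_le _ v).trans (deleteIncidenceSet_le U u)
  have hD'D : D' ≤ D := (deleteIncidenceSet_le _ v).trans (deleteIncidenceSet_le D u)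
  have hrest := ih (s \ {u, v}) (sdiff_ssubset huvs (insert_nonempty u {v})) U' D'
    (deleteIncidenceSet_mono (deleteIncidenceSet_mono hDU u) v)
    (fun a b c hab hac hbc => hD a b c (hD'D hab) (hU'U hac) (hU'U hbc))
    (U.support_deleteIncidenceSet_deleteIncidenceSet_subset hs u v)
  have hU : #U'.edgeFinset + (U.degree u + U.degree v) = #U.edgeFinset + 1 :=
    U.card_edgeFinset_deleteIncidenceSet_deleteIncidenceSet_add (hDU huv)
  have hD' : #D'.edgeFinset + (D.degree u + D.degree v) = #D.edgeFinset + 1 :=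
    D.card_edgeFinset_deleteIncidenceSet_deleteIncidenceSet_add huv
  rw [hcard, Nat.add_two_sq_div_four]
  omega

theorem card_edgeFinset_add_card_edgeFinset_le (A B : SimpleGraph V)
    [DecidableRel A.Adj] [DecidableRel B.Adj]
    (hAB : ∀ u v w, A.Adj u v → A.Adj v w → ¬ B.Adj u w)
    (hBA : ∀ u v w, B.Adj u v → B.Adj v w → ¬ A.Adj u w) :
    #A.edgeFinset + #B.edgeFinset ≤ 2 * (Fintype.card V ^ 2 / 4) := by
  have hcommon : ∀ u v w, (A ⊓ B).Adj u v → (A ⊔ B).Adj u w → ¬ (A ⊔ B).Adj v w := by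
    rintro u v w ⟨hA, hB⟩ (huw | huw) (hvw | hvw)
    · exact hAB u w v huw hvw.symm hB
    · exact hAB v u w hA.symm huw hvw
    · exact hBA v u w hB.symm huw hvw
    · exact hBA u w v huw hvw.symm hA
  have := card_edgeFinset_add_card_edgeFinset_le_of_support_subset (A ⊔ B) (A ⊓ B) inf_le_sup
    hcommon univ (by simp)
  simpa only [edgeFinset_sup, edgeFinset_inf, card_union_add_card_inter, card_univ] using this

end SimpleGraph

theorem StarColoredCliqueFree.not_adj_of_adj_of_adj {n s : ℕ} {G : Fin s → SimpleGraph (Fin n)}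
    (hfree : StarColoredCliqueFree 2 3 G) {i j : Fin s} (hij : i ≠ j) {u v w : Fin n}
    (huv : (G i).Adj u v) (hvw : (G i).Adj v w) : ¬ (G j).Adj u w := by
  intro huw
  have hu := (G i).ne_of_adj huv
  have hv := (G i).ne_of_adj hvw
  have hw := (G j).ne_of_adj huw
  refine hfree ⟨![u, v, w], ![![i, i, j], ![i, i, i], ![j, i, i]], ?_, ?_, ?_, ?_, ?_⟩
  · intro a b hab
    fin_cases a <;> fin_cases b <;> simp_all [eq_comm]
  · intro a b
    fin_cases a <;> fin_cases b <;> rfl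
  · intro a b hab
    fin_cases a <;> fin_cases b <;> simp_all [SimpleGraph.adj_comm]
  · rw [show univ.filter (fun p : Fin 3 × Fin 3 => p.1 ≠ p.2) =
      {(0, 1), (0, 2), (1, 0), (1, 2), (2, 0), (2, 1)} by decide]
    simp [card_pair hij.symm]
  · -- colour `j` is a star centred at vertex `0`, colour `i` one centred at vertex `1`
    intro a
    refine ⟨if a = j then 0 else 1, fun p q hpq hc => ?_⟩
    fin_cases p <;> fin_cases q <;> simp_all

theorem stmt_16 {n s : ℕ} (hs : 2 ≤ s)
    (G : Fin s → SimpleGraph (Fin n)) [∀ i, DecidableRel (G i).Adj]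
    (hfree : StarColoredCliqueFree 2 3 G) :
    ∑ i, (G i).edgeFinset.card ≤ s * (n ^ 2 / 4) := by
  have hpair : Pairwise fun i j => #(G i).edgeFinset + #(G j).edgeFinset ≤ 2 * (n ^ 2 / 4) :=
    fun i j hij => by
      simpa using SimpleGraph.card_edgeFinset_add_card_edgeFinset_le (G i) (G j)
        (fun _ _ _ => hfree.not_adj_of_adj_of_adj hij)
        (fun _ _ _ => hfree.not_adj_of_adj_of_adj hij.symm)
  simpa using Fintype.sum_le_card_mul_of_pairwise_add_le (by simpa using hs) _ _ hpair
end

section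
/- For every t ≥ 3 and s ≥ 3, let J_t⁺ be the 3-graph obtained from the full star J_t by adding one edge whose three vertices lie among the t non-center vertices. Then q(J_t⁺) = ∞, and the maximum number of edges of an n-vertex 3-graph that is J_t⁺-free with matching number at most s is strictly greater than s·C(n−s,2), namely at least s·C(n−s,2) + ex(s, J_t⁺). -/
open Finset

/-- Edge set of the full star `J_t` on `Fin (t+1)` with center `0`. -/
def JtEdges (t : ℕ) : Set (Finset (Fin (t + 1))) :=
  { e | ∃ i j : Fin (t + 1), i ≠ 0 ∧ j ≠ 0 ∧ i ≠ j ∧ e = {0, i, j} }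

/-- Edge set of `J_t⁺`: the full star `J_t` plus one edge `{1,2,3}` among the
non-center vertices. -/
def JtPlusEdges (t : ℕ) : Set (Finset (Fin (t + 1))) :=
  JtEdges t ∪ {({1, 2, 3} : Finset (Fin (t + 1)))}

/-- The Turán number `ex(m, J_t⁺)` for 3-graphs on `m` vertices. -/
noncomputable def exJtPlus (t m : ℕ) : ℕ :=
  sSup {k | ∃ H : Finset (Finset (Fin m)), Uniform3 H ∧
    ¬ HasCopy (JtPlusEdges t) H ∧ H.card = k}


lemma val1' {m : ℕ} [NeZero m] (h : 1 < m) : ((1:Fin m):ℕ) = 1 := by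
  rw [Fin.val_one', Nat.mod_eq_of_lt h]
lemma val2' {m : ℕ} [NeZero m] (h : 2 < m) : ((2:Fin m):ℕ) = 2 := by
  simp [OfNat.ofNat, Fin.val_ofNat, Nat.mod_eq_of_lt h]
lemma val3' {m : ℕ} [NeZero m] (h : 3 < m) : ((3:Fin m):ℕ) = 3 := by
  simp [OfNat.ofNat, Fin.val_ofNat, Nat.mod_eq_of_lt h]

lemma fin_distinct {m : ℕ} [NeZero m] (hm : 4 ≤ m) :
    (1:Fin m) ≠ 0 ∧ (2:Fin m) ≠ 0 ∧ (3:Fin m) ≠ 0 ∧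
    (1:Fin m) ≠ 2 ∧ (1:Fin m) ≠ 3 ∧ (2:Fin m) ≠ 3 := by
  have v1 := val1' (m := m) (by omega)
  have v2 := val2' (m := m) (by omega)
  have v3 := val3' (m := m) (by omega)
  refine ⟨fun h => ?_, fun h => ?_, fun h => ?_, fun h => ?_, fun h => ?_, fun h => ?_⟩ <;>
    · rw [Fin.ext_iff] at h
      simp only [v1, v2, v3, Fin.val_zero] at h
      omega

lemma filter_one {α : Type*} [DecidableEq α] (e : Finset α) (p : α → Prop) [DecidablePred p]
    (h : (e.filter p).card = 1) :
    (∃ x ∈ e, p x) ∧ ∀ x ∈ e, ∀ y ∈ e, x ≠ y → p x → p y → False := by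
  constructor
  · obtain ⟨x, hx⟩ := card_pos.mp (h ▸ one_pos)
    exact ⟨x, (mem_filter.mp hx).1, (mem_filter.mp hx).2⟩
  · intro x hx y hy hxy px py
    have hsub : ({x, y} : Finset α) ⊆ e.filter p := by
      intro z hz
      simp only [mem_insert, mem_singleton] at hz
      rcases hz with rfl|rfl <;> exact mem_filter.mpr ⟨‹_›, ‹_›⟩
    have := card_le_card hsub
    rw [h, card_insert_of_notMem (by simp [hxy]), card_singleton] at this
    omega

lemma star_mem {t : ℕ} {i j : Fin (t+1)} (hi : i ≠ 0) (hj : j ≠ 0) (hij : i ≠ j) :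
    ({0, i, j} : Finset (Fin (t+1))) ∈ JtPlusEdges t := Or.inl ⟨i, j, hi, hj, hij, rfl⟩

lemma extra_mem {t : ℕ} : ({1,2,3} : Finset (Fin (t+1))) ∈ JtPlusEdges t := Or.inr rfl

lemma part1 (t : ℕ) (ht : 3 ≤ t) :
    ¬ ∃ R : Finset (Fin (t + 1)),
        ∀ e ∈ JtPlusEdges t, (e.filter (fun v => v ∈ R)).card = 1 := by
  obtain ⟨h10, h20, h30, h12, h13, h23⟩ := fin_distinct (m := t+1) (by omega)
  rintro ⟨R, hR⟩
  have e123 := filter_one _ _ (hR _ extra_mem)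
  have e12 := filter_one _ _ (hR _ (star_mem h10 h20 h12))
  have e13 := filter_one _ _ (hR _ (star_mem h10 h30 h13))
  have e23 := filter_one _ _ (hR _ (star_mem h20 h30 h23))
  by_cases hp0 : (0 : Fin (t+1)) ∈ R
  · have np1 : (1 : Fin (t+1)) ∉ R :=
      fun h1 => e12.2 0 (by simp) 1 (by simp) (Ne.symm h10) hp0 h1
    have np2 : (2 : Fin (t+1)) ∉ R :=
      fun h1 => e12.2 0 (by simp) 2 (by simp) (Ne.symm h20) hp0 h1
    have np3 : (3 : Fin (t+1)) ∉ R :=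
      fun h1 => e13.2 0 (by simp) 3 (by simp) (Ne.symm h30) hp0 h1
    obtain ⟨x, hx, hpx⟩ := e123.1
    simp only [mem_insert, mem_singleton] at hx
    rcases hx with rfl|rfl|rfl <;> tauto
  · have o12 : (1 : Fin (t+1)) ∈ R ∨ (2 : Fin (t+1)) ∈ R := by
      obtain ⟨x, hx, hpx⟩ := e12.1
      simp only [mem_insert, mem_singleton] at hx
      rcases hx with rfl|rfl|rfl <;> tauto
    have o13 : (1 : Fin (t+1)) ∈ R ∨ (3 : Fin (t+1)) ∈ R := by
      obtain ⟨x, hx, hpx⟩ := e13.1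
      simp only [mem_insert, mem_singleton] at hx
      rcases hx with rfl|rfl|rfl <;> tauto
    have o23 : (2 : Fin (t+1)) ∈ R ∨ (3 : Fin (t+1)) ∈ R := by
      obtain ⟨x, hx, hpx⟩ := e23.1
      simp only [mem_insert, mem_singleton] at hx
      rcases hx with rfl|rfl|rfl <;> tauto
    have n12 : ¬((1 : Fin (t+1)) ∈ R ∧ (2 : Fin (t+1)) ∈ R) :=
      fun ⟨a, b⟩ => e12.2 1 (by simp) 2 (by simp) h12 a b
    have n13 : ¬((1 : Fin (t+1)) ∈ R ∧ (3 : Fin (t+1)) ∈ R) :=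
      fun ⟨a, b⟩ => e13.2 1 (by simp) 3 (by simp) h13 a b
    have n23 : ¬((2 : Fin (t+1)) ∈ R ∧ (3 : Fin (t+1)) ∈ R) :=
      fun ⟨a, b⟩ => e23.2 2 (by simp) 3 (by simp) h23 a b
    rcases o12 with p1 | p2
    · rcases o23 with p2 | p3
      · exact n12 ⟨p1, p2⟩
      · exact n13 ⟨p1, p3⟩
    · rcases o13 with p1 | p3
      · exact n12 ⟨p1, p2⟩
      · exact n23 ⟨p2, p3⟩
lemma ex_spec (t s : ℕ) (ht : 3 ≤ t) (hs : 3 ≤ s) :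
    ∃ H₀ : Finset (Finset (Fin s)), Uniform3 H₀ ∧ ¬ HasCopy (JtPlusEdges t) H₀ ∧
      H₀.card = exJtPlus t s ∧ 1 ≤ exJtPlus t s := by
  haveI : NeZero s := ⟨by omega⟩
  obtain ⟨h10t, h20t, h30t, h12t, h13t, h23t⟩ := fin_distinct (m := t+1) (by omega)
  set S := {k | ∃ H : Finset (Finset (Fin s)), Uniform3 H ∧
    ¬ HasCopy (JtPlusEdges t) H ∧ H.card = k} with hS
  have hbdd : BddAbove S := by
    refine ⟨Fintype.card (Finset (Fin s)), ?_⟩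
    rintro k ⟨H, -, -, rfl⟩
    exact (card_le_univ H).trans_eq (card_univ)
  -- a single edge gives a J_t⁺-free 3-graph
  have v1 := val1' (m := s) (by omega)
  have v2 := val2' (m := s) (by omega)
  have ne01 : (0 : Fin s) ≠ 1 := by
    intro h; rw [Fin.ext_iff, Fin.val_zero, v1] at h; omega
  have ne02 : (0 : Fin s) ≠ 2 := by
    intro h; rw [Fin.ext_iff, Fin.val_zero, v2] at h; omega
  have ne12 : (1 : Fin s) ≠ 2 := by
    intro h; rw [Fin.ext_iff, v1, v2] at h; omega
  have h1S : 1 ∈ S := by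
    refine ⟨{({0,1,2} : Finset (Fin s))}, ?_, ?_, card_singleton _⟩
    · intro e he
      rw [mem_singleton] at he
      subst he
      rw [card_insert_of_notMem (by simp [ne01, ne02]),
        card_insert_of_notMem (by simp [ne12]), card_singleton]
    · rintro ⟨f, hinj, hf⟩
      have h1 := hf _ (star_mem h10t h20t h12t)
      have h2 := hf _ (star_mem h10t h30t h13t)
      rw [mem_singleton] at h1 h2
      have h3mem : f 3 ∈ ({0,1,3} : Finset (Fin (t+1))).image f :=
        mem_image_of_mem f (by simp)
      rw [h2, ← h1] at h3mem
      obtain ⟨a, ha, hfa⟩ := mem_image.mp h3mem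
      have := hinj hfa
      subst this
      simp only [mem_insert, mem_singleton] at ha
      rcases ha with h|h|h
      · exact h30t h
      · exact h13t h.symm
      · exact h23t h.symm
  have hmem := Nat.sSup_mem ⟨1, h1S⟩ hbdd
  obtain ⟨H₀, hU, hNC, hcard⟩ := hmem
  exact ⟨H₀, hU, hNC, hcard, le_csSup hbdd h1S⟩
lemma construction (t s n : ℕ) (ht : 3 ≤ t) (hs : 3 ≤ s) (hn : s ≤ n) :
    ∃ H : Finset (Finset (Fin n)), Uniform3 H ∧ ¬ HasCopy (JtPlusEdges t) H ∧
      MatchingAtMost H s ∧ s * (n - s).choose 2 + exJtPlus t s ≤ H.card ∧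
      s * (n - s).choose 2 < H.card := by
  obtain ⟨H₀, hU₀, hNC₀, hcard₀, hex1⟩ := ex_spec t s ht hs
  obtain ⟨h10t, h20t, h30t, h12t, h13t, h23t⟩ := fin_distinct (m := t+1) (by omega)
  set ι : Fin s → Fin n := Fin.castLE hn with hιdef
  have hι : Function.Injective ι := Fin.castLE_injective hn
  set A : Finset (Fin n) := univ.filter (fun v => (v:ℕ) < s) with hAdef
  set B : Finset (Fin n) := univ.filter (fun v => ¬ (v:ℕ) < s) with hBdef
  have hmemA : ∀ v : Fin n, v ∈ A ↔ (v:ℕ) < s := by intro v; simp [hAdef]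
  have hmemB : ∀ v : Fin n, v ∈ B ↔ ¬ (v:ℕ) < s := by intro v; simp [hBdef]
  have hAcard : A.card = s := by
    have hAimg : A = image ι univ := by
      ext v
      rw [hmemA, mem_image]
      constructor
      · intro hv
        exact ⟨⟨(v:ℕ), hv⟩, mem_univ _, by apply Fin.ext; simp [hιdef]⟩
      · rintro ⟨w, -, rfl⟩
        simp [hιdef]
    rw [hAimg, card_image_of_injective _ hι, card_univ, Fintype.card_fin]
  have hBcard : B.card = n - s := by
    have hBA : B = univ \ A := by rw [hBdef, hAdef, filter_not]
    rw [hBA, card_sdiff_of_subset (subset_univ A), card_univ, Fintype.card_fin, hAcard]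
  set H₂ : Finset (Finset (Fin n)) := H₀.image (fun e => e.image ι) with hH₂def
  set H₁ : Finset (Finset (Fin n)) :=
    (A ×ˢ B.powersetCard 2).image (fun q => insert q.1 q.2) with hH₁def
  -- membership characterization of H₁
  have memH₁ : ∀ e ∈ H₁, ∃ a p, a ∈ A ∧ p ⊆ B ∧ p.card = 2 ∧ e = insert a p := by
    intro e he
    rw [hH₁def, mem_image] at he
    obtain ⟨⟨a, p⟩, hq, rfl⟩ := he
    rw [mem_product] at hq
    obtain ⟨hp1, hp2⟩ := mem_powersetCard.mp hq.2
    exact ⟨a, p, hq.1, hp1, hp2, rfl⟩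
  -- properties of H₁ edges
  have H₁props : ∀ e ∈ H₁, (∃ x ∈ e, (x:ℕ) < s) ∧
      (∀ x ∈ e, ∀ y ∈ e, x ≠ y → (x:ℕ) < s → (y:ℕ) < s → False) ∧ e.card = 3 := by
    intro e he
    obtain ⟨a, p, haA, hpB, hp2, rfl⟩ := memH₁ e he
    have haS : (a:ℕ) < s := (hmemA a).mp haA
    have hpS : ∀ x ∈ p, ¬ (x:ℕ) < s := fun x hx => (hmemB x).mp (hpB hx)
    have hanp : a ∉ p := fun h => hpS a h haS
    refine ⟨⟨a, mem_insert_self _ _, haS⟩, ?_, ?_⟩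
    · intro x hx y hy hxy hxs hys
      rw [mem_insert] at hx hy
      rcases hx with rfl | hx
      · rcases hy with rfl | hy
        · exact hxy rfl
        · exact hpS y hy hys
      · exact hpS x hx hxs
    · rw [card_insert_of_notMem hanp, hp2]
  -- properties of H₂ edges
  have H₂props : ∀ e ∈ H₂, (∀ x ∈ e, (x:ℕ) < s) ∧ e.card = 3 := by
    intro e he
    rw [hH₂def, mem_image] at he
    obtain ⟨e₀, he₀, rfl⟩ := he
    constructor
    · intro x hx
      obtain ⟨w, -, rfl⟩ := mem_image.mp hx
      simp [hιdef]
    · rw [card_image_of_injective _ hι, hU₀ e₀ he₀]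
  have hdisj : Disjoint H₁ H₂ := by
    rw [disjoint_left]
    intro e h1 h2
    obtain ⟨a, p, haA, hpB, hp2, rfl⟩ := memH₁ e h1
    obtain ⟨b, hb⟩ := card_pos.mp (by omega : 0 < p.card)
    have hbs := (H₂props _ h2).1 b (mem_insert_of_mem hb)
    exact (hmemB b).mp (hpB hb) hbs
  have hH₁card : H₁.card = s * (n - s).choose 2 := by
    rw [hH₁def, card_image_of_injOn, card_product, hAcard, card_powersetCard, hBcard]
    rintro ⟨a, p⟩ hq ⟨a', p'⟩ hq' heq
    simp only [coe_product, Set.mem_prod, mem_coe, mem_product] at hq hq'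
    obtain ⟨hp1, hp2⟩ := mem_powersetCard.mp hq.2
    obtain ⟨hp1', hp2'⟩ := mem_powersetCard.mp hq'.2
    have haS : (a:ℕ) < s := (hmemA a).mp hq.1
    have haS' : (a':ℕ) < s := (hmemA a').mp hq'.1
    have hpS : ∀ x ∈ p, ¬ (x:ℕ) < s := fun x hx => (hmemB x).mp (hp1 hx)
    have hpS' : ∀ x ∈ p', ¬ (x:ℕ) < s := fun x hx => (hmemB x).mp (hp1' hx)
    simp only at heq
    have haa : a = a' := by
      have : a ∈ insert a' p' := heq ▸ mem_insert_self a p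
      rcases mem_insert.mp this with h | h
      · exact h
      · exact absurd haS (hpS' a h)
    subst haa
    have hpp : p = p' := by
      ext x
      constructor
      · intro hx
        have : x ∈ insert a p' := heq ▸ mem_insert_of_mem hx
        rcases mem_insert.mp this with rfl | h
        · exact absurd haS (hpS x hx)
        · exact h
      · intro hx
        have : x ∈ insert a p := heq ▸ mem_insert_of_mem hx
        rcases mem_insert.mp this with rfl | h
        · exact absurd haS (hpS' x hx)
        · exact h
    rw [hpp]
  have hH₂card : H₂.card = exJtPlus t s := by
    rw [hH₂def, card_image_of_injective _ (Finset.image_injective hι), hcard₀]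
  refine ⟨H₁ ∪ H₂, ?_, ?_, ?_, ?_, ?_⟩
  · -- Uniform3
    intro e he
    rcases mem_union.mp he with h | h
    · exact (H₁props e h).2.2
    · exact (H₂props e h).2
  · -- no copy
    rintro ⟨f, hinj, hf⟩
    -- every edge: all-in-A or exactly-one-in-A (pair property)
    have hEdge : ∀ e ∈ H₁ ∪ H₂, (∀ x ∈ e, (x:ℕ) < s) ∨
        ((∃ x ∈ e, (x:ℕ) < s) ∧
          ∀ x ∈ e, ∀ y ∈ e, x ≠ y → (x:ℕ) < s → (y:ℕ) < s → False) := by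
      intro e he
      rcases mem_union.mp he with h | h
      · exact Or.inr ⟨(H₁props e h).1, (H₁props e h).2.1⟩
      · exact Or.inl (H₂props e h).1
    have hP0 : ((f 0 : Fin n) : ℕ) < s := by
      by_contra hP0
      have pairC : ∀ i j : Fin (t+1), i ≠ 0 → j ≠ 0 → i ≠ j →
          (((f i : Fin n) : ℕ) < s ∨ ((f j : Fin n) : ℕ) < s) ∧
          ¬(((f i : Fin n) : ℕ) < s ∧ ((f j : Fin n) : ℕ) < s) := by
        intro i j hi hj hij
        have hm := hf _ (star_mem hi hj hij)
        have hc := (hEdge _ hm).resolve_left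
          (fun h => hP0 (h _ (mem_image_of_mem f (by simp))))
        constructor
        · obtain ⟨x, hx, hxs⟩ := hc.1
          obtain ⟨a, ha, rfl⟩ := mem_image.mp hx
          simp only [mem_insert, mem_singleton] at ha
          rcases ha with rfl | rfl | rfl
          · exact absurd hxs hP0
          · exact Or.inl hxs
          · exact Or.inr hxs
        · rintro ⟨hi', hj'⟩
          exact hc.2 (f i) (mem_image_of_mem f (by simp)) (f j)
            (mem_image_of_mem f (by simp)) (fun h => hij (hinj h)) hi' hj'
      obtain ⟨o12, n12⟩ := pairC 1 2 h10t h20t h12t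
      obtain ⟨o13, n13⟩ := pairC 1 3 h10t h30t h13t
      obtain ⟨o23, n23⟩ := pairC 2 3 h20t h30t h23t
      rcases o12 with p1 | p2
      · rcases o23 with p2 | p3
        · exact n12 ⟨p1, p2⟩
        · exact n13 ⟨p1, p3⟩
      · rcases o13 with p1 | p3
        · exact n12 ⟨p1, p2⟩
        · exact n23 ⟨p2, p3⟩
    have hPall : ∀ i : Fin (t+1), ((f i : Fin n) : ℕ) < s := by
      by_contra hC
      push_neg at hC
      obtain ⟨i, hPi0⟩ := hC
      have hPi : ¬ ((f i : Fin n) : ℕ) < s := not_lt.mpr hPi0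
      have hi0 : i ≠ 0 := fun h => hPi (h ▸ hP0)
      have hall : ∀ j : Fin (t+1), j ≠ 0 → j ≠ i → ¬ ((f j : Fin n) : ℕ) < s := by
        intro j hj0 hji Pj
        have hm := hf _ (star_mem hi0 hj0 (Ne.symm hji))
        have hc := (hEdge _ hm).resolve_left
          (fun h => hPi (h _ (mem_image_of_mem f (by simp))))
        exact hc.2 (f 0) (mem_image_of_mem f (by simp)) (f j)
          (mem_image_of_mem f (by simp)) (fun h => hj0 (hinj h).symm) hP0 Pj
      have hm := hf _ (extra_mem (t := t))
      rcases hEdge _ hm with hAll | hOne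
      · obtain ⟨j, hj0, hji, hjm⟩ : ∃ j : Fin (t+1), j ≠ 0 ∧ j ≠ i ∧
            j ∈ ({1,2,3} : Finset (Fin (t+1))) := by
          by_cases h1 : i = 1
          · exact ⟨2, h20t, by rw [h1]; exact fun h => h12t h.symm, by simp⟩
          · exact ⟨1, h10t, fun h => h1 h.symm, by simp⟩
        exact hall j hj0 hji (hAll _ (mem_image_of_mem f hjm))
      · obtain ⟨x, hx, hxs⟩ := hOne.1
        obtain ⟨a, ha, rfl⟩ := mem_image.mp hx
        by_cases hai : a = i
        · exact hPi (hai ▸ hxs)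
        · simp only [mem_insert, mem_singleton] at ha
          have ha0 : a ≠ 0 := by rcases ha with rfl|rfl|rfl <;> assumption
          exact hall a ha0 hai hxs
    -- build a copy inside H₀
    set g : Fin (t+1) → Fin s := fun i => ⟨((f i : Fin n) : ℕ), hPall i⟩ with hgdef
    have hginj : Function.Injective g := by
      intro i j h
      apply hinj
      apply Fin.ext
      simpa [hgdef, Fin.ext_iff] using h
    have hιg : ι ∘ g = f := by
      funext i
      apply Fin.ext
      simp [hιdef, hgdef]
    apply hNC₀
    refine ⟨g, hginj, ?_⟩
    intro e he
    have hHe := hf e he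
    have hmem2 : e.image f ∈ H₂ := by
      rcases mem_union.mp hHe with h1 | h2
      · exfalso
        obtain ⟨x, y, hx, hy, hxy⟩ : ∃ x y : Fin (t+1), x ∈ e ∧ y ∈ e ∧ x ≠ y := by
          rcases he with ⟨i, j, hi, hj, hij, rfl⟩ | he'
          · exact ⟨0, i, by simp, by simp, Ne.symm hi⟩
          · rw [Set.mem_singleton_iff] at he'
            subst he'
            exact ⟨1, 2, by simp, by simp, h12t⟩
        exact (H₁props _ h1).2.1 (f x) (mem_image_of_mem f hx) (f y)
          (mem_image_of_mem f hy) (fun h => hxy (hinj h)) (hPall x) (hPall y)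
      · exact h2
    rw [hH₂def, mem_image] at hmem2
    obtain ⟨e₀, he₀, heq⟩ := hmem2
    have himg : (e.image g).image ι = e₀.image ι := by
      rw [Finset.image_image, hιg, ← heq]
    rwa [Finset.image_injective hι himg]
  · -- matching number
    intro M hM hpw
    have hne : ∀ e ∈ M, (e.filter (fun v : Fin n => (v:ℕ) < s)).Nonempty := by
      intro e he
      rcases mem_union.mp (hM he) with h | h
      · obtain ⟨x, hx, hxs⟩ := (H₁props e h).1
        exact ⟨x, mem_filter.mpr ⟨hx, hxs⟩⟩
      · obtain ⟨x, hx⟩ := card_pos.mp (by rw [(H₂props e h).2]; omega)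
        exact ⟨x, mem_filter.mpr ⟨hx, (H₂props e h).1 x hx⟩⟩
    calc M.card ≤ (A.image ((↑) : Fin n → WithTop (Fin n))).card := by
          apply card_le_card_of_injOn
            (fun e : Finset (Fin n) => (e.filter (fun v : Fin n => (v:ℕ) < s)).min)
          · intro e he
            have h := hne e he
            beta_reduce
            rw [← Finset.coe_min' h]
            exact mem_image_of_mem _ (mem_filter.mpr
              ⟨mem_univ _, (mem_filter.mp (Finset.min'_mem _ h)).2⟩)
          · intro e he e' he' heq
            have h := hne e (mem_coe.mp he)
            have h' := hne e' (mem_coe.mp he')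
            simp only at heq
            rw [← Finset.coe_min' h, ← Finset.coe_min' h'] at heq
            have hmm := WithTop.coe_injective heq
            by_contra hee
            have hd := hpw he he' hee
            have hm1 := (mem_filter.mp (Finset.min'_mem _ h)).1
            have hm2 := (mem_filter.mp (Finset.min'_mem _ h')).1
            rw [← hmm] at hm2
            exact (disjoint_left.mp hd hm1) hm2
      _ = s := by rw [card_image_of_injective _ WithTop.coe_injective, hAcard]
  · rw [card_union_of_disjoint hdisj, hH₁card, hH₂card]
  · rw [card_union_of_disjoint hdisj, hH₁card, hH₂card]
    omega

theorem stmt_17 (t s : ℕ) (ht : 3 ≤ t) (hs : 3 ≤ s) :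
    (¬ ∃ R : Finset (Fin (t + 1)),
        ∀ e ∈ JtPlusEdges t, (e.filter (fun v => v ∈ R)).card = 1) ∧
    ∀ n : ℕ, s ≤ n →
      ∃ H : Finset (Finset (Fin n)), Uniform3 H ∧ ¬ HasCopy (JtPlusEdges t) H ∧
        MatchingAtMost H s ∧ s * (n - s).choose 2 + exJtPlus t s ≤ H.card ∧
        s * (n - s).choose 2 < H.card :=
  ⟨part1 t ht, fun n hn => construction t s n ht hs hn⟩
end

section
/- Let H be an n-vertex F_{3,2}-free 3-graph with matching number at most s and at least s·C(n−s,2) edges, where n ≥ 12s². Let A = {v : d_H(v) ≥ 3sn+1}. Then |A| = s and both A and its complement B are weakly independent sets (every edge of H has exactly one vertex in A). -/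
open Finset

/-- Edge set of the 3-graph `F_{3,2}` on `{1,…,5}` (as `Fin 5`):
edges `123, 145, 245, 345`. -/
def F32Edges : Set (Finset (Fin 5)) :=
  {({0, 1, 2} : Finset (Fin 5)), {0, 3, 4}, {1, 3, 4}, {2, 3, 4}}

set_option maxHeartbeats 1000000
section auxiliary

lemma int_3A (N S : ℤ) (hS : 2 ≤ S) (hN : 12*S^2 ≤ N) :
    3*(S*(S-1)*(N-S)) + 3*(S*(S-1)*S) < (N-S)*(N-S-1) := by
  nlinarith [sq_nonneg (N - 6*S*S), sq_nonneg S, mul_nonneg (by nlinarith : (0:ℤ) ≤ S*(S-1)) (by nlinarith : (0:ℤ) ≤ N - 12*S^2)]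

lemma nat_3A (n s : ℕ) (hs2 : 2 ≤ s) (hn : 12*s^2 ≤ n) :
    3 * (s * (s-1) * (n-s)) + 3 * (s * (s-1) * s) < (n-s) * (n-s-1) := by
  have hsn : s ≤ n := by nlinarith
  have hs1n : s + 1 ≤ n := by nlinarith
  have h1 : (2:ℤ) ≤ (s:ℤ) := by exact_mod_cast hs2
  have h2 : 12 * (s:ℤ)^2 ≤ (n:ℤ) := by exact_mod_cast hn
  have h3 := int_3A n s h1 h2
  zify [show 1 ≤ s by omega, hsn, show (1:ℕ) ≤ n - s by omega]
  push_cast [hsn]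
  nlinarith [h3]

lemma int_2A (N S : ℤ) (hS : 2 ≤ S) (hN : 12*S^2 ≤ N)
    (h : (N-2*S-1)^2 ≤ S*(S-1)*(N-S)) : False := by
  nlinarith [sq_nonneg (N-2*S-1), mul_nonneg (by nlinarith : (0:ℤ) ≤ S*(S-1)) (by nlinarith : (0:ℤ) ≤ N - 12*S^2), sq_nonneg S, sq_nonneg (S-2)]

lemma nat_2A (n s : ℕ) (hs2 : 2 ≤ s) (hn : 12*s^2 ≤ n)
    (h : (n - 2*s - 1) * (n - 2*s - 1) ≤ s * (s-1) * (n-s)) : False := by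
  have hsn : 2*s + 1 ≤ n := by nlinarith
  apply int_2A n s (by exact_mod_cast hs2) (by exact_mod_cast hn)
  have h' : ((n - 2*s - 1 : ℕ) : ℤ) * ((n - 2*s - 1 : ℕ) : ℤ) ≤ ((s * (s-1) * (n-s) : ℕ) : ℤ) := by
    exact_mod_cast h
  push_cast [show 2*s ≤ n by omega, show 1 ≤ n - 2*s by omega, show 1 ≤ s by omega,
    show s ≤ n by omega] at h'
  nlinarith [h']

lemma two_mul_choose_two (m : ℕ) : 2 * m.choose 2 = m * (m - 1) := by
  rw [Nat.choose_two_right]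
  exact Nat.two_mul_div_two_of_even (Nat.even_mul_pred_self m)

lemma int_main (N S T : ℤ) (hS : 2 ≤ S) (hT0 : 0 ≤ T) (hTS : T ≤ S - 1) (hN : 12*S^2 ≤ N) :
    18*(S-T)*S*N + T*(N-T)*(N-T-1) + T*(T-1)*(N-T) + T*(T-1)*T < S*(N-S)*(N-S-1) := by
  have key1 : T*(T-1)*N ≤ (S-1)*(S-2)*((S-T)*N) := by
    have h1 : T*(T-1) ≤ (S-1)*(S-2) := by nlinarith [mul_nonneg hT0 (by linarith : (0:ℤ) ≤ S - 2)]
    have h2 : (1:ℤ) ≤ S - T := by linarith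
    have hN0 : (0:ℤ) ≤ N := by nlinarith
    nlinarith [mul_nonneg (mul_nonneg (by linarith : (0:ℤ) ≤ S-1) (by linarith : (0:ℤ) ≤ S-2)) (mul_nonneg (by linarith : (0:ℤ) ≤ S-T-1) hN0), mul_le_mul_of_nonneg_right h1 hN0]
  have key2 : S*(N-S)*(N-S-1) - T*(N-T)*(N-T-1) = (S-T)*(N^2 - 2*N*(S+T) - N + (S^2+S*T+T^2) + S + T) := by ring
  have hN0 : (0:ℤ) ≤ N := by nlinarith
  have key4 : (S-T)*(N^2 - 2*N*(S+T) - N + (S^2+S*T+T^2) + S + T)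
      > 18*(S-T)*S*N + (S-1)*(S-2)*((S-T)*N) := by
    have h2 : (1:ℤ) ≤ S - T := by linarith
    have hbig : N^2 - 2*N*(S+T) - N - 18*S*N - (S-1)*(S-2)*N + (S^2+S*T+T^2) + S + T > 0 := by
      have h3 : N*(N - (S^2 + 19*S + 1)) ≥ 0 := by
        have : (12:ℤ)*S^2 ≥ S^2 + 19*S + 1 := by nlinarith
        apply mul_nonneg hN0; linarith
      nlinarith [mul_nonneg hT0 hN0, mul_nonneg (mul_nonneg hT0 hT0) (by norm_num : (0:ℤ) ≤ 1)]
    nlinarith [mul_pos (by linarith : (0:ℤ) < S - T) hbig]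
  linarith [key1, key4, key2.ge, key2.le]

lemma nat_main (n s t : ℕ) (hs2 : 2 ≤ s) (hts : t < s) (hn : 12*s^2 ≤ n) :
    9*(s-t)*s*n + t * (n-t).choose 2 + t.choose 2 * (n-t) + t.choose 2 * t
      < s * (n-s).choose 2 := by
  have hsn : s ≤ n := by nlinarith
  have hs1n : s + 1 ≤ n := by nlinarith
  have htn : t + 1 ≤ n := by omega
  have h2a := two_mul_choose_two (n - t)
  have h2b := two_mul_choose_two t
  have h2c := two_mul_choose_two (n - s)
  have hdouble : 18*(s-t)*s*n + t * ((n-t) * (n-t-1)) + (t*(t-1)) * (n-t) + (t*(t-1)) * t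
      < s * ((n-s) * (n-s-1)) := by
    have h1 : (2:ℤ) ≤ (s:ℤ) := by exact_mod_cast hs2
    have h2 : 12 * (s:ℤ)^2 ≤ (n:ℤ) := by exact_mod_cast hn
    have h3 := int_main n s t h1 (by positivity) (by
      have : (t:ℤ) + 1 ≤ (s:ℤ) := by exact_mod_cast hts
      linarith) h2
    rcases Nat.eq_zero_or_pos t with rfl | ht1
    · push_cast at h3
      simp only [Nat.sub_zero, Nat.zero_mul, Nat.mul_zero, zero_mul, mul_zero, add_zero]
      zify [hsn, hs1n, show 1 ≤ n - s by omega]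
      push_cast
      nlinarith [h3]
    · zify [hsn, hs1n, show 1 ≤ n - s by omega, show t ≤ s from le_of_lt hts,
        show t ≤ n by omega, show 1 ≤ n - t by omega, ht1]
      push_cast
      nlinarith [h3]
  have hfin : 2 * (9*(s-t)*s*n + t * (n-t).choose 2 + t.choose 2 * (n-t) + t.choose 2 * t)
      < 2 * (s * (n-s).choose 2) := by
    calc 2 * (9*(s-t)*s*n + t * (n-t).choose 2 + t.choose 2 * (n-t) + t.choose 2 * t)
        = 18*(s-t)*s*n + t * (2*(n-t).choose 2) + (2*t.choose 2) * (n-t) + (2*t.choose 2) * t := by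
          ring
      _ = 18*(s-t)*s*n + t * ((n-t) * (n-t-1)) + (t*(t-1)) * (n-t) + (t*(t-1)) * t := by
          rw [h2a, h2b]
      _ < s * ((n-s) * (n-s-1)) := hdouble
      _ = s * (2 * (n-s).choose 2) := by rw [h2c]
      _ = 2 * (s * (n-s).choose 2) := by ring
  omega

lemma choose3_le (t : ℕ) : t.choose 3 ≤ t.choose 2 * t := by
  have h := Nat.choose_succ_right_eq t 2
  have h2 : t - 2 ≤ t := Nat.sub_le _ _
  have h3 : t.choose 3 * 3 ≤ t.choose 2 * t := le_trans (h ▸ Nat.mul_le_mul_left _ h2) (le_refl _)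
  omega

variable {n : ℕ} {H : Finset (Finset (Fin n))}

lemma pairdeg_le (hU : Uniform3 H) {a u : Fin n} (hau : a ≠ u) :
    (H.filter (fun e => a ∈ e ∧ u ∈ e)).card ≤ n := by
  have h1 : (H.filter (fun e => a ∈ e ∧ u ∈ e)).card ≤
      ((univ : Finset (Fin n)).powersetCard 1).card := by
    apply Finset.card_le_card_of_injOn (fun e => e \ {a, u})
    · intro e he
      simp only [Finset.mem_coe, mem_filter] at he ⊢
      rw [Finset.mem_powersetCard]
      constructor
      · exact Finset.subset_univ _
      · rw [Finset.card_sdiff_of_subset (by intro x hx; simp at hx; rcases hx with h|h <;> subst h <;> tauto)]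
        rw [hU e he.1]
        rw [Finset.card_insert_of_notMem (by simp [hau]), Finset.card_singleton]
    · intro e he f hf hef
      simp only [coe_filter, Set.mem_setOf_eq] at he hf
      have hsub : ({a, u} : Finset (Fin n)) ⊆ e := by
        intro x hx; simp at hx; rcases hx with h|h <;> subst h <;> tauto
      have hsub2 : ({a, u} : Finset (Fin n)) ⊆ f := by
        intro x hx; simp at hx; rcases hx with h|h <;> subst h <;> tauto
      simp only at hef
      rw [← Finset.sdiff_union_of_subset hsub, ← Finset.sdiff_union_of_subset hsub2, hef]
  rwa [Finset.card_powersetCard, Finset.card_univ, Fintype.card_fin, Nat.choose_one_right] at h1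

lemma cover_card_le (H' : Finset (Finset (Fin n))) (V : Finset (Fin n))
    (hsub : H' ⊆ H) (hcov : ∀ e ∈ H', ∃ v ∈ V, v ∈ e) :
    H'.card ≤ ∑ v ∈ V, degH H v := by
  have h1 : H' ⊆ V.biUnion (fun v => H.filter (fun e => v ∈ e)) := by
    intro e he
    obtain ⟨v, hv, hve⟩ := hcov e he
    exact Finset.mem_biUnion.2 ⟨v, hv, Finset.mem_filter.2 ⟨hsub he, hve⟩⟩
  calc H'.card ≤ _ := Finset.card_le_card h1
    _ ≤ _ := Finset.card_biUnion_le

lemma greedy (hU : Uniform3 H) (s : ℕ) :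
    ∀ (N : ℕ) (A' F : Finset (Fin n)), A'.card = N →
    (∀ a ∈ A', 3*s*n+1 ≤ degH H a) → Disjoint A' F → 3*A'.card + F.card ≤ 3*s+3 →
    ∃ M, M ⊆ H ∧ M.card = A'.card ∧ (∀ e ∈ M, Disjoint e F) ∧
      (∀ e ∈ M, ∀ f ∈ M, e ≠ f → Disjoint e f) := by
  intro N
  induction N with
  | zero =>
    intro A' F hcard _ _ _
    exact ⟨∅, by simp, by simp [hcard], by simp, by simp⟩
  | succ N ih =>
    intro A' F hcard hdeg hdisj hsize
    have hne : A'.Nonempty := by rw [← Finset.card_pos, hcard]; omega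
    obtain ⟨a, ha⟩ := hne
    set bad : Finset (Fin n) := (A' ∪ F).erase a with hbad
    have hbadcard : bad.card ≤ N + F.card := by
      have h1 : (A' ∪ F).card ≤ A'.card + F.card := Finset.card_union_le _ _
      have h2 : bad.card = (A' ∪ F).card - 1 :=
        Finset.card_erase_of_mem (Finset.mem_union_left _ ha)
      omega
    have hbad3s : bad.card ≤ 3 * s := by omega
    -- count blocked edges
    have hblocked : (H.filter (fun e => a ∈ e ∧ ¬ Disjoint e bad)).card ≤ 3 * s * n := by
      have hsub : H.filter (fun e => a ∈ e ∧ ¬ Disjoint e bad) ⊆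
          bad.biUnion (fun u => H.filter (fun e => a ∈ e ∧ u ∈ e)) := by
        intro e he
        simp only [mem_filter] at he
        obtain ⟨he1, he2, he3⟩ := he
        rw [Finset.not_disjoint_iff] at he3
        obtain ⟨u, hu1, hu2⟩ := he3
        exact Finset.mem_biUnion.2 ⟨u, hu2, Finset.mem_filter.2 ⟨he1, he2, hu1⟩⟩
      calc (H.filter (fun e => a ∈ e ∧ ¬ Disjoint e bad)).card
          ≤ _ := Finset.card_le_card hsub
        _ ≤ ∑ u ∈ bad, (H.filter (fun e => a ∈ e ∧ u ∈ e)).card := Finset.card_biUnion_le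
        _ ≤ ∑ _u ∈ bad, n := by
            apply Finset.sum_le_sum
            intro u hu
            have hua : a ≠ u := fun h => (Finset.mem_erase.1 hu).1 h.symm
            exact pairdeg_le hU hua
        _ = bad.card * n := by rw [Finset.sum_const, smul_eq_mul]
        _ ≤ 3 * s * n := Nat.mul_le_mul_right n hbad3s
    -- find a good edge through a
    have hgood : ∃ e ∈ H, a ∈ e ∧ Disjoint e bad := by
      by_contra hcon
      push_neg at hcon
      have hsub : H.filter (fun e => a ∈ e) ⊆ H.filter (fun e => a ∈ e ∧ ¬ Disjoint e bad) := by
        intro e he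
        simp only [mem_filter] at he ⊢
        exact ⟨he.1, he.2, hcon e he.1 he.2⟩
      have := Finset.card_le_card hsub
      have hd := hdeg a ha
      unfold degH at hd
      omega
    obtain ⟨e, heH, hae, hedisj⟩ := hgood
    have hecard : e.card = 3 := hU e heH
    have hFbad : F ⊆ bad := by
      intro x hx
      have hxa : x ≠ a := by
        intro h; subst h
        exact (Finset.disjoint_left.1 hdisj) ha hx
      exact Finset.mem_erase.2 ⟨hxa, Finset.mem_union_right _ hx⟩
    have hA''bad : A'.erase a ⊆ bad := by
      intro x hx
      rw [Finset.mem_erase] at hx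
      exact Finset.mem_erase.2 ⟨hx.1, Finset.mem_union_left _ hx.2⟩
    obtain ⟨M', hM'H, hM'card, hM'F, hM'pair⟩ := ih (A'.erase a) (F ∪ e)
      (by rw [Finset.card_erase_of_mem ha, hcard]; rfl)
      (fun b hb => hdeg b (Finset.mem_of_mem_erase hb))
      (by
        rw [Finset.disjoint_union_right]
        exact ⟨Finset.disjoint_of_subset_left (Finset.erase_subset _ _) hdisj,
          Finset.disjoint_of_subset_left hA''bad hedisj.symm⟩)
      (by
        have h1 := Finset.card_union_le F e
        rw [Finset.card_erase_of_mem ha, hcard]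
        omega)
    refine ⟨insert e M', ?_, ?_, ?_, ?_⟩
    · intro f hf
      rcases Finset.mem_insert.1 hf with h | h
      · exact h ▸ heH
      · exact hM'H h
    · have heM' : e ∉ M' := by
        intro h
        have := hM'F e h
        rw [Finset.disjoint_union_right] at this
        have := this.2
        rw [disjoint_self, Finset.bot_eq_empty] at this
        rw [this] at hecard
        simp at hecard
      rw [Finset.card_insert_of_notMem heM', hM'card, Finset.card_erase_of_mem ha, hcard]
      omega
    · intro f hf
      rcases Finset.mem_insert.1 hf with h | h
      · exact h ▸ Finset.disjoint_of_subset_right hFbad hedisj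
      · exact Finset.disjoint_of_subset_right Finset.subset_union_left ((hM'F f h))
    · intro f hf g hg hfg
      rcases Finset.mem_insert.1 hf with h1 | h1 <;> rcases Finset.mem_insert.1 hg with h2 | h2
      · exact absurd (h1.trans h2.symm) hfg
      · subst h1
        exact (Finset.disjoint_of_subset_right Finset.subset_union_right (hM'F g h2)).symm
      · subst h2
        exact Finset.disjoint_of_subset_right Finset.subset_union_right (hM'F f h1)
      · exact hM'pair f h1 g h2 hfg

lemma mk_copy {a x y b w : Fin n}
    (hax : a ≠ x) (hay : a ≠ y) (hab : a ≠ b) (haw : a ≠ w)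
    (hxy : x ≠ y) (hxb : x ≠ b) (hxw : x ≠ w)
    (hyb : y ≠ b) (hyw : y ≠ w) (hbw : b ≠ w)
    (h1 : ({a, x, y} : Finset (Fin n)) ∈ H)
    (h2 : ({a, b, w} : Finset (Fin n)) ∈ H)
    (h3 : ({x, b, w} : Finset (Fin n)) ∈ H)
    (h4 : ({y, b, w} : Finset (Fin n)) ∈ H) :
    HasCopy F32Edges H := by
  refine ⟨![a, x, y, b, w], ?_, ?_⟩
  · intro i j hij
    fin_cases i <;> fin_cases j <;>
      simp_all [Matrix.cons_val_zero, Matrix.cons_val_one] <;> omega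
  · intro e he
    simp only [F32Edges, Set.mem_insert_iff, Set.mem_singleton_iff] at he
    rcases he with h | h | h | h <;> subst h <;>
      simp [Finset.image_insert, Finset.image_singleton] <;> assumption

lemma class_card_le (hU : Uniform3 H) (A : Finset (Fin n)) (i j : ℕ) (hij : i + j = 3) :
    (H.filter fun e => (e ∩ A).card = i).card ≤
      (A.card.choose i) * ((((univ : Finset (Fin n))) \ A).card.choose j) := by
  have h1 : (H.filter fun e => (e ∩ A).card = i).card ≤
      ((A.powersetCard i) ×ˢ (((univ : Finset (Fin n)) \ A).powersetCard j)).card := by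
    apply Finset.card_le_card_of_injOn (fun e => (e ∩ A, e \ A))
    · intro e he
      simp only [Finset.mem_coe, mem_filter] at he ⊢
      have hcards : (e ∩ A).card + (e \ A).card = e.card := Finset.card_inter_add_card_sdiff e A
      rw [Finset.mem_product, Finset.mem_powersetCard, Finset.mem_powersetCard]
      refine ⟨⟨Finset.inter_subset_right, he.2⟩, ?_, ?_⟩
      · intro x hx
        simp only [Finset.mem_sdiff] at hx ⊢
        exact ⟨Finset.mem_univ _, hx.2⟩
      · rw [hU e he.1] at hcards
        simp only []
        omega
    · intro e he f hf hef
      simp only at hef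
      have h1 : e ∩ A = f ∩ A := congrArg Prod.fst hef
      have h2 : e \ A = f \ A := congrArg Prod.snd hef
      calc e = e \ A ∪ e ∩ A := (Finset.sdiff_union_inter e A).symm
        _ = f \ A ∪ f ∩ A := by rw [h1, h2]
        _ = f := Finset.sdiff_union_inter f A
  rwa [Finset.card_product, Finset.card_powersetCard, Finset.card_powersetCard] at h1

lemma card_B (A : Finset (Fin n)) : (((univ : Finset (Fin n))) \ A).card = n - A.card := by
  rw [Finset.card_sdiff_of_subset (Finset.subset_univ _), Finset.card_univ, Fintype.card_fin]

lemma class_partition (hU : Uniform3 H) (A : Finset (Fin n)) :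
    H.card = ∑ i ∈ Finset.range 4, (H.filter fun e => (e ∩ A).card = i).card := by
  apply Finset.card_eq_sum_card_fiberwise
  intro e he
  simp only [Finset.mem_coe, Finset.mem_range] at he ⊢
  have : (e ∩ A).card ≤ e.card := Finset.card_le_card Finset.inter_subset_left
  rw [hU e he] at this
  omega

lemma s_one_case (hU : Uniform3 H) (hn : 12 ≤ n)
    (hint : ∀ e ∈ H, ∀ f ∈ H, e ≠ f → ¬ Disjoint e f)
    (hdeg : ∀ v, degH H v ≤ 3 * n) (hcard : (n - 1).choose 2 ≤ H.card) : False := by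
  have h2c : 2 * ((n-1).choose 2) = (n-1) * (n-2) := by
    rw [two_mul_choose_two]; congr 1
  have hprod : 11 * (n - 2) ≤ (n-1) * (n-2) := Nat.mul_le_mul_right _ (by omega)
  have no_star : ∀ x : Fin n, ∃ f ∈ H, x ∉ f := by
    intro x
    by_contra hcon
    push_neg at hcon
    have hsub : H ⊆ H.filter (fun e => x ∈ e) := fun e he => mem_filter.2 ⟨he, hcon e he⟩
    have := Finset.card_le_card hsub
    have hdx := hdeg x
    unfold degH at hdx
    omega
  have pair3 : ∀ u p : Fin n, u ≠ p → (∃ g ∈ H, u ∉ g ∧ p ∉ g) →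
      (H.filter (fun e => u ∈ e ∧ p ∈ e)).card ≤ 3 := by
    rintro u p hup ⟨g, hg, hug, hpg⟩
    have hsub : H.filter (fun e => u ∈ e ∧ p ∈ e) ⊆
        g.biUnion (fun w => H.filter (fun e => u ∈ e ∧ p ∈ e ∧ w ∈ e)) := by
      intro e he
      simp only [mem_filter] at he
      have hne : e ≠ g := fun h => hug (h ▸ he.2.1)
      have := hint e he.1 g hg hne
      rw [Finset.not_disjoint_iff] at this
      obtain ⟨w, hw1, hw2⟩ := this
      exact mem_biUnion.2 ⟨w, hw2, mem_filter.2 ⟨he.1, he.2.1, he.2.2, hw1⟩⟩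
    have hbound : ∀ w ∈ g, (H.filter (fun e => u ∈ e ∧ p ∈ e ∧ w ∈ e)).card ≤ 1 := by
      intro w hw
      have hwu : w ≠ u := fun h => hug (h ▸ hw)
      have hwp : w ≠ p := fun h => hpg (h ▸ hw)
      apply Finset.card_le_one.2
      intro e1 he1 e2 he2
      simp only [mem_filter] at he1 he2
      have hc : ({u, p, w} : Finset (Fin n)).card = 3 := by
        rw [Finset.card_insert_of_notMem (by simp [hup, hwu.symm]),
          Finset.card_insert_of_notMem (by simp [hwp.symm]), Finset.card_singleton]
      have he1' : e1 = {u, p, w} := by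
        apply (Finset.eq_of_subset_of_card_le (t := e1) ?_ ?_).symm
        · intro v hv; simp at hv; rcases hv with h|h|h <;> subst h <;> tauto
        · rw [hU e1 he1.1, hc]
      have he2' : e2 = {u, p, w} := by
        apply (Finset.eq_of_subset_of_card_le (t := e2) ?_ ?_).symm
        · intro v hv; simp at hv; rcases hv with h|h|h <;> subst h <;> tauto
        · rw [hU e2 he2.1, hc]
      rw [he1', he2']
    calc (H.filter (fun e => u ∈ e ∧ p ∈ e)).card ≤ _ := Finset.card_le_card hsub
      _ ≤ ∑ w ∈ g, (H.filter (fun e => u ∈ e ∧ p ∈ e ∧ w ∈ e)).card := Finset.card_biUnion_le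
      _ ≤ ∑ _w ∈ g, 1 := Finset.sum_le_sum hbound
      _ = 3 := by rw [Finset.sum_const, smul_eq_mul, hU g hg, mul_one]
  by_cases hdom : ∃ u p : Fin n, u ≠ p ∧ ∀ e ∈ H, u ∈ e ∨ p ∈ e
  · obtain ⟨u, p, hup, hDom⟩ := hdom
    -- a second dominating pair {q, r} with q ∈ {u, p} gives a contradiction
    have second_dom : ∀ q o r : Fin n, o ≠ r → (∀ e ∈ H, q ∈ e ∨ o ∈ e) →
        (∀ e ∈ H, q ∈ e ∨ r ∈ e) → False := by
      intro q o r hor hD1 hD2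
      have hsplit := Finset.card_filter_add_card_filter_not
        (s := H) (p := fun e => q ∈ e)
      have h1 : (H.filter (fun e => q ∈ e)).card ≤ 3 * n := hdeg q
      have h2 : (H.filter (fun e => ¬ q ∈ e)).card ≤ n := by
        have hsub : H.filter (fun e => ¬ q ∈ e) ⊆ H.filter (fun e => o ∈ e ∧ r ∈ e) := by
          intro e he
          simp only [mem_filter] at he ⊢
          exact ⟨he.1, (hD1 e he.1).resolve_left he.2, (hD2 e he.1).resolve_left he.2⟩
        exact le_trans (Finset.card_le_card hsub) (pairdeg_le hU hor)
      omega
    obtain ⟨f, hf, huf⟩ := no_star u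
    have hpf : p ∈ f := (hDom f hf).resolve_left huf
    obtain ⟨g, hg, hpg⟩ := no_star p
    have hug : u ∈ g := (hDom g hg).resolve_right hpg
    have hfc : (f.erase p).card = 2 := by rw [Finset.card_erase_of_mem hpf, hU f hf]
    obtain ⟨c, d, hcd, hfe⟩ := Finset.card_eq_two.1 hfc
    have hcf : c ∈ f.erase p := by rw [hfe]; simp
    have hdf : d ∈ f.erase p := by rw [hfe]; simp
    have hgc : (g.erase u).card = 2 := by rw [Finset.card_erase_of_mem hug, hU g hg]
    obtain ⟨c', d', hcd', hge⟩ := Finset.card_eq_two.1 hgc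
    have hcg : c' ∈ g.erase u := by rw [hge]; simp
    have hdg : d' ∈ g.erase u := by rw [hge]; simp
    have hcp : c ≠ p := (Finset.mem_erase.1 hcf).1
    have hdp : d ≠ p := (Finset.mem_erase.1 hdf).1
    have hcu : c ≠ u := fun h => huf (h ▸ (Finset.mem_of_mem_erase hcf))
    have hdu : d ≠ u := fun h => huf (h ▸ (Finset.mem_of_mem_erase hdf))
    have hc'u : c' ≠ u := (Finset.mem_erase.1 hcg).1
    have hd'u : d' ≠ u := (Finset.mem_erase.1 hdg).1
    have hc'p : c' ≠ p := fun h => hpg (h ▸ (Finset.mem_of_mem_erase hcg))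
    have hd'p : d' ≠ p := fun h => hpg (h ▸ (Finset.mem_of_mem_erase hdg))
    by_cases hDuc : ∀ e ∈ H, u ∈ e ∨ c ∈ e
    · exact second_dom u p c hcp.symm hDom hDuc
    by_cases hDud : ∀ e ∈ H, u ∈ e ∨ d ∈ e
    · exact second_dom u p d hdp.symm hDom hDud
    by_cases hDpc : ∀ e ∈ H, p ∈ e ∨ c' ∈ e
    · exact second_dom p u c' hc'u.symm (fun e he => (hDom e he).symm) hDpc
    by_cases hDpd : ∀ e ∈ H, p ∈ e ∨ d' ∈ e
    · exact second_dom p u d' hd'u.symm (fun e he => (hDom e he).symm) hDpd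
    -- no second dominating pair: everything is small
    push_neg at hDuc hDud hDpc hDpd
    obtain ⟨g1, hg1, hug1, hcg1⟩ := hDuc
    obtain ⟨g2, hg2, hug2, hdg2⟩ := hDud
    obtain ⟨g3, hg3, hpg3, hcg3⟩ := hDpc
    obtain ⟨g4, hg4, hpg4, hdg4⟩ := hDpd
    have hup6 : (H.filter (fun e => u ∈ e ∧ ¬ p ∈ e)).card ≤ 6 := by
      have hsub : H.filter (fun e => u ∈ e ∧ ¬ p ∈ e) ⊆
          H.filter (fun e => u ∈ e ∧ c ∈ e) ∪ H.filter (fun e => u ∈ e ∧ d ∈ e) := by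
        intro e he
        simp only [mem_filter] at he
        have hne : e ≠ f := fun h => huf (h ▸ he.2.1)
        have := hint e he.1 f hf hne
        rw [Finset.not_disjoint_iff] at this
        obtain ⟨w, hw1, hw2⟩ := this
        have hwp : w ≠ p := fun h => he.2.2 (h ▸ hw1)
        have hwcd : w ∈ ({c, d} : Finset (Fin n)) := by
          rw [← hfe]; exact Finset.mem_erase.2 ⟨hwp, hw2⟩
        simp only [Finset.mem_insert, Finset.mem_singleton] at hwcd
        rcases hwcd with h | h <;> subst h
        · exact Finset.mem_union_left _ (mem_filter.2 ⟨he.1, he.2.1, hw1⟩)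
        · exact Finset.mem_union_right _ (mem_filter.2 ⟨he.1, he.2.1, hw1⟩)
      calc (H.filter (fun e => u ∈ e ∧ ¬ p ∈ e)).card
          ≤ _ := Finset.card_le_card hsub
        _ ≤ _ := Finset.card_union_le _ _
        _ ≤ 6 := by
            have b1 := pair3 u c hcu.symm ⟨g1, hg1, hug1, hcg1⟩
            have b2 := pair3 u d hdu.symm ⟨g2, hg2, hug2, hdg2⟩
            omega
    have hpu6 : (H.filter (fun e => ¬ u ∈ e)).card ≤ 6 := by
      have hsub : H.filter (fun e => ¬ u ∈ e) ⊆
          H.filter (fun e => p ∈ e ∧ c' ∈ e) ∪ H.filter (fun e => p ∈ e ∧ d' ∈ e) := by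
        intro e he
        simp only [mem_filter] at he
        have hpe : p ∈ e := (hDom e he.1).resolve_left he.2
        have hne : e ≠ g := fun h => hpg (h ▸ hpe)
        have := hint e he.1 g hg hne
        rw [Finset.not_disjoint_iff] at this
        obtain ⟨w, hw1, hw2⟩ := this
        have hwu : w ≠ u := fun h => he.2 (h ▸ hw1)
        have hwcd : w ∈ ({c', d'} : Finset (Fin n)) := by
          rw [← hge]; exact Finset.mem_erase.2 ⟨hwu, hw2⟩
        simp only [Finset.mem_insert, Finset.mem_singleton] at hwcd
        rcases hwcd with h | h <;> subst h
        · exact Finset.mem_union_left _ (mem_filter.2 ⟨he.1, hpe, hw1⟩)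
        · exact Finset.mem_union_right _ (mem_filter.2 ⟨he.1, hpe, hw1⟩)
      calc (H.filter (fun e => ¬ u ∈ e)).card
          ≤ _ := Finset.card_le_card hsub
        _ ≤ _ := Finset.card_union_le _ _
        _ ≤ 6 := by
            have b1 := pair3 p c' hc'p.symm ⟨g3, hg3, hpg3, hcg3⟩
            have b2 := pair3 p d' hd'p.symm ⟨g4, hg4, hpg4, hdg4⟩
            omega
    have hboth : (H.filter (fun e => u ∈ e ∧ p ∈ e)).card ≤ n := pairdeg_le hU hup
    have hsplit := Finset.card_filter_add_card_filter_not
      (s := H) (p := fun e => u ∈ e)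
    have hsplit2 := Finset.card_filter_add_card_filter_not
      (s := H.filter (fun e => u ∈ e)) (p := fun e => p ∈ e)
    rw [Finset.filter_filter, Finset.filter_filter] at hsplit2
    omega
  · push_neg at hdom
    have hH0 : H.Nonempty := by
      rw [← Finset.card_pos]
      have : 0 < (n-1).choose 2 := by omega
      omega
    obtain ⟨e₀, he₀⟩ := hH0
    have dall : ∀ v : Fin n, degH H v ≤ 9 := by
      intro v
      obtain ⟨f, hf, hvf⟩ := no_star v
      have hsub : H.filter (fun e => v ∈ e) ⊆
          f.biUnion (fun w => H.filter (fun e => v ∈ e ∧ w ∈ e)) := by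
        intro e he
        simp only [mem_filter] at he
        have hne : e ≠ f := fun h => hvf (h ▸ he.2)
        have := hint e he.1 f hf hne
        rw [Finset.not_disjoint_iff] at this
        obtain ⟨w, hw1, hw2⟩ := this
        exact mem_biUnion.2 ⟨w, hw2, mem_filter.2 ⟨he.1, he.2, hw1⟩⟩
      have hbound : ∀ w ∈ f, (H.filter (fun e => v ∈ e ∧ w ∈ e)).card ≤ 3 := by
        intro w hw
        have hvw : v ≠ w := fun h => hvf (h ▸ hw)
        exact pair3 v w hvw (by
          obtain ⟨e, he, hne⟩ := hdom v w hvw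
          exact ⟨e, he, by tauto⟩)
      calc degH H v ≤ _ := Finset.card_le_card hsub
        _ ≤ ∑ w ∈ f, (H.filter (fun e => v ∈ e ∧ w ∈ e)).card := Finset.card_biUnion_le
        _ ≤ ∑ _w ∈ f, 3 := Finset.sum_le_sum hbound
        _ = 9 := by rw [Finset.sum_const, smul_eq_mul, hU f hf]
    have hcov : H.card ≤ ∑ v ∈ e₀, degH H v := by
      have h1 : H ⊆ e₀.biUnion (fun v => H.filter (fun e => v ∈ e)) := by
        intro e he
        by_cases hee : e = e₀
        · subst hee
          have hne : e.Nonempty := by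
            rw [← Finset.card_pos, hU e he]; omega
          obtain ⟨v, hv⟩ := hne
          exact mem_biUnion.2 ⟨v, hv, mem_filter.2 ⟨he, hv⟩⟩
        · have := hint e he e₀ he₀ hee
          rw [Finset.not_disjoint_iff] at this
          obtain ⟨w, hw1, hw2⟩ := this
          exact mem_biUnion.2 ⟨w, hw2, mem_filter.2 ⟨he, hw1⟩⟩
      calc H.card ≤ _ := Finset.card_le_card h1
        _ ≤ _ := Finset.card_biUnion_le
    have h9 : ∑ v ∈ e₀, degH H v ≤ ∑ _v ∈ e₀, 9 := Finset.sum_le_sum (fun v _ => dall v)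
    rw [Finset.sum_const, smul_eq_mul, hU e₀ he₀] at h9
    omega

lemma no_multi {s : ℕ} (hU : Uniform3 H) (hfree : ¬ HasCopy F32Edges H)
    (A : Finset (Fin n)) (hAcard : A.card = s) (hs2 : 2 ≤ s) (hn : 12 * s ^ 2 ≤ n)
    (hcard : s * (n - s).choose 2 ≤ H.card)
    (hc0 : ∀ e ∈ H, (e ∩ A).card ≠ 0) :
    ∀ e ∈ H, (e ∩ A).card = 1 := by
  have hsn : s ≤ n := by nlinarith
  have hs1n : s + 1 ≤ n := by nlinarith
  have h2s1n : 2 * s + 1 ≤ n := by nlinarith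
  set B : Finset (Fin n) := (univ : Finset (Fin n)) \ A with hBdef
  have hB : B.card = n - s := by rw [hBdef, card_B, hAcard]
  set C2 : ℕ := (n - s).choose 2 with hC2def
  have hP2 : (B.powersetCard 2).card = C2 := by rw [Finset.card_powersetCard, hB]
  set La : Fin n → Finset (Finset (Fin n)) :=
    fun a => (B.powersetCard 2).filter (fun p => insert a p ∈ H) with hLadef
  have hLa_sub : ∀ a, La a ⊆ B.powersetCard 2 := fun a => Finset.filter_subset _ _
  have hLa_le : ∀ a, (La a).card ≤ C2 := fun a => hP2 ▸ Finset.card_le_card (hLa_sub a)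
  set μ : Fin n → ℕ := fun a => C2 - (La a).card with hμdef
  have hmiss : ∀ a, ((B.powersetCard 2) \ La a).card = μ a := by
    intro a; rw [Finset.card_sdiff_of_subset (hLa_sub a), hP2]
  -- class cardinalities
  set c1 : ℕ := (H.filter fun e => (e ∩ A).card = 1).card with hc1def
  set c2 : ℕ := (H.filter fun e => (e ∩ A).card = 2).card with hc2def
  set c3 : ℕ := (H.filter fun e => (e ∩ A).card = 3).card with hc3def
  have hc0' : (H.filter fun e => (e ∩ A).card = 0).card = 0 := by
    rw [Finset.card_eq_zero, Finset.filter_eq_empty_iff]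
    exact fun {e} he h => hc0 e he h
  have hpart : H.card = c1 + c2 + c3 := by
    have := class_partition hU A
    rw [Finset.sum_range_succ, Finset.sum_range_succ, Finset.sum_range_succ,
      Finset.sum_range_one] at this
    rw [this, hc0']
    ring
  -- c1 ≤ ∑ |La a|
  have hc1sum : c1 ≤ ∑ a ∈ A, (La a).card := by
    have hsub : H.filter (fun e => (e ∩ A).card = 1) ⊆
        A.biUnion (fun a => (La a).image (insert a)) := by
      intro e he
      rw [mem_filter] at he
      obtain ⟨a, ha⟩ := Finset.card_eq_one.1 he.2
      have haA : a ∈ A := by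
        have : a ∈ e ∩ A := ha ▸ Finset.mem_singleton_self a
        exact (Finset.mem_inter.1 this).2
      have hae : a ∈ e := by
        have : a ∈ e ∩ A := ha ▸ Finset.mem_singleton_self a
        exact (Finset.mem_inter.1 this).1
      have hsd : (e \ A).card = 2 := by
        have h1 := Finset.card_inter_add_card_sdiff e A
        rw [hU e he.1, he.2] at h1
        omega
      have hins : insert a (e \ A) = e := by
        ext x
        simp only [Finset.mem_insert, Finset.mem_sdiff]
        constructor
        · rintro (rfl | ⟨h1, _⟩)
          · exact hae
          · exact h1
        · intro hx
          by_cases hxA : x ∈ A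
          · left
            have : x ∈ e ∩ A := Finset.mem_inter.2 ⟨hx, hxA⟩
            rw [ha, Finset.mem_singleton] at this
            exact this
          · right; exact ⟨hx, hxA⟩
      apply Finset.mem_biUnion.2 ⟨a, haA, ?_⟩
      apply Finset.mem_image.2 ⟨e \ A, ?_, hins⟩
      rw [hLadef]
      apply Finset.mem_filter.2 ⟨?_, ?_⟩
      · rw [Finset.mem_powersetCard]
        exact ⟨fun x hx => by
          rw [Finset.mem_sdiff] at hx
          exact Finset.mem_sdiff.2 ⟨Finset.mem_univ _, hx.2⟩, hsd⟩
      · rw [hins]; exact he.1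
    calc c1 ≤ _ := Finset.card_le_card hsub
      _ ≤ ∑ a ∈ A, ((La a).image (insert a)).card := Finset.card_biUnion_le
      _ ≤ ∑ a ∈ A, (La a).card := Finset.sum_le_sum (fun a _ => Finset.card_image_le)
  -- ∑ μ ≤ c2 + c3
  have hμsum : ∑ a ∈ A, μ a ≤ c2 + c3 := by
    have h1 : ∑ a ∈ A, μ a + ∑ a ∈ A, (La a).card = s * C2 := by
      rw [← Finset.sum_add_distrib]
      have : ∀ a ∈ A, μ a + (La a).card = C2 := fun a _ => Nat.sub_add_cancel (hLa_le a)
      rw [Finset.sum_congr rfl this, Finset.sum_const, hAcard, smul_eq_mul]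
    omega
  -- bounds on c2, c3
  have hc2b : c2 ≤ s.choose 2 * (n - s) := by
    have := class_card_le hU A 2 1 (by norm_num)
    rwa [hAcard, card_B, hAcard, Nat.choose_one_right] at this
  have hc3b : c3 ≤ s.choose 2 * s := by
    have h1 := class_card_le hU A 3 0 (by norm_num)
    rw [hAcard, Nat.choose_zero_right, mul_one] at h1
    have h2 : s.choose 3 ≤ s.choose 2 * s := by
      have h3 := Nat.choose_succ_right_eq s 2
      have h4 : s - 2 ≤ s := Nat.sub_le _ _
      nlinarith [Nat.choose_succ_right_eq s 2]
    omega
  have h2s : 2 * s.choose 2 = s * (s - 1) := two_mul_choose_two s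
  have h2C : 2 * C2 = (n - s) * (n - s - 1) := by
    rw [hC2def, two_mul_choose_two]
  -- integer facts, nat versions
  have hnat3A := nat_3A n s hs2 hn
  -- k and its bound
  have hkb : 2 * (c2 + c3) ≤ s * (s-1) * (n-s) + s * (s-1) * s := by
    calc 2 * (c2 + c3) = 2 * c2 + 2 * c3 := by ring
      _ ≤ 2 * (s.choose 2 * (n - s)) + 2 * (s.choose 2 * s) := by
          have := Nat.mul_le_mul_left 2 hc2b
          have := Nat.mul_le_mul_left 2 hc3b
          omega
      _ = (2 * s.choose 2) * (n - s) + (2 * s.choose 2) * s := by ring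
      _ = s * (s-1) * (n-s) + s * (s-1) * s := by rw [h2s]
  have hk3 : 3 * (c2 + c3) < C2 := by
    have h6 : 6 * (c2 + c3) < 2 * C2 := by
      calc 6 * (c2 + c3) = 3 * (2 * (c2 + c3)) := by ring
        _ ≤ 3 * (s * (s-1) * (n-s) + s * (s-1) * s) := Nat.mul_le_mul_left 3 hkb
        _ = 3 * (s * (s-1) * (n-s)) + 3 * (s * (s-1) * s) := by ring
        _ < (n-s) * (n-s-1) := hnat3A
        _ = 2 * C2 := h2C.symm
    omega
  -- no 3A edges
  have h3A : ∀ e ∈ H, (e ∩ A).card = 3 → False := by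
    intro e he he3
    have heA : e ∩ A = e := by
      apply Finset.eq_of_subset_of_card_le Finset.inter_subset_left
      rw [he3, hU e he]
    have hesubA : e ⊆ A := heA ▸ Finset.inter_subset_right
    obtain ⟨x, y, z, hxy, hxz, hyz, hexyz⟩ := Finset.card_eq_three.1 (hU e he)
    have hxA : x ∈ A := hesubA (by rw [hexyz]; simp)
    have hyA : y ∈ A := hesubA (by rw [hexyz]; simp)
    have hzA : z ∈ A := hesubA (by rw [hexyz]; simp)
    -- common pairs
    have hμx : μ x ≤ c2 + c3 := le_trans (Finset.single_le_sum (fun a _ => Nat.zero_le _) hxA) hμsum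
    have hμy : μ y ≤ c2 + c3 := le_trans (Finset.single_le_sum (fun a _ => Nat.zero_le _) hyA) hμsum
    have hμz : μ z ≤ c2 + c3 := le_trans (Finset.single_le_sum (fun a _ => Nat.zero_le _) hzA) hμsum
    have hsubm : (B.powersetCard 2) \ (La x ∩ (La y ∩ La z)) ⊆
        ((B.powersetCard 2) \ La x) ∪ (((B.powersetCard 2) \ La y) ∪ ((B.powersetCard 2) \ La z)) := by
      intro p hp
      rw [Finset.mem_sdiff, Finset.mem_inter, Finset.mem_inter] at hp
      rw [Finset.mem_union, Finset.mem_union, Finset.mem_sdiff, Finset.mem_sdiff,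
        Finset.mem_sdiff]
      by_cases h1 : p ∈ La x
      · by_cases h2 : p ∈ La y
        · exact Or.inr (Or.inr ⟨hp.1, fun h3 => hp.2 ⟨h1, h2, h3⟩⟩)
        · exact Or.inr (Or.inl ⟨hp.1, h2⟩)
      · exact Or.inl ⟨hp.1, h1⟩
    have hcomm : C2 ≤ (La x ∩ (La y ∩ La z)).card + 3 * (c2 + c3) := by
      have h1 : ((B.powersetCard 2) \ (La x ∩ (La y ∩ La z))).card ≤ 3 * (c2 + c3) := by
        calc _ ≤ _ := Finset.card_le_card hsubm
          _ ≤ _ := Finset.card_union_le _ _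
          _ ≤ ((B.powersetCard 2) \ La x).card + (((B.powersetCard 2) \ La y).card
              + ((B.powersetCard 2) \ La z).card) := by
              have := Finset.card_union_le ((B.powersetCard 2) \ La y) ((B.powersetCard 2) \ La z)
              omega
          _ ≤ 3 * (c2 + c3) := by
              rw [hmiss x, hmiss y, hmiss z]
              omega
      have h2 : (La x ∩ (La y ∩ La z)) ⊆ B.powersetCard 2 :=
        le_trans Finset.inter_subset_left (hLa_sub x)
      have h3 := Finset.card_sdiff_of_subset h2
      omega
    have hnonempty : (La x ∩ (La y ∩ La z)).Nonempty := by
      rw [← Finset.card_pos]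
      omega
    obtain ⟨p, hp⟩ := hnonempty
    rw [Finset.mem_inter, Finset.mem_inter] at hp
    obtain ⟨hpx, hpy, hpz⟩ := hp
    have hpP2 : p ∈ B.powersetCard 2 := hLa_sub x hpx
    rw [Finset.mem_powersetCard] at hpP2
    obtain ⟨u, v, huv, hpuv⟩ := Finset.card_eq_two.1 hpP2.2
    have huB : u ∉ A := by
      have : u ∈ B := hpP2.1 (by rw [hpuv]; simp)
      rw [hBdef, Finset.mem_sdiff] at this; exact this.2
    have hvB : v ∉ A := by
      have : v ∈ B := hpP2.1 (by rw [hpuv]; simp)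
      rw [hBdef, Finset.mem_sdiff] at this; exact this.2
    have hxu : x ≠ u := fun h => huB (h ▸ hxA)
    have hxv : x ≠ v := fun h => hvB (h ▸ hxA)
    have hyu : y ≠ u := fun h => huB (h ▸ hyA)
    have hyv : y ≠ v := fun h => hvB (h ▸ hyA)
    have hzu : z ≠ u := fun h => huB (h ▸ hzA)
    have hzv : z ≠ v := fun h => hvB (h ▸ hzA)
    apply hfree
    apply mk_copy hxy hxz hxu hxv hyz hyu hyv hzu hzv huv
    · rw [← hexyz]; exact he
    · rw [hLadef, Finset.mem_filter] at hpx
      have := hpx.2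
      rwa [hpuv] at this
    · rw [hLadef, Finset.mem_filter] at hpy
      have := hpy.2
      rwa [hpuv] at this
    · rw [hLadef, Finset.mem_filter] at hpz
      have := hpz.2
      rwa [hpuv] at this
  have hc3z : c3 = 0 := by
    rw [hc3def, Finset.card_eq_zero, Finset.filter_eq_empty_iff]
    exact fun {e} he h3 => (h3A e he h3).elim
  -- ### 2A edges
  have hμsum2 : ∑ a ∈ A, μ a ≤ c2 := by omega
  set σ : ℕ := Nat.sqrt (2 * c2) + 1 with hσdef
  set m : Fin n → Fin n → ℕ :=
    fun c w => ((B.erase w).filter (fun v => insert c {w, v} ∉ H)).card with hmdef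
  -- (α) row sums of missing-counts
  have halpha : ∀ c ∈ A, ∑ w ∈ B, m c w ≤ 2 * μ c := by
    intro c hc
    set T : Finset (Fin n × Fin n) := B.biUnion (fun w =>
      ((B.erase w).filter (fun v => insert c {w, v} ∉ H)).image (fun v => (w, v))) with hTdef
    have hTcard : ∑ w ∈ B, m c w = T.card := by
      rw [hTdef, Finset.card_biUnion ?_]
      · apply Finset.sum_congr rfl
        intro w _
        rw [Finset.card_image_of_injective _ (fun v1 v2 h => (Prod.ext_iff.1 h).2)]
      · intro w1 _ w2 _ hne
        simp only [Function.onFun]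
        rw [Finset.disjoint_left]
        intro q hq1 hq2
        rw [Finset.mem_image] at hq1 hq2
        obtain ⟨v1, _, hv1⟩ := hq1
        obtain ⟨v2, _, hv2⟩ := hq2
        apply hne
        rw [← hv1] at hv2
        exact (Prod.ext_iff.1 hv2).1.symm
    have hmaps : ∀ q ∈ T, ({q.1, q.2} : Finset (Fin n)) ∈ (B.powersetCard 2) \ La c := by
      intro q hq
      rw [hTdef, Finset.mem_biUnion] at hq
      obtain ⟨w, hw, hq2⟩ := hq
      rw [Finset.mem_image] at hq2
      obtain ⟨v, hv, hqv⟩ := hq2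
      rw [Finset.mem_filter] at hv
      obtain ⟨hv1, hv2⟩ := hv
      have hvB : v ∈ B := Finset.mem_of_mem_erase hv1
      have hvw : v ≠ w := (Finset.mem_erase.1 hv1).1
      subst hqv
      simp only
      rw [Finset.mem_sdiff]
      constructor
      · rw [Finset.mem_powersetCard]
        refine ⟨?_, ?_⟩
        · intro x hx
          rw [Finset.mem_insert, Finset.mem_singleton] at hx
          rcases hx with rfl | rfl
          · exact hw
          · exact hvB
        · rw [Finset.card_insert_of_notMem (by simp [hvw.symm] : w ∉ ({v} : Finset (Fin n))),
            Finset.card_singleton]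
      · rw [hLadef]
        simp only [Finset.mem_filter, not_and]
        intro _
        exact hv2
    have hfib : ∀ b ∈ (B.powersetCard 2) \ La c,
        (T.filter (fun q => ({q.1, q.2} : Finset (Fin n)) = b)).card ≤ 2 := by
      intro b hb
      rw [Finset.mem_sdiff, Finset.mem_powersetCard] at hb
      obtain ⟨x, y, hxy, hbxy⟩ := Finset.card_eq_two.1 hb.1.2
      have hsub2 : T.filter (fun q => ({q.1, q.2} : Finset (Fin n)) = b) ⊆
          {(x, y), (y, x)} := by
        intro q hq
        rw [Finset.mem_filter] at hq
        have hqb : ({q.1, q.2} : Finset (Fin n)) = {x, y} := by rw [hq.2, hbxy]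
        have hq1 : q.1 ∈ ({x, y} : Finset (Fin n)) := by
          rw [← hqb]; simp
        have hq2 : q.2 ∈ ({x, y} : Finset (Fin n)) := by
          rw [← hqb]; simp
        have hne : q.1 ≠ q.2 := by
          have hqT := hq.1
          rw [hTdef, Finset.mem_biUnion] at hqT
          obtain ⟨w, _, hq3⟩ := hqT
          rw [Finset.mem_image] at hq3
          obtain ⟨v, hv, hqv⟩ := hq3
          have hvw : v ≠ w := (Finset.mem_erase.1 (Finset.mem_filter.1 hv).1).1
          rw [← hqv]
          exact fun h => hvw h.symm
        simp only [Finset.mem_insert, Finset.mem_singleton] at hq1 hq2 ⊢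
        rcases hq1 with h1 | h1 <;> rcases hq2 with h2 | h2
        · exact absurd (h1.trans h2.symm) hne
        · left; rw [Prod.ext_iff]; exact ⟨h1, h2⟩
        · right; rw [Prod.ext_iff]; exact ⟨h1, h2⟩
        · exact absurd (h1.trans h2.symm) hne
      calc _ ≤ ({(x, y), (y, x)} : Finset (Fin n × Fin n)).card := Finset.card_le_card hsub2
        _ ≤ 2 := (Finset.card_insert_le _ _).trans (by simp)
    have hTb := Finset.card_le_mul_card_image_of_maps_to
      (f := fun q : Fin n × Fin n => ({q.1, q.2} : Finset (Fin n))) hmaps 2 hfib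
    rw [hmiss c] at hTb
    omega
  -- freeness forces many missing pairs at B-vertices of 2A-edges
  have hfree2 : ∀ e ∈ H, ∀ a b w : Fin n, a ∈ A → b ∈ A → a ≠ b → w ∈ B →
      e = {a, b, w} → (n - s - 1) - σ ≤ m b w := by
    intro e he a b w haA hbA hab hwB heq
    have hwA : w ∉ A := by
      rw [hBdef, Finset.mem_sdiff] at hwB; exact hwB.2
    have haw : a ≠ w := fun h => hwA (h ▸ haA)
    have hbw : b ≠ w := fun h => hwA (h ▸ hbA)
    set S : Finset (Fin n) := (B.erase w).filter (fun v => insert b {w, v} ∈ H) with hSdef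
    have hmbw : m b w = ((B.erase w).filter (fun v => ¬ insert b {w, v} ∈ H)).card := rfl
    have hsplit : S.card + m b w = n - s - 1 := by
      have h1 := Finset.card_filter_add_card_filter_not (s := B.erase w)
        (p := fun v => insert b {w, v} ∈ H)
      have h2 : (B.erase w).card = n - s - 1 := by
        rw [Finset.card_erase_of_mem hwB, hB]
      rw [h2] at h1
      rw [hSdef, hmbw]
      exact h1
    have hSsub : S.powersetCard 2 ⊆ (B.powersetCard 2) \ La a := by
      intro p hp
      rw [Finset.mem_powersetCard] at hp
      obtain ⟨hpS, hp2⟩ := hp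
      have hpB : p ⊆ B := fun t ht =>
        Finset.mem_of_mem_erase ((Finset.filter_subset _ _) (hpS ht))
      rw [Finset.mem_sdiff]
      refine ⟨Finset.mem_powersetCard.2 ⟨hpB, hp2⟩, ?_⟩
      rw [hLadef]
      simp only [Finset.mem_filter, not_and]
      intro _ hins
      obtain ⟨x, y, hxy, hpxy⟩ := Finset.card_eq_two.1 hp2
      have hxS : x ∈ S := hpS (by rw [hpxy]; simp)
      have hyS : y ∈ S := hpS (by rw [hpxy]; simp)
      rw [hSdef, Finset.mem_filter] at hxS hyS
      have hxB : x ∈ B := Finset.mem_of_mem_erase hxS.1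
      have hyB : y ∈ B := Finset.mem_of_mem_erase hyS.1
      have hxw : x ≠ w := (Finset.mem_erase.1 hxS.1).1
      have hyw : y ≠ w := (Finset.mem_erase.1 hyS.1).1
      have hxA : x ∉ A := by rw [hBdef, Finset.mem_sdiff] at hxB; exact hxB.2
      have hyA : y ∉ A := by rw [hBdef, Finset.mem_sdiff] at hyB; exact hyB.2
      have hax : a ≠ x := fun h => hxA (h ▸ haA)
      have hay : a ≠ y := fun h => hyA (h ▸ haA)
      have hxb : x ≠ b := fun h => hxA (h.symm ▸ hbA)
      have hyb : y ≠ b := fun h => hyA (h.symm ▸ hbA)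
      apply hfree
      apply mk_copy hax hay hab haw hxy hxb hxw hyb hyw hbw
      · rw [← hpxy]; exact hins
      · rw [← heq]; exact he
      · have hset : ({x, b, w} : Finset (Fin n)) = insert b {w, x} := by
          ext t
          simp only [Finset.mem_insert, Finset.mem_singleton]
          constructor <;> intro h <;> rcases h with h | h | h <;> simp [h]
        rw [hset]; exact hxS.2
      · have hset : ({y, b, w} : Finset (Fin n)) = insert b {w, y} := by
          ext t
          simp only [Finset.mem_insert, Finset.mem_singleton]
          constructor <;> intro h <;> rcases h with h | h | h <;> simp [h]
        rw [hset]; exact hyS.2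
    have hchoose : S.card.choose 2 ≤ μ a := by
      calc S.card.choose 2 = (S.powersetCard 2).card := (Finset.card_powersetCard 2 S).symm
        _ ≤ ((B.powersetCard 2) \ La a).card := Finset.card_le_card hSsub
        _ = μ a := hmiss a
    have hμa : μ a ≤ c2 :=
      le_trans (Finset.single_le_sum (fun i _ => Nat.zero_le _) haA) hμsum2
    have hScard : S.card ≤ σ := by
      by_contra hcon
      push_neg at hcon
      have h1 : 2 * (S.card.choose 2) = S.card * (S.card - 1) := two_mul_choose_two _
      have h3 : 2 * c2 < (Nat.sqrt (2*c2) + 1) * (Nat.sqrt (2*c2) + 1) :=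
        Nat.lt_succ_sqrt (2*c2)
      have h4 : (Nat.sqrt (2*c2) + 1) * (Nat.sqrt (2*c2) + 1) ≤ S.card * (S.card - 1) :=
        Nat.mul_le_mul (by omega) (by omega)
      omega
    omega
  -- the number of 2A-edges on an (A,B) pair is at most s-1
  have hdeg2 : ∀ c ∈ A, ∀ w' ∈ B,
      ((H.filter fun e => (e ∩ A).card = 2).filter (fun e => c ∈ e ∧ w' ∈ e)).card ≤ s - 1 := by
    intro c hc w' hw'
    have hw'A : w' ∉ A := by rw [hBdef, Finset.mem_sdiff] at hw'; exact hw'.2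
    have h1 : ((H.filter fun e => (e ∩ A).card = 2).filter (fun e => c ∈ e ∧ w' ∈ e)).card ≤
        ((A.erase c).powersetCard 1).card := by
      apply Finset.card_le_card_of_injOn (fun e => (e ∩ A).erase c)
      · intro e he
        simp only [Finset.mem_coe] at he ⊢
        rw [Finset.mem_filter, Finset.mem_filter] at he
        obtain ⟨⟨heH, he2⟩, hce, hwe⟩ := he
        rw [Finset.mem_powersetCard]
        constructor
        · intro t ht
          rw [Finset.mem_erase] at ht ⊢
          exact ⟨ht.1, (Finset.mem_inter.1 ht.2).2⟩
        · rw [Finset.card_erase_of_mem (Finset.mem_inter.2 ⟨hce, hc⟩), he2]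
      · intro e1 he1 e2 he2 heq
        simp only [Finset.coe_filter, Set.mem_setOf_eq] at he1 he2
        obtain ⟨he1HP, hce1, hwe1⟩ := he1
        obtain ⟨he2HP, hce2, hwe2⟩ := he2
        rw [Finset.mem_filter] at he1HP he2HP
        obtain ⟨he1H, he12⟩ := he1HP
        obtain ⟨he2H, he22⟩ := he2HP
        simp only at heq
        have hd1 : ((e1 ∩ A).erase c).card = 1 := by
          rw [Finset.card_erase_of_mem (Finset.mem_inter.2 ⟨hce1, hc⟩), he12]
        obtain ⟨d, hd⟩ := Finset.card_eq_one.1 hd1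
        have hdA : d ∈ A := by
          have h := hd ▸ Finset.mem_singleton_self d
          exact (Finset.mem_inter.1 (Finset.mem_of_mem_erase h)).2
        have hdc : d ≠ c := by
          have h := hd ▸ Finset.mem_singleton_self d
          exact (Finset.mem_erase.1 h).1
        have hde1 : d ∈ e1 := by
          have h := hd ▸ Finset.mem_singleton_self d
          exact (Finset.mem_inter.1 (Finset.mem_of_mem_erase h)).1
        have hde2 : d ∈ e2 := by
          have h := (heq ▸ hd) ▸ Finset.mem_singleton_self d
          exact (Finset.mem_inter.1 (Finset.mem_of_mem_erase h)).1
        have hcle : ({c, d, w'} : Finset (Fin n)).card = 3 := by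
          rw [Finset.card_insert_of_notMem, Finset.card_insert_of_notMem,
            Finset.card_singleton]
          · simp only [Finset.mem_singleton]
            exact fun h => hw'A (h ▸ hdA)
          · simp only [Finset.mem_insert, Finset.mem_singleton]
            push_neg
            exact ⟨hdc.symm, fun h => hw'A (h ▸ hc)⟩
        have hsub1 : ({c, d, w'} : Finset (Fin n)) ⊆ e1 := by
          intro t ht
          rw [Finset.mem_insert, Finset.mem_insert, Finset.mem_singleton] at ht
          rcases ht with rfl | rfl | rfl
          · exact hce1
          · exact hde1
          · exact hwe1
        have hsub2 : ({c, d, w'} : Finset (Fin n)) ⊆ e2 := by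
          intro t ht
          rw [Finset.mem_insert, Finset.mem_insert, Finset.mem_singleton] at ht
          rcases ht with rfl | rfl | rfl
          · exact hce2
          · exact hde2
          · exact hwe2
        have he1eq : e1 = {c, d, w'} :=
          (Finset.eq_of_subset_of_card_le hsub1 (by rw [hU e1 he1H, hcle])).symm
        have he2eq : e2 = {c, d, w'} :=
          (Finset.eq_of_subset_of_card_le hsub2 (by rw [hU e2 he2H, hcle])).symm
        rw [he1eq, he2eq]
    rwa [Finset.card_powersetCard, Finset.card_erase_of_mem hc, hAcard,
      Nat.choose_one_right] at h1
  -- structure of a 2A edge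
  have hstruct : ∀ e ∈ H, (e ∩ A).card = 2 → ∃ a b w : Fin n,
      a ∈ A ∧ b ∈ A ∧ a ≠ b ∧ w ∈ B ∧ e = {a, b, w} ∧ e ∩ A = {a, b} ∧
      B ∩ e = {w} := by
    intro e he he2
    obtain ⟨a, b, hab, hiab⟩ := Finset.card_eq_two.1 he2
    have haA : a ∈ A := by
      have h : a ∈ e ∩ A := hiab ▸ (by simp : a ∈ ({a, b} : Finset (Fin n)))
      exact (Finset.mem_inter.1 h).2
    have hbA : b ∈ A := by
      have h : b ∈ e ∩ A := hiab ▸ (by simp : b ∈ ({a, b} : Finset (Fin n)))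
      exact (Finset.mem_inter.1 h).2
    have hae : a ∈ e := by
      have h : a ∈ e ∩ A := hiab ▸ (by simp : a ∈ ({a, b} : Finset (Fin n)))
      exact (Finset.mem_inter.1 h).1
    have hbe : b ∈ e := by
      have h : b ∈ e ∩ A := hiab ▸ (by simp : b ∈ ({a, b} : Finset (Fin n)))
      exact (Finset.mem_inter.1 h).1
    have hsd : (e \ A).card = 1 := by
      have h1 := Finset.card_inter_add_card_sdiff e A
      rw [hU e he, he2] at h1
      omega
    obtain ⟨w, hw⟩ := Finset.card_eq_one.1 hsd
    have hwe : w ∈ e := by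
      have h : w ∈ e \ A := hw ▸ Finset.mem_singleton_self w
      exact (Finset.mem_sdiff.1 h).1
    have hwA : w ∉ A := by
      have h : w ∈ e \ A := hw ▸ Finset.mem_singleton_self w
      exact (Finset.mem_sdiff.1 h).2
    have hwB : w ∈ B := by rw [hBdef, Finset.mem_sdiff]; exact ⟨Finset.mem_univ _, hwA⟩
    refine ⟨a, b, w, haA, hbA, hab, hwB, ?_, hiab, ?_⟩
    · apply Finset.Subset.antisymm
      · intro t ht
        rw [Finset.mem_insert, Finset.mem_insert, Finset.mem_singleton]
        by_cases htA : t ∈ A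
        · have h : t ∈ e ∩ A := Finset.mem_inter.2 ⟨ht, htA⟩
          rw [hiab, Finset.mem_insert, Finset.mem_singleton] at h
          rcases h with h | h
          · exact Or.inl h
          · exact Or.inr (Or.inl h)
        · have h : t ∈ e \ A := Finset.mem_sdiff.2 ⟨ht, htA⟩
          rw [hw, Finset.mem_singleton] at h
          exact Or.inr (Or.inr h)
      · intro t ht
        rw [Finset.mem_insert, Finset.mem_insert, Finset.mem_singleton] at ht
        rcases ht with rfl | rfl | rfl
        · exact hae
        · exact hbe
        · exact hwe
    · rw [← hw, hBdef]
      ext t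
      rw [Finset.mem_inter, Finset.mem_sdiff, Finset.mem_sdiff]
      constructor
      · rintro ⟨⟨_, h1⟩, h2⟩; exact ⟨h2, h1⟩
      · rintro ⟨h1, h2⟩; exact ⟨⟨Finset.mem_univ _, h2⟩, h1⟩
  -- global double count kills 2A edges
  have hc2z : c2 = 0 := by
    by_contra hc2ne
    have hc2pos : 0 < c2 := Nat.pos_of_ne_zero hc2ne
    set E2 : Finset (Finset (Fin n)) := H.filter (fun e => (e ∩ A).card = 2) with hE2def
    have hE2card : E2.card = c2 := by rw [hE2def, hc2def]
    have hinner : ∀ e ∈ E2, 2 * ((n - s - 1) - σ) ≤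
        ∑ c ∈ A, ∑ w' ∈ B, (if c ∈ e ∧ w' ∈ e then m c w' else 0) := by
      intro e he
      rw [hE2def, Finset.mem_filter] at he
      obtain ⟨a, b, w, haA, hbA, hab, hwB, heabw, hiab, hBw⟩ := hstruct e he.1 he.2
      have hstep : ∀ c : Fin n, (∑ w' ∈ B, if c ∈ e ∧ w' ∈ e then m c w' else 0)
          = if c ∈ e then (∑ w' ∈ B.filter (· ∈ e), m c w') else 0 := by
        intro c
        by_cases hce : c ∈ e
        · simp only [hce, true_and, if_true]
          rw [Finset.sum_filter]
        · simp only [hce, false_and, if_false, Finset.sum_const_zero]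
      have htot : (∑ c ∈ A, ∑ w' ∈ B, if c ∈ e ∧ w' ∈ e then m c w' else 0)
          = ∑ c ∈ A.filter (· ∈ e), ∑ w' ∈ B.filter (· ∈ e), m c w' := by
        rw [Finset.sum_congr rfl (fun c _ => hstep c), ← Finset.sum_filter]
      have hAe : A.filter (· ∈ e) = {a, b} := by
        rw [Finset.filter_mem_eq_inter, Finset.inter_comm, hiab]
      have hBe : B.filter (· ∈ e) = {w} := by
        rw [Finset.filter_mem_eq_inter, hBw]
      rw [htot, hAe, hBe]
      rw [Finset.sum_pair hab, Finset.sum_singleton, Finset.sum_singleton]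
      have hb1 : (n - s - 1) - σ ≤ m b w := hfree2 e he.1 a b w haA hbA hab hwB heabw
      have hb2 : (n - s - 1) - σ ≤ m a w := by
        apply hfree2 e he.1 b a w hbA haA (Ne.symm hab) hwB
        rw [heabw]
        ext t
        simp only [Finset.mem_insert, Finset.mem_singleton]
        constructor <;> intro h <;> rcases h with h | h | h
        · exact Or.inr (Or.inl h)
        · exact Or.inl h
        · exact Or.inr (Or.inr h)
        · exact Or.inr (Or.inl h)
        · exact Or.inl h
        · exact Or.inr (Or.inr h)
      omega
    have hlow : c2 * (2 * ((n - s - 1) - σ)) ≤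
        ∑ e ∈ E2, ∑ c ∈ A, ∑ w' ∈ B, (if c ∈ e ∧ w' ∈ e then m c w' else 0) := by
      calc c2 * (2 * ((n - s - 1) - σ))
          = ∑ _e ∈ E2, 2 * ((n - s - 1) - σ) := by
            rw [Finset.sum_const, smul_eq_mul, hE2card]
        _ ≤ _ := Finset.sum_le_sum hinner
    have hswap : (∑ e ∈ E2, ∑ c ∈ A, ∑ w' ∈ B, (if c ∈ e ∧ w' ∈ e then m c w' else 0))
        = ∑ c ∈ A, ∑ w' ∈ B, (m c w') * (E2.filter (fun e => c ∈ e ∧ w' ∈ e)).card := by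
      rw [Finset.sum_comm]
      apply Finset.sum_congr rfl
      intro c _
      rw [Finset.sum_comm]
      apply Finset.sum_congr rfl
      intro w' _
      rw [← Finset.sum_filter, Finset.sum_const, smul_eq_mul, mul_comm]
    have hup : (∑ c ∈ A, ∑ w' ∈ B, (m c w') * (E2.filter (fun e => c ∈ e ∧ w' ∈ e)).card)
        ≤ (2 * c2) * (s - 1) := by
      calc (∑ c ∈ A, ∑ w' ∈ B, (m c w') * (E2.filter (fun e => c ∈ e ∧ w' ∈ e)).card)
          ≤ ∑ c ∈ A, ∑ w' ∈ B, (m c w') * (s - 1) := by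
            apply Finset.sum_le_sum
            intro c hc
            apply Finset.sum_le_sum
            intro w' hw'
            exact Nat.mul_le_mul_left _ (hdeg2 c hc w' hw')
        _ = ∑ c ∈ A, (∑ w' ∈ B, m c w') * (s - 1) := by
            apply Finset.sum_congr rfl
            intro c _
            rw [Finset.sum_mul]
        _ ≤ ∑ c ∈ A, (2 * μ c) * (s - 1) := by
            apply Finset.sum_le_sum
            intro c hc
            exact Nat.mul_le_mul_right _ (halpha c hc)
        _ = (∑ c ∈ A, 2 * μ c) * (s - 1) := (Finset.sum_mul _ _ _).symm
        _ = (2 * ∑ c ∈ A, μ c) * (s - 1) := by rw [Finset.mul_sum]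
        _ ≤ (2 * c2) * (s - 1) := Nat.mul_le_mul_right _ (by omega)
    have hchain : c2 * (2 * ((n - s - 1) - σ)) ≤ c2 * (2 * (s - 1)) := by
      calc c2 * (2 * ((n - s - 1) - σ)) ≤ _ := hlow
        _ = _ := hswap
        _ ≤ (2 * c2) * (s - 1) := hup
        _ = c2 * (2 * (s - 1)) := by ring
    have hdiv : 2 * ((n - s - 1) - σ) ≤ 2 * (s - 1) :=
      Nat.le_of_mul_le_mul_left hchain hc2pos
    have hsqrt : n - 2*s - 1 ≤ Nat.sqrt (2 * c2) := by omega
    have hsq : (n - 2*s - 1) * (n - 2*s - 1) ≤ 2 * c2 := Nat.le_sqrt.1 hsqrt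
    have h2c2 : 2 * c2 ≤ s * (s - 1) * (n - s) := by
      calc 2 * c2 ≤ 2 * (s.choose 2 * (n - s)) := by omega
        _ = (2 * s.choose 2) * (n - s) := by ring
        _ = s * (s - 1) * (n - s) := by rw [h2s]
    exact nat_2A n s hs2 hn (le_trans hsq h2c2)
  -- final conclusion
  intro e he
  have hle : (e ∩ A).card ≤ 3 := by
    have h := Finset.card_le_card (Finset.inter_subset_left (s₁ := e) (s₂ := A))
    rw [hU e he] at h
    exact h
  have hne0 : (e ∩ A).card ≠ 0 := hc0 e he
  have hne2 : (e ∩ A).card ≠ 2 := by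
    intro h2
    have h : e ∈ H.filter (fun e => (e ∩ A).card = 2) := Finset.mem_filter.2 ⟨he, h2⟩
    rw [Finset.card_eq_zero.1 hc2z] at h
    exact absurd h (Finset.notMem_empty e)
  have hne3 : (e ∩ A).card ≠ 3 := fun h3 => h3A e he h3
  omega

theorem stmt_18 {n s : ℕ} (hn : 12 * s ^ 2 ≤ n) (H : Finset (Finset (Fin n)))
    (hU : Uniform3 H) (hfree : ¬ HasCopy F32Edges H) (hM : MatchingAtMost H s)
    (hcard : s * (n - s).choose 2 ≤ H.card) :
    (Finset.univ.filter (fun v => 3 * s * n + 1 ≤ degH H v)).card = s ∧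
    (∀ e ∈ H, ¬ e ⊆ Finset.univ.filter (fun v => 3 * s * n + 1 ≤ degH H v)) ∧
    (∀ e ∈ H, ¬ e ⊆ Finset.univ \ Finset.univ.filter (fun v => 3 * s * n + 1 ≤ degH H v)) ∧
    (∀ e ∈ H, (e.filter (fun v => 3 * s * n + 1 ≤ degH H v)).card = 1) := by
  set A : Finset (Fin n) := Finset.univ.filter (fun v => 3 * s * n + 1 ≤ degH H v) with hAdef
  -- trivial case s = 0
  rcases Nat.eq_zero_or_pos s with rfl | hs1
  · have hHempty : H = ∅ := by
      rw [Finset.eq_empty_iff_forall_notMem]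
      intro e he
      have h1 := hM {e} (Finset.singleton_subset_iff.2 he) (by
        rw [Finset.coe_singleton]; exact Set.pairwise_singleton _ _)
      simp at h1
    subst hHempty
    refine ⟨?_, by simp, by simp, by simp⟩
    have : A = ∅ := by
      rw [hAdef, Finset.eq_empty_iff_forall_notMem]
      intro v hv
      rw [Finset.mem_filter] at hv
      have : degH (∅ : Finset (Finset (Fin n))) v = 0 := by
        unfold degH; simp
      omega
    rw [this]; simp
  -- now s ≥ 1
  have hn12 : 12 ≤ n := by nlinarith
  have hAdeg : ∀ a ∈ A, 3*s*n+1 ≤ degH H a := by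
    intro a ha
    rw [hAdef, Finset.mem_filter] at ha
    exact ha.2
  have hnotAdeg : ∀ v, v ∉ A → degH H v ≤ 3*s*n := by
    intro v hv
    rw [hAdef, Finset.mem_filter] at hv
    push_neg at hv
    have := hv (Finset.mem_univ v)
    omega
  have hMviol : ∀ M : Finset (Finset (Fin n)), M ⊆ H →
      (∀ e ∈ M, ∀ f ∈ M, e ≠ f → Disjoint e f) → M.card ≤ s := by
    intro M hsub hpair
    exact hM M hsub (fun e he f hf hef => hpair e he f hf hef)
  -- t ≤ s
  have hts : A.card ≤ s := by
    by_contra hcon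
    push_neg at hcon
    obtain ⟨A', hA'sub, hA'card⟩ := Finset.exists_subset_card_eq hcon
    obtain ⟨M, hMH, hMcard, _, hMpair⟩ := greedy hU s (s+1) A' ∅ hA'card
      (fun a ha => hAdeg a (hA'sub ha)) (Finset.disjoint_empty_right _) (by simp only [hA'card, Finset.card_empty]; omega)
    have := hMviol M hMH hMpair
    omega
  set t := A.card with htdef
  -- maximal matching among A-avoiding edges
  set H₀ : Finset (Finset (Fin n)) := H.filter (fun e => (e ∩ A).card = 0) with hH₀def
  have hH₀sub : H₀ ⊆ H := Finset.filter_subset _ _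
  have hH₀A : ∀ e ∈ H₀, ∀ v ∈ e, v ∉ A := by
    intro e he v hv hvA
    rw [hH₀def, Finset.mem_filter] at he
    have : v ∈ e ∩ A := Finset.mem_inter.2 ⟨hv, hvA⟩
    rw [Finset.card_eq_zero.1 he.2] at this
    exact absurd this (Finset.notMem_empty v)
  set 𝓜 : Finset (Finset (Finset (Fin n))) :=
    (H₀.powerset).filter (fun M => ∀ e ∈ M, ∀ f ∈ M, e ≠ f → Disjoint e f) with h𝓜def
  have h𝓜ne : 𝓜.Nonempty := ⟨∅, by
    rw [h𝓜def, Finset.mem_filter]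
    exact ⟨Finset.empty_mem_powerset _, by simp⟩⟩
  obtain ⟨MB, hMB𝓜, hMBmax⟩ := Finset.exists_max_image 𝓜 Finset.card h𝓜ne
  have hMBsub : MB ⊆ H₀ := by
    rw [h𝓜def, Finset.mem_filter, Finset.mem_powerset] at hMB𝓜
    exact hMB𝓜.1
  have hMBpair : ∀ e ∈ MB, ∀ f ∈ MB, e ≠ f → Disjoint e f := by
    rw [h𝓜def, Finset.mem_filter] at hMB𝓜
    exact hMB𝓜.2
  set V : Finset (Fin n) := MB.biUnion id with hVdef
  have hVA : ∀ v ∈ V, v ∉ A := by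
    intro v hv
    rw [hVdef, Finset.mem_biUnion] at hv
    obtain ⟨e, he, hve⟩ := hv
    exact hH₀A e (hMBsub he) v hve
  have hVcard : V.card ≤ 3 * MB.card := by
    calc V.card ≤ ∑ e ∈ MB, (id e).card := Finset.card_biUnion_le
      _ = ∑ e ∈ MB, 3 := Finset.sum_congr rfl (fun e he => hU e (hH₀sub (hMBsub he)))
      _ = 3 * MB.card := by rw [Finset.sum_const, smul_eq_mul, mul_comm]
  have hcover : ∀ e ∈ H₀, ∃ v ∈ V, v ∈ e := by
    intro e he
    by_contra hcon
    push_neg at hcon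
    have hdisjV : Disjoint e V := by
      rw [Finset.disjoint_right]
      intro v hv hve
      exact hcon v hv hve
    have heMB : e ∉ MB := by
      intro hmem
      have : e ⊆ V := by
        rw [hVdef]
        exact Finset.subset_biUnion_of_mem id hmem
      have h0 : e = ∅ := by
        have := Finset.disjoint_of_subset_right this hdisjV
        rwa [disjoint_self, Finset.bot_eq_empty] at this
      have := hU e (hH₀sub he)
      rw [h0] at this
      simp at this
    have hins : insert e MB ∈ 𝓜 := by
      rw [h𝓜def, Finset.mem_filter, Finset.mem_powerset]
      constructor
      · intro f hf
        rcases Finset.mem_insert.1 hf with rfl | hf2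
        · exact he
        · exact hMBsub hf2
      · intro f hf g hg hfg
        rcases Finset.mem_insert.1 hf with rfl | hf2 <;>
          rcases Finset.mem_insert.1 hg with rfl | hg2
        · exact absurd rfl hfg
        · exact Finset.disjoint_of_subset_right (Finset.subset_biUnion_of_mem id hg2) hdisjV
        · exact (Finset.disjoint_of_subset_right (Finset.subset_biUnion_of_mem id hf2)
            hdisjV).symm
        · exact hMBpair f hf2 g hg2 hfg
    have := hMBmax _ hins
    rw [Finset.card_insert_of_notMem heMB] at this
    omega
  have hMBcard : MB.card ≤ s - t := by
    by_contra hcon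
    push_neg at hcon
    obtain ⟨M', hM'sub, hM'card⟩ := Finset.exists_subset_card_eq hcon
    set V' : Finset (Fin n) := M'.biUnion id with hV'def
    have hV'card : V'.card ≤ 3 * (s - t + 1) := by
      calc V'.card ≤ ∑ e ∈ M', (id e).card := Finset.card_biUnion_le
        _ = ∑ e ∈ M', 3 := Finset.sum_congr rfl
            (fun e he => hU e (hH₀sub (hMBsub (hM'sub he))))
        _ = 3 * (s - t + 1) := by rw [Finset.sum_const, smul_eq_mul, mul_comm, hM'card]
    have hAV' : Disjoint A V' := by
      rw [Finset.disjoint_right]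
      intro v hv
      rw [hV'def, Finset.mem_biUnion] at hv
      obtain ⟨e, he, hve⟩ := hv
      exact hH₀A e (hMBsub (hM'sub he)) v hve
    obtain ⟨M, hMH, hMcard, hMF, hMpair⟩ := greedy hU s t A V' rfl hAdeg hAV' (by omega)
    have hcross : ∀ e ∈ M, ∀ f ∈ M', Disjoint e f := by
      intro e he f hf
      exact Finset.disjoint_of_subset_right (Finset.subset_biUnion_of_mem id hf) (hMF e he)
    have hMM' : Disjoint M M' := by
      rw [Finset.disjoint_left]
      intro e heM heM'
      have h0 : e = ∅ := by
        have := hcross e heM e heM'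
        rwa [disjoint_self, Finset.bot_eq_empty] at this
      have := hU e (hH₀sub (hMBsub (hM'sub heM')))
      rw [h0] at this
      simp at this
    have hunion : M ∪ M' ⊆ H := by
      intro e he
      rcases Finset.mem_union.1 he with h | h
      · exact hMH h
      · exact hH₀sub (hMBsub (hM'sub h))
    have hupair : ∀ e ∈ M ∪ M', ∀ f ∈ M ∪ M', e ≠ f → Disjoint e f := by
      intro e he f hf hef
      rcases Finset.mem_union.1 he with h1 | h1 <;> rcases Finset.mem_union.1 hf with h2 | h2
      · exact hMpair e h1 f h2 hef
      · exact hcross e h1 f h2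
      · exact (hcross f h2 e h1).symm
      · exact hMBpair e (hM'sub h1) f (hM'sub h2) hef
    have hucard : (M ∪ M').card = s + 1 := by
      rw [Finset.card_union_of_disjoint hMM', hMcard, hM'card]
      omega
    have := hMviol (M ∪ M') hunion hupair
    omega
  have hc0bound : H₀.card ≤ 9 * (s - t) * s * n := by
    calc H₀.card ≤ ∑ v ∈ V, degH H v := cover_card_le H₀ V hH₀sub hcover
      _ ≤ ∑ _v ∈ V, 3*s*n := Finset.sum_le_sum (fun v hv => hnotAdeg v (hVA v hv))
      _ = V.card * (3*s*n) := by rw [Finset.sum_const, smul_eq_mul]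
      _ ≤ (3 * (s - t)) * (3*s*n) := by
          apply Nat.mul_le_mul_right
          omega
      _ = 9 * (s - t) * s * n := by ring
  -- t = s
  have htseq : t = s := by
    by_contra hne
    have hlt : t < s := lt_of_le_of_ne hts hne
    rcases Nat.lt_or_ge s 2 with hs2 | hs2
    · -- s = 1, t = 0
      have hseq : s = 1 := by omega
      have hteq : t = 0 := by omega
      have hAempty : A = ∅ := Finset.card_eq_zero.1 hteq
      apply s_one_case hU hn12
      · intro e he f hf hef hdisj
        have h2 : ({e, f} : Finset (Finset (Fin n))).card = 2 := by
          rw [Finset.card_insert_of_notMem (by simp [hef]), Finset.card_singleton]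
        have := hMviol {e, f} (by
          intro g hg
          rcases Finset.mem_insert.1 hg with rfl | hg2
          · exact he
          · rw [Finset.mem_singleton.1 hg2]; exact hf)
          (by
            intro g hg g' hg' hgg'
            rcases Finset.mem_insert.1 hg with rfl | hg2 <;>
              rcases Finset.mem_insert.1 hg' with rfl | hg2'
            · exact absurd rfl hgg'
            · rw [Finset.mem_singleton.1 hg2']; exact hdisj
            · rw [Finset.mem_singleton.1 hg2]; exact hdisj.symm
            · rw [Finset.mem_singleton.1 hg2, Finset.mem_singleton.1 hg2'] at hgg' ⊢
              exact absurd rfl hgg')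
        omega
      · intro v
        have hv : v ∉ A := by rw [hAempty]; exact Finset.notMem_empty v
        have h := hnotAdeg v hv
        rw [hseq] at h
        omega
      · have : n - s = n - 1 := by omega
        rw [← this]
        calc (n-s).choose 2 = 1 * (n-s).choose 2 := (one_mul _).symm
          _ = s * (n-s).choose 2 := by rw [hseq]
          _ ≤ H.card := hcard
    · -- s ≥ 2 : counting contradiction
      have hb1 : (H.filter fun e => (e ∩ A).card = 1).card ≤ t * (n-t).choose 2 := by
        have := class_card_le hU A 1 2 (by norm_num)
        rwa [Nat.choose_one_right, card_B] at this
      have hb2 : (H.filter fun e => (e ∩ A).card = 2).card ≤ t.choose 2 * (n-t) := by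
        have := class_card_le hU A 2 1 (by norm_num)
        rwa [Nat.choose_one_right, card_B] at this
      have hb3 : (H.filter fun e => (e ∩ A).card = 3).card ≤ t.choose 2 * t := by
        have h1 := class_card_le hU A 3 0 (by norm_num)
        rw [Nat.choose_zero_right, mul_one] at h1
        exact le_trans h1 (choose3_le t)
      have hpart := class_partition hU A
      rw [Finset.sum_range_succ, Finset.sum_range_succ, Finset.sum_range_succ,
        Finset.sum_range_one] at hpart
      have hmain := nat_main n s t hs2 hlt hn
      have hfin : s * (n-s).choose 2 < s * (n-s).choose 2 := by
        calc s * (n-s).choose 2 ≤ H.card := hcard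
          _ ≤ 9*(s-t)*s*n + t * (n-t).choose 2 + t.choose 2 * (n-t) + t.choose 2 * t := by
              rw [hpart]
              have h0 := hc0bound
              have hj : (H.filter (fun e => (e ∩ A).card = 0)).card = H₀.card := by
                rw [hH₀def]
              omega
          _ < s * (n-s).choose 2 := hmain
      exact absurd hfin (lt_irrefl _)
  -- now t = s; conclude
  have hc0z : ∀ e ∈ H, (e ∩ A).card ≠ 0 := by
    intro e he h0
    have hmem : e ∈ H₀ := by
      rw [hH₀def, Finset.mem_filter]
      exact ⟨he, h0⟩
    have h := hc0bound
    rw [htseq, Nat.sub_self] at h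
    simp only [mul_zero, zero_mul, Nat.mul_zero, Nat.zero_mul] at h
    have hemp : H₀ = ∅ := Finset.card_eq_zero.1 (Nat.le_zero.1 h)
    rw [hemp] at hmem
    exact absurd hmem (Finset.notMem_empty e)
  have hone : ∀ e ∈ H, (e ∩ A).card = 1 := by
    rcases Nat.lt_or_ge s 2 with hs2 | hs2
    · -- s = 1
      intro e he
      have h1 : (e ∩ A).card ≤ A.card := Finset.card_le_card Finset.inter_subset_right
      have h3 : A.card = s := htseq
      have h4 := hc0z e he
      omega
    · exact no_multi hU hfree A htseq hs2 hn hcard hc0z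
  refine ⟨htseq, ?_, ?_, ?_⟩
  · intro e he hsub
    have : e ∩ A = e := Finset.inter_eq_left.2 hsub
    have h1 := hone e he
    rw [this, hU e he] at h1
    omega
  · intro e he hsub
    have : e ∩ A = ∅ := by
      rw [Finset.eq_empty_iff_forall_notMem]
      intro v hv
      rw [Finset.mem_inter] at hv
      have := hsub hv.1
      rw [Finset.mem_sdiff] at this
      exact this.2 hv.2
    have h1 := hone e he
    rw [this] at h1
    simp at h1
  · intro e he
    have heq : e.filter (fun v => 3 * s * n + 1 ≤ degH H v) = e ∩ A := by
      rw [hAdef]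
      ext x
      simp only [Finset.mem_filter, Finset.mem_inter, Finset.mem_univ, true_and]
    rw [heq]
    exact hone e he

end auxiliary
end
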